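/- arXiv:2506.23870 — 6 statements merged into one kernel-verified Lean document; each statement's English description precedes it below -/
import Mathlib

section
/- Representer theorem for the penalised partial-likelihood estimator: the map β ↦ ℓ_{n,γ}(f_β) is strongly convex on ℝ^{𝒜_n}; writing β̂ for its unique minimiser, the function f̂_{n,γ} := f_{β̂} is the unique minimiser of f ↦ ℓ_{n,γ}(f) over f ∈ 𝓗. -/
open MeasureTheory

/-- A kernel on `X`: a symmetric function that is positive semi-definite on finite point sets. -/
def IsKernel {X : Type*} (k : X → X → ℝ) : Prop :=
  (∀ x y, k x y = k y x) ∧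
  ∀ (n : ℕ) (x : Fin n → X) (c : Fin n → ℝ),
    0 ≤ ∑ i : Fin n, ∑ j : Fin n, c i * c j * k (x i) (x j)

/-- An abstract axiomatisation of the (unique) reproducing kernel Hilbert space of a
kernel `k`: a complete inner-product space of real-valued functions on `X` containing the
kernel sections and satisfying the reproducing property. -/
structure AbstractRKHS (X : Type*) (k : X → X → ℝ) where
  carrier : Set (X → ℝ)
  inn : (X → ℝ) → (X → ℝ) → ℝ
  zero_mem : (fun _ => (0 : ℝ)) ∈ carrier
  add_mem : ∀ f ∈ carrier, ∀ g ∈ carrier, (fun x => f x + g x) ∈ carrier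
  smul_mem : ∀ (c : ℝ), ∀ f ∈ carrier, (fun x => c * f x) ∈ carrier
  inn_symm : ∀ f g, inn f g = inn g f
  inn_add_left : ∀ f g h, inn (fun x => f x + g x) h = inn f h + inn g h
  inn_smul_left : ∀ (c : ℝ) (f g), inn (fun x => c * f x) g = c * inn f g
  inn_nonneg : ∀ f ∈ carrier, 0 ≤ inn f f
  inn_definite : ∀ f ∈ carrier, inn f f = 0 → f = fun _ => 0
  kernel_mem : ∀ x, (fun y => k y x) ∈ carrier
  reproducing : ∀ f ∈ carrier, ∀ x, inn f (fun y => k y x) = f x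
  complete : ∀ f : ℕ → X → ℝ, (∀ m, f m ∈ carrier) →
    (∀ ε : ℝ, 0 < ε → ∃ N : ℕ, ∀ m ≥ N, ∀ l ≥ N,
      inn (fun x => f m x - f l x) (fun x => f m x - f l x) < ε) →
    ∃ g ∈ carrier, ∀ ε : ℝ, 0 < ε → ∃ N : ℕ, ∀ m ≥ N,
      inn (fun x => f m x - g x) (fun x => f m x - g x) < ε

/-- `S_n(f,t) = n^{-1} Σ_i R_i(t) e^{f(X_i)}` with `R_i(t) = 1{T_i ≥ t}`. -/
noncomputable def empSn {𝒳 : Type*} (n : ℕ) (X : Fin n → 𝒳) (T : Fin n → ℝ)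
    (f : 𝒳 → ℝ) (t : ℝ) : ℝ :=
  (1 / (n : ℝ)) * ∑ i : Fin n, (if t ≤ T i then (1 : ℝ) else 0) * Real.exp (f (X i))

/-- The empirical negative log-partial likelihood
`ℓ_n(f) = ∫_0^1 log S_n(f,t) dN(t) − n^{-1} Σ_i f(X_i) N_i(1)
        = n^{-1} Σ_i N_i(1)(log S_n(f,T_i) − f(X_i))`, `N_i(1) = 1{T_i ≤ 1, I_i = 0}`. -/
noncomputable def empLn {𝒳 : Type*} (n : ℕ) (X : Fin n → 𝒳) (T : Fin n → ℝ)
    (I : Fin n → Bool) (f : 𝒳 → ℝ) : ℝ :=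
  (1 / (n : ℝ)) * ∑ i : Fin n,
    (if T i ≤ 1 ∧ I i = false then (1 : ℝ) else 0) *
      (Real.log (empSn n X T f (T i)) - f (X i))

/-- `P_n(f) = n^{-1} Σ_i f(X_i)`. -/
noncomputable def empPn {𝒳 : Type*} (n : ℕ) (X : Fin n → 𝒳) (f : 𝒳 → ℝ) : ℝ :=
  (1 / (n : ℝ)) * ∑ i : Fin n, f (X i)

/-- `ℓ_{n,γ}(f) = ℓ_n(f) + γ‖f − P_n(f)1_𝒳‖²_𝓗 + γP_n(f)²`. -/
noncomputable def empLnGamma {𝒳 : Type*} {k : 𝒳 → 𝒳 → ℝ} (H : AbstractRKHS 𝒳 k)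
    (n : ℕ) (X : Fin n → 𝒳) (T : Fin n → ℝ) (I : Fin n → Bool)
    (γ : ℝ) (f : 𝒳 → ℝ) : ℝ :=
  empLn n X T I f +
    γ * H.inn (fun x => f x - empPn n X f) (fun x => f x - empPn n X f) +
    γ * (empPn n X f) ^ 2

/-- The family of vectors `(‖1_𝒳‖²_𝓗, 1, …, 1)` (for `none`) and
`(1, k(X_i,X_1), …, k(X_i,X_n))` for `i ∈ A` (for `some i`) in `ℝ^{n+1}`. -/
noncomputable def kernelRows {𝒳 : Type*} (k : 𝒳 → 𝒳 → ℝ) (c : ℝ) (n : ℕ)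
    (X : Fin n → 𝒳) (A : Finset (Fin n)) : Option ↥A → (Fin (n + 1) → ℝ) :=
  fun o => Option.elim o (Fin.cons c fun _ : Fin n => (1 : ℝ))
    (fun i => Fin.cons (1 : ℝ) (fun j : Fin n => k (X i.1) (X j)))

namespace RepAux

section Toolkit
variable {𝒳 : Type*} {k : 𝒳 → 𝒳 → ℝ} (H : AbstractRKHS 𝒳 k)

theorem mem_of_eq {f g : 𝒳 → ℝ} (h : f = g) (hg : g ∈ H.carrier) : f ∈ H.carrier := h ▸ hg

theorem inn_zero_left (g : 𝒳 → ℝ) : H.inn (fun _ => (0:ℝ)) g = 0 := by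
  have h := H.inn_smul_left 0 (fun _ => (0:ℝ)) g
  simpa using h

theorem inn_zero_right (f : 𝒳 → ℝ) : H.inn f (fun _ => (0:ℝ)) = 0 := by
  rw [H.inn_symm]; exact inn_zero_left H f

theorem inn_sum_left {ι : Type*} (s : Finset ι) (v : ι → 𝒳 → ℝ) (g : 𝒳 → ℝ) :
    H.inn (fun x => ∑ i ∈ s, v i x) g = ∑ i ∈ s, H.inn (v i) g := by
  induction s using Finset.cons_induction with
  | empty => simpa using inn_zero_left H g
  | cons i s hi ih =>
    have e : (fun x => ∑ j ∈ Finset.cons i s hi, v j x)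
        = fun x => v i x + ∑ j ∈ s, v j x := by
      funext x; rw [Finset.sum_cons]
    rw [e, H.inn_add_left, ih, Finset.sum_cons]

theorem inn_sum_right {ι : Type*} (s : Finset ι) (v : ι → 𝒳 → ℝ) (g : 𝒳 → ℝ) :
    H.inn g (fun x => ∑ i ∈ s, v i x) = ∑ i ∈ s, H.inn g (v i) := by
  rw [H.inn_symm, inn_sum_left]
  exact Finset.sum_congr rfl fun i _ => H.inn_symm _ _

theorem inn_smul_right (c : ℝ) (f g : 𝒳 → ℝ) :
    H.inn g (fun x => c * f x) = c * H.inn g f := by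
  rw [H.inn_symm, H.inn_smul_left, H.inn_symm]

theorem sum_mem {ι : Type*} (s : Finset ι) (v : ι → 𝒳 → ℝ) (hv : ∀ i ∈ s, v i ∈ H.carrier) :
    (fun x => ∑ i ∈ s, v i x) ∈ H.carrier := by
  induction s using Finset.cons_induction with
  | empty => simpa using H.zero_mem
  | cons i s hi ih =>
    have e : (fun x => ∑ j ∈ Finset.cons i s hi, v j x)
        = fun x => v i x + ∑ j ∈ s, v j x := by
      funext x; rw [Finset.sum_cons]
    rw [e]
    exact H.add_mem _ (hv i (Finset.mem_cons_self i s)) _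
      (ih fun j hj => hv j (Finset.mem_cons_of_mem hj))

theorem sub_mem {f g : 𝒳 → ℝ} (hf : f ∈ H.carrier) (hg : g ∈ H.carrier) :
    (fun x => f x - g x) ∈ H.carrier := by
  have e : (fun x => f x - g x) = fun x => f x + (-1) * g x := by funext x; ring
  rw [e]; exact H.add_mem _ hf _ (H.smul_mem (-1) g hg)

theorem inn_sub_left (f g h : 𝒳 → ℝ) :
    H.inn (fun x => f x - g x) h = H.inn f h - H.inn g h := by
  have e : (fun x => f x - g x) = fun x => f x + (-1) * g x := by funext x; ring
  rw [e, H.inn_add_left, H.inn_smul_left]; ring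

theorem inn_sub_right (f g h : 𝒳 → ℝ) :
    H.inn h (fun x => f x - g x) = H.inn h f - H.inn h g := by
  rw [H.inn_symm, inn_sub_left, H.inn_symm f h, H.inn_symm g h]

theorem const_mem (hone : (fun _ => (1:ℝ)) ∈ H.carrier) (c : ℝ) :
    (fun _ : 𝒳 => c) ∈ H.carrier := by
  have h := H.smul_mem c _ hone
  simpa using h


end Toolkit

section Emp
variable {𝒳 : Type*} (n : ℕ) (X : Fin n → 𝒳) (T : Fin n → ℝ) (I : Fin n → Bool)

theorem empSn_nonneg_terms (f : 𝒳 → ℝ) (t : ℝ) (j : Fin n) :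
    0 ≤ (if t ≤ T j then (1:ℝ) else 0) * Real.exp (f (X j)) := by
  positivity

theorem empSn_pos (hn : 1 ≤ n) (f : 𝒳 → ℝ) (i : Fin n) :
    0 < empSn n X T f (T i) := by
  have hn' : (0:ℝ) < (n:ℝ) := by exact_mod_cast Nat.pos_of_ne_zero (by omega)
  unfold empSn
  apply mul_pos (by positivity)
  apply Finset.sum_pos' (fun j _ => empSn_nonneg_terms n X T f (T i) j)
  refine ⟨i, Finset.mem_univ i, ?_⟩
  rw [if_pos le_rfl]
  positivity

theorem empSn_congr {f g : 𝒳 → ℝ} (hfg : ∀ j, f (X j) = g (X j)) (t : ℝ) :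
    empSn n X T f t = empSn n X T g t := by
  unfold empSn
  congr 1
  exact Finset.sum_congr rfl fun j _ => by rw [hfg j]

theorem empLn_congr {f g : 𝒳 → ℝ} (hfg : ∀ j, f (X j) = g (X j)) :
    empLn n X T I f = empLn n X T I g := by
  unfold empLn
  congr 1
  apply Finset.sum_congr rfl
  intro j _
  rw [hfg j, empSn_congr n X T hfg]

theorem empSn_add_const (f : 𝒳 → ℝ) (c t : ℝ) :
    empSn n X T (fun x => f x + c) t = Real.exp c * empSn n X T f t := by
  unfold empSn
  have e : ∀ j : Fin n, (if t ≤ T j then (1:ℝ) else 0) * Real.exp (f (X j) + c)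
      = Real.exp c * ((if t ≤ T j then (1:ℝ) else 0) * Real.exp (f (X j))) := by
    intro j; rw [Real.exp_add]; ring
  rw [Finset.sum_congr rfl fun j _ => e j, ← Finset.mul_sum]
  ring

theorem empLn_add_const (hn : 1 ≤ n) (f : 𝒳 → ℝ) (c : ℝ) :
    empLn n X T I (fun x => f x + c) = empLn n X T I f := by
  unfold empLn
  congr 1
  refine Finset.sum_congr rfl fun j _ => ?_
  by_cases hj : T j ≤ 1 ∧ I j = false
  · rw [if_pos hj, empSn_add_const,
      Real.log_mul (Real.exp_ne_zero c) (empSn_pos n X T hn f j).ne', Real.log_exp]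
    ring
  · rw [if_neg hj]; ring

theorem sum_exp_holder (w F G : Fin n → ℝ) (hw : ∀ j, 0 ≤ w j)
    {a b : ℝ} (ha : 0 < a) (hb : 0 < b) (hab : a + b = 1)
    (hF : 0 < ∑ j, w j * Real.exp (F j)) (hG : 0 < ∑ j, w j * Real.exp (G j)) :
    ∑ j, w j * Real.exp (a * F j + b * G j)
      ≤ (∑ j, w j * Real.exp (F j)) ^ a * (∑ j, w j * Real.exp (G j)) ^ b := by
  set Sf := ∑ j, w j * Real.exp (F j) with hSf
  set Sg := ∑ j, w j * Real.exp (G j) with hSg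
  set C := Sf ^ a * Sg ^ b with hC
  have hCpos : 0 < C := mul_pos (Real.rpow_pos_of_pos hF a) (Real.rpow_pos_of_pos hG b)
  have key : ∀ j : Fin n, w j * Real.exp (a * F j + b * G j)
      ≤ w j * ((a * (Real.exp (F j) / Sf) + b * (Real.exp (G j) / Sg)) * C) := by
    intro j
    apply mul_le_mul_of_nonneg_left _ (hw j)
    have e1 : Real.exp (a * F j + b * G j)
        = (Real.exp (F j) / Sf) ^ a * (Real.exp (G j) / Sg) ^ b * C := by
      rw [Real.div_rpow (Real.exp_pos _).le hF.le, Real.div_rpow (Real.exp_pos _).le hG.le,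
        hC]
      rw [Real.exp_add, mul_comm a (F j), mul_comm b (G j), Real.exp_mul, Real.exp_mul]
      field_simp
    rw [e1]
    apply mul_le_mul_of_nonneg_right _ hCpos.le
    exact Real.geom_mean_le_arith_mean2_weighted ha.le hb.le
      (by positivity) (by positivity) hab
  have h1 : ∑ j, w j * Real.exp (a * F j + b * G j)
      ≤ ∑ j, w j * ((a * (Real.exp (F j) / Sf) + b * (Real.exp (G j) / Sg)) * C) :=
    Finset.sum_le_sum fun j _ => key j
  have h2 : ∑ j, w j * ((a * (Real.exp (F j) / Sf) + b * (Real.exp (G j) / Sg)) * C) = C := by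
    have e : ∀ j : Fin n, w j * ((a * (Real.exp (F j) / Sf) + b * (Real.exp (G j) / Sg)) * C)
        = (C * a / Sf) * (w j * Real.exp (F j)) + (C * b / Sg) * (w j * Real.exp (G j)) := by
      intro j; field_simp
    rw [Finset.sum_congr rfl (fun j _ => e j), Finset.sum_add_distrib,
      ← Finset.mul_sum, ← Finset.mul_sum, ← hSf, ← hSg,
      div_mul_cancel₀ _ hF.ne', div_mul_cancel₀ _ hG.ne', ← mul_add, hab, mul_one]
  exact h1.trans_eq h2

theorem empSn_comb_le (hn : 1 ≤ n) (f g : 𝒳 → ℝ) {a b : ℝ} (ha : 0 < a) (hb : 0 < b)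
    (hab : a + b = 1) (i : Fin n) :
    empSn n X T (fun x => a * f x + b * g x) (T i)
      ≤ (empSn n X T f (T i)) ^ a * (empSn n X T g (T i)) ^ b := by
  have hn' : (0:ℝ) < (n : ℝ) := by exact_mod_cast Nat.pos_of_ne_zero (by omega)
  have hw0 : ∀ j : Fin n, 0 ≤ (if T i ≤ T j then (1:ℝ) else 0) := by
    intro j; split <;> norm_num
  have hSFF : 0 < ∑ j, (if T i ≤ T j then (1:ℝ) else 0) * Real.exp (f (X j)) := by
    refine Finset.sum_pos' (fun j _ => mul_nonneg (hw0 j) (Real.exp_pos _).le)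
      ⟨i, Finset.mem_univ i, ?_⟩
    rw [if_pos le_rfl]; positivity
  have hSGG : 0 < ∑ j, (if T i ≤ T j then (1:ℝ) else 0) * Real.exp (g (X j)) := by
    refine Finset.sum_pos' (fun j _ => mul_nonneg (hw0 j) (Real.exp_pos _).le)
      ⟨i, Finset.mem_univ i, ?_⟩
    rw [if_pos le_rfl]; positivity
  have hold := sum_exp_holder n (fun j => if T i ≤ T j then (1:ℝ) else 0)
    (fun j => f (X j)) (fun j => g (X j)) hw0 ha hb hab hSFF hSGG
  unfold empSn
  have e : ((1/(n:ℝ)) * ∑ j, (if T i ≤ T j then (1:ℝ) else 0) * Real.exp (f (X j))) ^ a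
      * ((1/(n:ℝ)) * ∑ j, (if T i ≤ T j then (1:ℝ) else 0) * Real.exp (g (X j))) ^ b
      = (1/(n:ℝ)) * ((∑ j, (if T i ≤ T j then (1:ℝ) else 0) * Real.exp (f (X j))) ^ a
        * (∑ j, (if T i ≤ T j then (1:ℝ) else 0) * Real.exp (g (X j))) ^ b) := by
    have h1n : ((1:ℝ)/(n:ℝ)) ^ a * ((1:ℝ)/(n:ℝ)) ^ b = (1:ℝ)/(n:ℝ) := by
      rw [← Real.rpow_add (by positivity), hab, Real.rpow_one]
    rw [Real.mul_rpow (by positivity) hSFF.le, Real.mul_rpow (by positivity) hSGG.le,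
      mul_mul_mul_comm, h1n]
  rw [e]
  exact mul_le_mul_of_nonneg_left hold (by positivity)

theorem empLn_comb (hn : 1 ≤ n) (f g : 𝒳 → ℝ) {a b : ℝ} (ha : 0 ≤ a) (hb : 0 ≤ b)
    (hab : a + b = 1) :
    empLn n X T I (fun x => a * f x + b * g x)
      ≤ a * empLn n X T I f + b * empLn n X T I g := by
  rcases ha.eq_or_lt with rfl | ha'
  · have hb1 : b = 1 := by linarith
    subst hb1
    rw [empLn_congr n X T I (g := g) (fun j => by ring)]
    ring_nf
    exact le_rfl
  rcases hb.eq_or_lt with rfl | hb'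
  · have ha1 : a = 1 := by linarith
    subst ha1
    rw [empLn_congr n X T I (g := f) (fun j => by ring)]
    ring_nf
    exact le_rfl
  have key : ∀ j : Fin n,
      (if T j ≤ 1 ∧ I j = false then (1:ℝ) else 0) *
        (Real.log (empSn n X T (fun x => a * f x + b * g x) (T j)) - (a * f (X j) + b * g (X j)))
      ≤ a * ((if T j ≤ 1 ∧ I j = false then (1:ℝ) else 0) *
          (Real.log (empSn n X T f (T j)) - f (X j)))
        + b * ((if T j ≤ 1 ∧ I j = false then (1:ℝ) else 0) *
          (Real.log (empSn n X T g (T j)) - g (X j))) := by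
    intro j
    by_cases hj : T j ≤ 1 ∧ I j = false
    · rw [if_pos hj]
      have hlog : Real.log (empSn n X T (fun x => a * f x + b * g x) (T j))
          ≤ a * Real.log (empSn n X T f (T j)) + b * Real.log (empSn n X T g (T j)) := by
        have h1 := empSn_comb_le n X T hn f g ha' hb' hab j
        have h2 := Real.log_le_log (empSn_pos n X T hn (fun x => a * f x + b * g x) j) h1
        rwa [Real.log_mul (Real.rpow_pos_of_pos (empSn_pos n X T hn f j) a).ne'
          (Real.rpow_pos_of_pos (empSn_pos n X T hn g j) b).ne',
          Real.log_rpow (empSn_pos n X T hn f j), Real.log_rpow (empSn_pos n X T hn g j)] at h2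
      nlinarith [hlog]
    · rw [if_neg hj]; simp
  have hsum := Finset.sum_le_sum (fun j (_ : j ∈ Finset.univ) => key j)
  unfold empLn
  rw [Finset.sum_add_distrib, ← Finset.mul_sum, ← Finset.mul_sum] at hsum
  have hn' : (0:ℝ) ≤ 1/(n:ℝ) := by positivity
  calc (1/(n:ℝ)) * ∑ j, (if T j ≤ 1 ∧ I j = false then (1:ℝ) else 0) *
        (Real.log (empSn n X T (fun x => a * f x + b * g x) (T j)) - (a * f (X j) + b * g (X j)))
      ≤ (1/(n:ℝ)) * (a * (∑ j, (if T j ≤ 1 ∧ I j = false then (1:ℝ) else 0) *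
          (Real.log (empSn n X T f (T j)) - f (X j)))
        + b * (∑ j, (if T j ≤ 1 ∧ I j = false then (1:ℝ) else 0) *
          (Real.log (empSn n X T g (T j)) - g (X j)))) := mul_le_mul_of_nonneg_left hsum hn'
    _ = _ := by ring

end Emp

section FB
variable {𝒳 : Type*} {k : 𝒳 → 𝒳 → ℝ}
open Matrix

noncomputable def fB (k : 𝒳 → 𝒳 → ℝ) (n : ℕ) (X : Fin n → 𝒳) (A : Finset (Fin n))
    (β : ↥A → ℝ) : 𝒳 → ℝ :=
  fun x => ∑ i : ↥A, (k x (X i.1) - (1 / (n : ℝ)) * ∑ j : Fin n, k (X j) (X i.1)) * β i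

theorem inn_const_left (H : AbstractRKHS 𝒳 k) (c : ℝ) (g : 𝒳 → ℝ) :
    H.inn (fun _ => c) g = c * H.inn (fun _ => (1:ℝ)) g := by
  have h := H.inn_smul_left c (fun _ => (1:ℝ)) g
  simpa using h

theorem inn_sec (H : AbstractRKHS 𝒳 k) (y : 𝒳) (c b : ℝ) (w : 𝒳 → ℝ) :
    H.inn (fun x => (k x y - c) * b) w
      = b * (H.inn (fun x => k x y) w - c * H.inn (fun _ => (1:ℝ)) w) := by
  have e : (fun x => (k x y - c) * b) = fun x => b * (k x y + (-c)) := by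
    funext x; ring
  rw [e]
  have h1 := H.inn_smul_left b (fun x => k x y + (-c)) w
  rw [h1]
  have h2 := H.inn_add_left (fun x => k x y) (fun _ => (-c)) w
  rw [h2, inn_const_left H (-c) w]
  ring

theorem sec_mem (H : AbstractRKHS 𝒳 k) (hone : (fun _ => (1:ℝ)) ∈ H.carrier) (y : 𝒳) (c b : ℝ) :
    (fun x => (k x y - c) * b) ∈ H.carrier := by
  have h3 := H.add_mem _ (H.kernel_mem y) _ (const_mem H hone (-c))
  have h4 := H.smul_mem b _ h3
  exact mem_of_eq H (by funext x; ring) h4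

theorem fB_mem (H : AbstractRKHS 𝒳 k) (hone : (fun _ => (1:ℝ)) ∈ H.carrier)
    (n : ℕ) (X : Fin n → 𝒳) (A : Finset (Fin n)) (β : ↥A → ℝ) :
    fB k n X A β ∈ H.carrier := by
  exact sum_mem H Finset.univ
    (fun i => fun x => (k x (X i.1) - (1 / (n : ℝ)) * ∑ j : Fin n, k (X j) (X i.1)) * β i)
    (fun i _ => sec_mem H hone _ _ _)

theorem inn_fB_left (H : AbstractRKHS 𝒳 k) (n : ℕ) (X : Fin n → 𝒳) (A : Finset (Fin n))
    (β : ↥A → ℝ) (w : 𝒳 → ℝ) :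
    H.inn (fB k n X A β) w
      = ∑ i : ↥A, β i * (H.inn (fun x => k x (X i.1)) w
          - ((1 / (n : ℝ)) * ∑ j : Fin n, k (X j) (X i.1)) * H.inn (fun _ => (1:ℝ)) w) := by
  have h := inn_sum_left H Finset.univ
    (fun i => fun x => (k x (X i.1) - (1 / (n : ℝ)) * ∑ j : Fin n, k (X j) (X i.1)) * β i) w
  rw [show fB k n X A β = (fun x => ∑ i : ↥A,
      (k x (X i.1) - (1 / (n : ℝ)) * ∑ j : Fin n, k (X j) (X i.1)) * β i) from rfl, h]
  exact Finset.sum_congr rfl fun i _ => by rw [inn_sec]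

theorem fB_comb (n : ℕ) (X : Fin n → 𝒳) (A : Finset (Fin n)) (a b : ℝ) (β γ : ↥A → ℝ) :
    fB k n X A (fun i => a * β i + b * γ i)
      = fun x => a * fB k n X A β x + b * fB k n X A γ x := by
  funext x; unfold fB
  rw [Finset.mul_sum, Finset.mul_sum, ← Finset.sum_add_distrib]
  exact Finset.sum_congr rfl fun i _ => by ring

theorem inn_one_sec (H : AbstractRKHS 𝒳 k) (hone : (fun _ => (1:ℝ)) ∈ H.carrier) (y : 𝒳) :
    H.inn (fun x => k x y) (fun _ => (1:ℝ)) = 1 := by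
  rw [H.inn_symm]
  have h := H.reproducing _ hone y
  simpa using h

theorem indep0 (H : AbstractRKHS 𝒳 k) (hone : (fun _ => (1:ℝ)) ∈ H.carrier)
    (hsymm : ∀ x y, k x y = k y x) (n : ℕ) (X : Fin n → 𝒳) (A : Finset (Fin n))
    (hAindep : LinearIndependent ℝ (kernelRows k
      (H.inn (fun _ => (1 : ℝ)) (fun _ => (1 : ℝ))) n X A))
    (β : ↥A → ℝ) (c : ℝ)
    (h : ∀ x, c + fB k n X A β x = 0) : c = 0 ∧ ∀ i, β i = 0 := by
  set κ := H.inn (fun _ => (1:ℝ)) (fun _ => (1:ℝ)) with hκ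
  set kb : Fin n → ℝ := fun m => (1 / (n : ℝ)) * ∑ j : Fin n, k (X j) (X m) with hkb
  -- the function is the zero function
  have hfn : (fun x => c + fB k n X A β x) = fun _ => (0:ℝ) := funext h
  -- inner product with the constant one function
  have hinn : H.inn (fun x => c + fB k n X A β x) (fun _ => (1:ℝ)) = 0 := by
    rw [hfn, inn_zero_left]
  have hinn2 : c * κ + ∑ i : ↥A, β i * (1 - kb i.1 * κ) = 0 := by
    have h2 := H.inn_add_left (fun _ => c) (fB k n X A β) (fun _ => (1:ℝ))
    rw [h2, inn_const_left H c _, inn_fB_left H n X A β] at hinn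
    rw [← hinn, ← hκ]
    congr 1
    refine Finset.sum_congr rfl fun i _ => ?_
    rw [inn_one_sec H hone, hkb]
  -- evaluation at the points X l
  have heval : ∀ l : Fin n, c + ∑ i : ↥A, (k (X l) (X i.1) - kb i.1) * β i = 0 := by
    intro l
    have := h (X l)
    rw [show fB k n X A β (X l) = ∑ i : ↥A, (k (X l) (X i.1) - kb i.1) * β i from rfl] at this
    exact this
  -- build the vanishing linear combination of the rows
  set Cs : ℝ := ∑ i : ↥A, β i * kb i.1 with hCs
  set g : Option ↥A → ℝ := fun o => Option.elim o (c - Cs) β with hg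
  have hcomb : ∑ o : Option ↥A, g o • kernelRows k κ n X A o = 0 := by
    funext m
    rw [Finset.sum_apply]
    refine Fin.cases ?_ ?_ m
    · have e : ∀ o : Option ↥A, (g o • kernelRows k κ n X A o) 0
          = Option.elim o ((c - Cs) * κ) (fun i => β i) := by
        intro o
        match o with
        | none => simp [kernelRows, hg]
        | some i => simp [kernelRows, hg]
      rw [Finset.sum_congr rfl fun o _ => e o, Fintype.sum_option]
      have : (∑ i : ↥A, β i) = Cs * κ - c * κ + 0 := by
        have expand : ∀ i : ↥A, β i * (1 - kb i.1 * κ) = β i - (β i * kb i.1) * κ := by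
          intro i; ring
        rw [Finset.sum_congr rfl fun i _ => expand i, Finset.sum_sub_distrib,
          ← Finset.sum_mul, ← hCs] at hinn2
        linarith [hinn2]
      simp only [Option.elim, Pi.zero_apply]
      linarith [this]
    · intro l
      have e : ∀ o : Option ↥A, (g o • kernelRows k κ n X A o) l.succ
          = Option.elim o (c - Cs) (fun i => β i * k (X i.1) (X l)) := by
        intro o
        match o with
        | none => simp [kernelRows, hg]
        | some i => simp [kernelRows, hg]
      rw [Finset.sum_congr rfl fun o _ => e o, Fintype.sum_option]
      have h3 := heval l
      have expand : ∀ i : ↥A, (k (X l) (X i.1) - kb i.1) * β i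
          = β i * k (X i.1) (X l) - β i * kb i.1 := by
        intro i; rw [hsymm (X l) (X i.1)]; ring
      rw [Finset.sum_congr rfl fun i _ => expand i, Finset.sum_sub_distrib, ← hCs] at h3
      simp only [Option.elim, Pi.zero_apply]
      linarith [h3]
  have hall := Fintype.linearIndependent_iff.mp hAindep g hcomb
  have hβ : ∀ i, β i = 0 := fun i => hall (some i)
  have hnone := hall none
  have hCs0 : Cs = 0 := by
    rw [hCs]
    exact Finset.sum_eq_zero fun i _ => by rw [hβ i]; ring
  rw [hg] at hnone
  simp only [Option.elim] at hnone
  constructor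
  · have : c - Cs = 0 := hnone
    rw [hCs0] at this; linarith
  · exact hβ

theorem sum_coe_insert {M : Type*} [AddCommMonoid M] {n : ℕ} (A : Finset (Fin n)) (j : Fin n)
    (hj : j ∉ A) (F : Fin n → M) :
    ∑ i : ↥(insert j A), F i.1 = F j + ∑ i : ↥A, F i.1 := by
  rw [Finset.sum_coe_sort (insert j A) F, Finset.sum_insert hj, Finset.sum_coe_sort A F]

theorem fun_of_vanishing (H : AbstractRKHS 𝒳 k) (hone : (fun _ => (1:ℝ)) ∈ H.carrier)
    (n : ℕ) (X : Fin n → 𝒳) (s : Finset (Fin n)) (d : ↥s → ℝ) (c : ℝ)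
    (hval : ∀ l : Fin n, c + ∑ i : ↥s, d i * k (X l) (X i.1) = 0)
    (hone0 : c * (H.inn (fun _ => (1:ℝ)) (fun _ => (1:ℝ))) + ∑ i : ↥s, d i = 0) :
    ∀ x, c + ∑ i : ↥s, d i * k x (X i.1) = 0 := by
  have hmem : (fun x => c + ∑ i : ↥s, d i * k x (X i.1)) ∈ H.carrier := by
    exact H.add_mem _ (const_mem H hone c) _
      (sum_mem H Finset.univ (fun (i : ↥s) => fun x => d i * k x (X i.1))
        (fun i _ => H.smul_mem _ _ (H.kernel_mem (X i.1))))
  have hone' : H.inn (fun x => c + ∑ i : ↥s, d i * k x (X i.1)) (fun _ => (1:ℝ)) = 0 := by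
    rw [H.inn_add_left (fun _ => c) (fun x => ∑ i : ↥s, d i * k x (X i.1)) (fun _ => (1:ℝ)),
      inn_const_left H c _,
      inn_sum_left H Finset.univ (fun (i : ↥s) => fun x => d i * k x (X i.1)) (fun _ => (1:ℝ))]
    have e : ∀ i : ↥s, H.inn (fun x => d i * k x (X i.1)) (fun _ => (1:ℝ)) = d i := by
      intro i
      rw [H.inn_smul_left (d i) (fun x => k x (X i.1)), inn_one_sec H hone, mul_one]
    rw [Finset.sum_congr rfl fun i _ => e i]
    exact hone0
  have hself : H.inn (fun x => c + ∑ i : ↥s, d i * k x (X i.1))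
      (fun x => c + ∑ i : ↥s, d i * k x (X i.1)) = 0 := by
    rw [H.inn_add_left (fun _ => c) (fun x => ∑ i : ↥s, d i * k x (X i.1)),
      inn_const_left H c _,
      inn_sum_left H Finset.univ (fun (i : ↥s) => fun x => d i * k x (X i.1))]
    have h1 : H.inn (fun _ => (1:ℝ)) (fun x => c + ∑ i : ↥s, d i * k x (X i.1)) = 0 := by
      rw [H.inn_symm]; exact hone'
    have e : ∀ i : ↥s, H.inn (fun x => d i * k x (X i.1))
        (fun x => c + ∑ i : ↥s, d i * k x (X i.1)) = 0 := by
      intro i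
      rw [H.inn_smul_left (d i) (fun x => k x (X i.1)),
        H.inn_symm (fun x => k x (X i.1)) _, H.reproducing _ hmem (X i.1)]
      have := hval i.1
      rw [this, mul_zero]
    rw [h1, Finset.sum_congr rfl fun i _ => e i, Finset.sum_const_zero]
    ring
  have hzero := H.inn_definite _ hmem hself
  intro x
  exact congrFun hzero x

theorem kernel_span (H : AbstractRKHS 𝒳 k) (hone : (fun _ => (1:ℝ)) ∈ H.carrier)
    (hsymm : ∀ x y, k x y = k y x) (n : ℕ) (X : Fin n → 𝒳) (A : Finset (Fin n))
    (hAindep : LinearIndependent ℝ (kernelRows k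
      (H.inn (fun _ => (1 : ℝ)) (fun _ => (1 : ℝ))) n X A))
    (hAmax : ∀ B : Finset (Fin n), A ⊆ B →
      LinearIndependent ℝ (kernelRows k
        (H.inn (fun _ => (1 : ℝ)) (fun _ => (1 : ℝ))) n X B) →
      B = A) (j : Fin n) :
    ∃ (a : ℝ) (b : ↥A → ℝ), ∀ x, k x (X j) = a + ∑ i : ↥A, b i * k x (X i.1) := by
  set κ := H.inn (fun _ => (1:ℝ)) (fun _ => (1:ℝ)) with hκ
  by_cases hj : j ∈ A
  · refine ⟨0, fun i => if i = ⟨j, hj⟩ then 1 else 0, fun x => ?_⟩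
    have e : ∀ i : ↥A, (if i = ⟨j, hj⟩ then (1:ℝ) else 0) * k x (X i.1)
        = if i = ⟨j, hj⟩ then k x (X j) else 0 := by
      intro i
      by_cases hij : i = ⟨j, hj⟩
      · rw [if_pos hij, if_pos hij, hij]; ring
      · rw [if_neg hij, if_neg hij]; ring
    rw [Finset.sum_congr rfl fun i _ => e i, Finset.sum_ite_eq' Finset.univ (⟨j, hj⟩ : ↥A)]
    simp
  · -- j ∉ A : use maximality
    have hjm : j ∈ insert j A := Finset.mem_insert_self j A
    have hBA : insert j A ≠ A := fun hEq => hj (hEq ▸ hjm)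
    have hnotli : ¬ LinearIndependent ℝ (kernelRows k κ n X (insert j A)) := fun hli =>
      hBA (hAmax _ (Finset.subset_insert j A) hli)
    obtain ⟨g, hg0, o₀, hgo₀⟩ := Fintype.not_linearIndependent_iff.mp hnotli
    set G : Fin n → ℝ := fun m => if hm : m ∈ insert j A then g (some ⟨m, hm⟩) else 0 with hG
    have hGval : ∀ i : ↥(insert j A), G i.1 = g (some i) := by
      intro i
      rw [hG]
      simp only [i.2, dif_pos]
    have hGj : G j = g (some ⟨j, hjm⟩) := by
      rw [hG]; simp only [hjm, dif_pos]
    -- the coefficient of the new row is nonzero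
    have hqj : g (some ⟨j, hjm⟩) ≠ 0 := by
      intro hq0
      set g' : Option ↥A → ℝ := fun o => Option.elim o (g none) (fun i => G i.1) with hg'
      have hsum_eq : ∀ m : Fin (n+1),
          (∑ o : Option ↥A, g' o • kernelRows k κ n X A o) m
            = (∑ o : Option ↥(insert j A), g o • kernelRows k κ n X (insert j A) o) m := by
        intro m
        rw [Finset.sum_apply, Finset.sum_apply, Fintype.sum_option, Fintype.sum_option]
        have e1 : ∀ i : ↥(insert j A),
            (g (some i) • kernelRows k κ n X (insert j A) (some i)) m
              = G i.1 * (Fin.cons (1:ℝ) (fun l : Fin n => k (X i.1) (X l)) : Fin (n+1) → ℝ) m := by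
          intro i
          rw [hGval i]
          rfl
        rw [Finset.sum_congr rfl fun i _ => e1 i,
          sum_coe_insert A j hj
            (fun m' => G m' * (Fin.cons (1:ℝ) (fun l : Fin n => k (X m') (X l)) : Fin (n+1) → ℝ) m)]
        rw [hGj, hq0, zero_mul, zero_add]
        congr 1
      have hcomb' : ∑ o : Option ↥A, g' o • kernelRows k κ n X A o = 0 := by
        funext m
        exact (hsum_eq m).trans (congrFun hg0 m)
      have hall := Fintype.linearIndependent_iff.mp hAindep g' hcomb'
      apply hgo₀
      match o₀ with
      | none => exact hall none
      | some i =>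
        by_cases hij : i = (⟨j, hjm⟩ : ↥(insert j A))
        · rw [hij]; exact hq0
        · have hiA : i.1 ∈ A := by
            rcases Finset.mem_insert.mp i.2 with h1 | h2
            · exact absurd (Subtype.ext h1) hij
            · exact h2
          have h1 : g (some i) = g' (some ⟨i.1, hiA⟩) := by
            have h2 : g' (some ⟨i.1, hiA⟩) = G i.1 := rfl
            rw [h2, hGval i]
          rw [h1]; exact hall (some ⟨i.1, hiA⟩)
    -- extract the coordinates of the dependence
    have hcoord0 : g none * κ + ∑ i : ↥(insert j A), g (some i) = 0 := by
      have h0 := congrFun hg0 0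
      rw [Finset.sum_apply, Fintype.sum_option] at h0
      have e : ∀ i : ↥(insert j A),
          (g (some i) • kernelRows k κ n X (insert j A) (some i)) 0 = g (some i) := by
        intro i; simp [kernelRows]
      rw [Finset.sum_congr rfl fun i _ => e i] at h0
      have e0 : (g none • kernelRows k κ n X (insert j A) none) 0 = g none * κ := by
        simp [kernelRows]
      rw [e0] at h0
      simpa using h0
    have hcoordl : ∀ l : Fin n,
        g none + ∑ i : ↥(insert j A), g (some i) * k (X l) (X i.1) = 0 := by
      intro l
      have h0 := congrFun hg0 l.succ
      rw [Finset.sum_apply, Fintype.sum_option] at h0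
      have e : ∀ i : ↥(insert j A),
          (g (some i) • kernelRows k κ n X (insert j A) (some i)) l.succ
            = g (some i) * k (X l) (X i.1) := by
        intro i
        have : k (X i.1) (X l) = k (X l) (X i.1) := hsymm _ _
        simp [kernelRows, this]
      rw [Finset.sum_congr rfl fun i _ => e i] at h0
      have e0 : (g none • kernelRows k κ n X (insert j A) none) l.succ = g none := by
        simp [kernelRows]
      rw [e0] at h0
      simpa using h0
    -- the combination vanishes as a function on all of 𝒳
    have hid := fun_of_vanishing H hone n X (insert j A)
      (fun i => g (some i)) (g none) hcoordl (by rw [← hκ]; exact hcoord0)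
    -- split off the j-term and solve
    set gj : ℝ := g (some ⟨j, hjm⟩) with hgj
    refine ⟨-(g none) / gj, fun i => -(G i.1) / gj, fun x => ?_⟩
    have h := hid x
    have hsplit : ∑ i : ↥(insert j A), g (some i) * k x (X i.1)
        = gj * k x (X j) + ∑ i : ↥A, G i.1 * k x (X i.1) := by
      have e : ∀ i : ↥(insert j A), g (some i) * k x (X i.1) = G i.1 * k x (X i.1) := by
        intro i; rw [hGval i]
      rw [Finset.sum_congr rfl fun i _ => e i,
        sum_coe_insert A j hj (fun m' => G m' * k x (X m')), hGj]
    rw [hsplit] at h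
    set S : ℝ := ∑ i : ↥A, G i.1 * k x (X i.1) with hS
    have hsum2 : ∑ i : ↥A, -(G i.1) / gj * k x (X i.1) = -S / gj := by
      have e2 : ∀ i : ↥A, -(G i.1) / gj * k x (X i.1)
          = -(G i.1 * k x (X i.1)) / gj := fun i => by ring
      rw [Finset.sum_congr rfl fun i _ => e2 i, ← Finset.sum_div, Finset.sum_neg_distrib, ← hS]
    rw [hsum2]
    have hk : k x (X j) = (-(g none) - S) / gj := by
      field_simp
      linear_combination h
    rw [hk]
    ring

theorem inn_add_right (H : AbstractRKHS 𝒳 k) (f g h : 𝒳 → ℝ) :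
    H.inn h (fun x => f x + g x) = H.inn h f + H.inn h g := by
  rw [H.inn_symm, H.inn_add_left, H.inn_symm f h, H.inn_symm g h]

theorem fB_smul (n : ℕ) (X : Fin n → 𝒳) (A : Finset (Fin n)) (c : ℝ) (w : ↥A → ℝ) :
    fB k n X A (fun i => c * w i) = fun x => c * fB k n X A w x := by
  funext x; unfold fB
  rw [Finset.mul_sum]
  exact Finset.sum_congr rfl fun i _ => by ring

theorem fB_zero_fun (n : ℕ) (X : Fin n → 𝒳) (A : Finset (Fin n)) :
    fB k n X A (fun _ => (0:ℝ)) = fun _ => (0:ℝ) := by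
  funext x; unfold fB; simp

theorem Q_smul (H : AbstractRKHS 𝒳 k) (n : ℕ) (X : Fin n → 𝒳) (A : Finset (Fin n))
    (c : ℝ) (w : ↥A → ℝ) :
    H.inn (fB k n X A (fun i => c * w i)) (fB k n X A (fun i => c * w i))
      = c^2 * H.inn (fB k n X A w) (fB k n X A w) := by
  rw [fB_smul, H.inn_smul_left c (fB k n X A w), inn_smul_right H c (fB k n X A w)]
  ring

theorem Q_continuous (H : AbstractRKHS 𝒳 k) (n : ℕ) (X : Fin n → 𝒳) (A : Finset (Fin n)) :
    Continuous fun v : EuclideanSpace ℝ ↥A =>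
      H.inn (fB k n X A v) (fB k n X A v) := by
  have hproj : ∀ i : ↥A, Continuous fun v : EuclideanSpace ℝ ↥A => v i := by
    intro i
    exact (EuclideanSpace.proj (𝕜 := ℝ) i).continuous
  have hform : (fun v : EuclideanSpace ℝ ↥A => H.inn (fB k n X A v) (fB k n X A v))
      = fun v : EuclideanSpace ℝ ↥A => ∑ i : ↥A, v i *
          ((∑ j : ↥A, v j * (H.inn (fun x => k x (X j.1)) (fun x => k x (X i.1))
              - (1/(n:ℝ) * ∑ l : Fin n, k (X l) (X j.1))
                  * H.inn (fun _ => (1:ℝ)) (fun x => k x (X i.1))))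
            - (1/(n:ℝ) * ∑ l : Fin n, k (X l) (X i.1)) *
              (∑ j : ↥A, v j * (H.inn (fun x => k x (X j.1)) (fun _ => (1:ℝ))
                - (1/(n:ℝ) * ∑ l : Fin n, k (X l) (X j.1))
                    * H.inn (fun _ => (1:ℝ)) (fun _ => (1:ℝ))))) := by
    funext v
    rw [inn_fB_left H n X A]
    refine Finset.sum_congr rfl fun i _ => ?_
    have h1 : H.inn (fun x => k x (X i.1)) (fB k n X A v)
        = ∑ j : ↥A, v j * (H.inn (fun x => k x (X j.1)) (fun x => k x (X i.1))
            - (1/(n:ℝ) * ∑ l : Fin n, k (X l) (X j.1))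
                * H.inn (fun _ => (1:ℝ)) (fun x => k x (X i.1))) := by
      rw [H.inn_symm, inn_fB_left H n X A]
    have h2 : H.inn (fun _ => (1:ℝ)) (fB k n X A v)
        = ∑ j : ↥A, v j * (H.inn (fun x => k x (X j.1)) (fun _ => (1:ℝ))
            - (1/(n:ℝ) * ∑ l : Fin n, k (X l) (X j.1))
                * H.inn (fun _ => (1:ℝ)) (fun _ => (1:ℝ))) := by
      rw [H.inn_symm, inn_fB_left H n X A]
    rw [h1, h2]
  rw [hform]
  apply continuous_finset_sum
  intro i _
  apply Continuous.mul (hproj i)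
  apply Continuous.sub
  · exact continuous_finset_sum _ fun j _ => (hproj j).mul continuous_const
  · exact continuous_const.mul
      (continuous_finset_sum _ fun j _ => (hproj j).mul continuous_const)

theorem Q_pos (H : AbstractRKHS 𝒳 k) (hone : (fun _ => (1:ℝ)) ∈ H.carrier)
    (hsymm : ∀ x y, k x y = k y x) (n : ℕ) (X : Fin n → 𝒳) (A : Finset (Fin n))
    (hAindep : LinearIndependent ℝ (kernelRows k
      (H.inn (fun _ => (1 : ℝ)) (fun _ => (1 : ℝ))) n X A))
    (v : EuclideanSpace ℝ ↥A) (hv : v ≠ 0) :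
    0 < H.inn (fB k n X A v) (fB k n X A v) := by
  have h0 : 0 ≤ H.inn (fB k n X A v) (fB k n X A v) :=
    H.inn_nonneg _ (fB_mem H hone n X A v)
  rcases h0.eq_or_lt with heq | h
  · exfalso
    have hfz : fB k n X A v = fun _ => 0 :=
      H.inn_definite _ (fB_mem H hone n X A v) heq.symm
    have hind := indep0 H hone hsymm n X A hAindep v 0
      (fun x => by rw [zero_add]; exact congrFun hfz x)
    exact hv (PiLp.ext fun i => by simp [hind.2 i])
  · exact h

theorem lam_bound (H : AbstractRKHS 𝒳 k) (hone : (fun _ => (1:ℝ)) ∈ H.carrier)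
    (hsymm : ∀ x y, k x y = k y x) (n : ℕ) (X : Fin n → 𝒳) (A : Finset (Fin n))
    (hAindep : LinearIndependent ℝ (kernelRows k
      (H.inn (fun _ => (1 : ℝ)) (fun _ => (1 : ℝ))) n X A)) :
    ∃ lam : ℝ, 0 < lam ∧ ∀ v : EuclideanSpace ℝ ↥A,
      lam * ‖v‖^2 ≤ H.inn (fB k n X A v) (fB k n X A v) := by
  have hQ0 : H.inn (fB k n X A (0 : EuclideanSpace ℝ ↥A))
      (fB k n X A (0 : EuclideanSpace ℝ ↥A)) = 0 := by
    have hz : fB k n X A (0 : EuclideanSpace ℝ ↥A) = fun _ => (0:ℝ) := by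
      have : ((0 : EuclideanSpace ℝ ↥A) : ↥A → ℝ) = fun _ => (0:ℝ) := by
        funext i; rfl
      rw [show fB k n X A (0 : EuclideanSpace ℝ ↥A)
          = fB k n X A (fun _ => (0:ℝ)) from by rw [← this], fB_zero_fun]
    rw [hz, inn_zero_left]
  rcases isEmpty_or_nonempty (↥A) with hA | hA
  · refine ⟨1, one_pos, fun v => ?_⟩
    have hv0 : v = 0 := Subsingleton.elim v 0
    rw [hv0, hQ0, norm_zero]
    norm_num
  · -- compact sphere argument
    obtain ⟨i₀⟩ := hA
    have hsphne : (Metric.sphere (0 : EuclideanSpace ℝ ↥A) 1).Nonempty := by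
      refine ⟨EuclideanSpace.single i₀ (1:ℝ), ?_⟩
      rw [mem_sphere_zero_iff_norm, EuclideanSpace.norm_single]
      norm_num
    obtain ⟨v₀, hv₀mem, hv₀min⟩ := (isCompact_sphere (0 : EuclideanSpace ℝ ↥A) 1).exists_isMinOn
      hsphne (Q_continuous H n X A).continuousOn
    have hv₀norm : ‖v₀‖ = 1 := mem_sphere_zero_iff_norm.mp hv₀mem
    have hv₀ne : v₀ ≠ 0 := by
      intro h0; rw [h0, norm_zero] at hv₀norm; norm_num at hv₀norm
    set lam := H.inn (fB k n X A v₀) (fB k n X A v₀) with hlam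
    have hlampos : 0 < lam := Q_pos H hone hsymm n X A hAindep v₀ hv₀ne
    refine ⟨lam, hlampos, fun v => ?_⟩
    by_cases hv : v = 0
    · rw [hv, hQ0, norm_zero]; norm_num
    · have hnv : 0 < ‖v‖ := norm_pos_iff.mpr hv
      set u : EuclideanSpace ℝ ↥A := ‖v‖⁻¹ • v with hu
      have humem : u ∈ Metric.sphere (0 : EuclideanSpace ℝ ↥A) 1 := by
        rw [mem_sphere_zero_iff_norm, hu, norm_smul, norm_inv, norm_norm,
          inv_mul_cancel₀ hnv.ne']
      have hucoord : (u : ↥A → ℝ) = fun i => ‖v‖⁻¹ * v i := by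
        funext i; rw [hu]; rfl
      have hQu : H.inn (fB k n X A u) (fB k n X A u)
          = (‖v‖⁻¹)^2 * H.inn (fB k n X A v) (fB k n X A v) := by
        rw [show fB k n X A u = fB k n X A (fun i => ‖v‖⁻¹ * v i) from by rw [← hucoord]]
        exact Q_smul H n X A _ _
      have hmin := isMinOn_iff.mp hv₀min u humem
      rw [hQu] at hmin
      have h2 : lam * ‖v‖^2 ≤ (‖v‖⁻¹)^2 * H.inn (fB k n X A v) (fB k n X A v) * ‖v‖^2 :=
        mul_le_mul_of_nonneg_right hmin (by positivity)
      calc lam * ‖v‖^2 ≤ (‖v‖⁻¹)^2 * H.inn (fB k n X A v) (fB k n X A v) * ‖v‖^2 := h2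
        _ = H.inn (fB k n X A v) (fB k n X A v) := by
            field_simp

theorem empPn_fB (n : ℕ) (hn : 1 ≤ n) (X : Fin n → 𝒳) (A : Finset (Fin n)) (β : ↥A → ℝ) :
    empPn n X (fB k n X A β) = 0 := by
  have hn' : ((n:ℝ)) ≠ 0 := by
    exact_mod_cast Nat.pos_of_ne_zero (by omega) |>.ne'
  unfold empPn fB
  rw [Finset.sum_comm]
  have e : ∀ i : ↥A, ∑ l : Fin n,
      (k (X l) (X i.1) - 1/(n:ℝ) * ∑ j : Fin n, k (X j) (X i.1)) * β i = 0 := by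
    intro i
    rw [← Finset.sum_mul, Finset.sum_sub_distrib, Finset.sum_const, Finset.card_univ,
      Fintype.card_fin, nsmul_eq_mul]
    have e2 : (n:ℝ) * (1/(n:ℝ) * ∑ j : Fin n, k (X j) (X i.1))
        = ∑ j : Fin n, k (X j) (X i.1) := by field_simp
    rw [e2, sub_self, zero_mul]
  rw [Finset.sum_congr rfl fun i _ => e i, Finset.sum_const_zero, mul_zero]

theorem innB_comb_left (H : AbstractRKHS 𝒳 k) (n : ℕ) (X : Fin n → 𝒳) (A : Finset (Fin n))
    (a b : ℝ) (β γ δ : ↥A → ℝ) :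
    H.inn (fB k n X A (fun i => a * β i + b * γ i)) (fB k n X A δ)
      = a * H.inn (fB k n X A β) (fB k n X A δ)
        + b * H.inn (fB k n X A γ) (fB k n X A δ) := by
  rw [fB_comb,
    H.inn_add_left (fun x => a * fB k n X A β x) (fun x => b * fB k n X A γ x) (fB k n X A δ),
    H.inn_smul_left a (fB k n X A β) (fB k n X A δ),
    H.inn_smul_left b (fB k n X A γ) (fB k n X A δ)]

theorem innB_comb_right (H : AbstractRKHS 𝒳 k) (n : ℕ) (X : Fin n → 𝒳) (A : Finset (Fin n))
    (a b : ℝ) (β γ δ : ↥A → ℝ) :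
    H.inn (fB k n X A δ) (fB k n X A (fun i => a * β i + b * γ i))
      = a * H.inn (fB k n X A δ) (fB k n X A β)
        + b * H.inn (fB k n X A δ) (fB k n X A γ) := by
  rw [H.inn_symm, innB_comb_left H n X A a b β γ δ,
    H.inn_symm (fB k n X A β) (fB k n X A δ), H.inn_symm (fB k n X A γ) (fB k n X A δ)]

theorem empLn_ge {n : ℕ} (X : Fin n → 𝒳) (T : Fin n → ℝ) (I : Fin n → Bool)
    (hn : 1 ≤ n) (f : 𝒳 → ℝ) : -Real.log n ≤ empLn n X T I f := by
  have hn' : (0:ℝ) < (n : ℝ) := by exact_mod_cast Nat.pos_of_ne_zero (by omega)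
  have hlogn : 0 ≤ Real.log n := Real.log_nonneg (by exact_mod_cast hn)
  have hterm : ∀ i : Fin n, -Real.log n ≤ (if T i ≤ 1 ∧ I i = false then (1:ℝ) else 0) *
      (Real.log (empSn n X T f (T i)) - f (X i)) := by
    intro i
    by_cases hi : T i ≤ 1 ∧ I i = false
    · rw [if_pos hi, one_mul]
      have hge : (1/(n:ℝ)) * Real.exp (f (X i)) ≤ empSn n X T f (T i) := by
        unfold empSn
        apply mul_le_mul_of_nonneg_left _ (by positivity)
        have := Finset.single_le_sum
          (f := fun j => (if T i ≤ T j then (1:ℝ) else 0) * Real.exp (f (X j)))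
          (fun j _ => by positivity) (Finset.mem_univ i)
        simpa using this
      have hlog := Real.log_le_log (by positivity) hge
      rw [Real.log_mul (by positivity) (Real.exp_ne_zero _), Real.log_exp,
        one_div, Real.log_inv] at hlog
      linarith
    · rw [if_neg hi, zero_mul]; linarith
  have hsum := Finset.sum_le_sum fun i (_ : i ∈ Finset.univ) => hterm i
  rw [Finset.sum_const, Finset.card_univ, Fintype.card_fin, nsmul_eq_mul] at hsum
  unfold empLn
  have h2 := mul_le_mul_of_nonneg_left hsum (by positivity : (0:ℝ) ≤ 1/(n:ℝ))
  have e : (1/(n:ℝ)) * ((n:ℝ) * (-Real.log n)) = -Real.log n := by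
    field_simp
  rw [e] at h2
  exact h2

theorem empLn_fB_continuous (H : AbstractRKHS 𝒳 k) (n : ℕ) (X : Fin n → 𝒳) (T : Fin n → ℝ)
    (I : Fin n → Bool) (hn : 1 ≤ n) (A : Finset (Fin n)) :
    Continuous fun β : EuclideanSpace ℝ ↥A => empLn n X T I (fB k n X A β) := by
  have hproj : ∀ i : ↥A, Continuous fun v : EuclideanSpace ℝ ↥A => v i := fun i =>
    (EuclideanSpace.proj (𝕜 := ℝ) i).continuous
  have hfx : ∀ x₀ : 𝒳, Continuous fun β : EuclideanSpace ℝ ↥A => fB k n X A β x₀ := by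
    intro x₀; unfold fB
    exact continuous_finset_sum _ fun i _ => continuous_const.mul (hproj i)
  have hSn : ∀ t : ℝ, Continuous fun β : EuclideanSpace ℝ ↥A =>
      empSn n X T (fB k n X A β) t := by
    intro t; unfold empSn
    apply Continuous.mul continuous_const
    apply continuous_finset_sum
    intro j _
    exact continuous_const.mul (Real.continuous_exp.comp (hfx (X j)))
  unfold empLn
  apply Continuous.mul continuous_const
  apply continuous_finset_sum
  intro i _
  by_cases hi : T i ≤ 1 ∧ I i = false
  · simp only [if_pos hi, one_mul]
    apply Continuous.sub
    · exact Continuous.log (hSn (T i))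
        (fun β => (empSn_pos n X T hn (fB k n X A β) i).ne')
    · exact hfx (X i)
  · simp only [if_neg hi, zero_mul]
    exact continuous_const

theorem L_strong_convex (H : AbstractRKHS 𝒳 k) (n : ℕ) (X : Fin n → 𝒳) (T : Fin n → ℝ)
    (I : Fin n → Bool) (hn : 1 ≤ n) (A : Finset (Fin n)) (γ lam : ℝ) (hγ : 0 < γ)
    (hlamb : ∀ v : EuclideanSpace ℝ ↥A,
      lam * ‖v‖^2 ≤ H.inn (fB k n X A v) (fB k n X A v)) :
    StrongConvexOn Set.univ (2*γ*lam) (fun β : EuclideanSpace ℝ ↥A =>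
      empLn n X T I (fB k n X A β)
        + γ * H.inn (fB k n X A β) (fB k n X A β)) := by
  constructor
  · exact convex_univ
  intro x _ y _ a b ha hb hab
  have hb1 : b = 1 - a := by linarith
  subst hb1
  simp only [smul_eq_mul]
  have hxy : (a • x + (1-a) • y : EuclideanSpace ℝ ↥A)
      = (fun i => a * x i + (1-a) * y i : ↥A → ℝ) := by
    funext i
    simp [PiLp.add_apply, PiLp.smul_apply, smul_eq_mul]
  have hxys : (x - y : EuclideanSpace ℝ ↥A)
      = (fun i => 1 * x i + (-1) * y i : ↥A → ℝ) := by
    funext i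
    simp [PiLp.sub_apply]
    ring
  rw [hxy]
  have hE := empLn_comb n X T I hn (fB k n X A x) (fB k n X A y) ha hb hab
  rw [← fB_comb n X A a (1-a) x y] at hE
  set Bxx := H.inn (fB k n X A x) (fB k n X A x) with hBxx
  set Byy := H.inn (fB k n X A y) (fB k n X A y) with hByy
  set Bxy := H.inn (fB k n X A x) (fB k n X A y) with hBxy
  set Byx := H.inn (fB k n X A y) (fB k n X A x) with hByx
  have hsymB : Byx = Bxy := by rw [hByx, hBxy, H.inn_symm]
  have hQc : H.inn (fB k n X A (fun i => a * x i + (1-a) * y i))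
      (fB k n X A (fun i => a * x i + (1-a) * y i))
      = a * (a * Bxx + (1-a) * Bxy) + (1-a) * (a * Byx + (1-a) * Byy) := by
    rw [innB_comb_left H n X A a (1-a) x y (fun i => a * x i + (1-a) * y i),
      innB_comb_right H n X A a (1-a) x y x, innB_comb_right H n X A a (1-a) x y y]
  have hQs : H.inn (fB k n X A (x - y : EuclideanSpace ℝ ↥A)) (fB k n X A (x - y : EuclideanSpace ℝ ↥A))
      = 1 * (1 * Bxx + (-1) * Bxy) + (-1) * (1 * Byx + (-1) * Byy) := by
    rw [hxys, innB_comb_left H n X A 1 (-1) x y (fun i => 1 * x i + (-1) * y i),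
      innB_comb_right H n X A 1 (-1) x y x, innB_comb_right H n X A 1 (-1) x y y]
  have hlb := hlamb (x - y)
  rw [hQs] at hlb
  have hprod : 0 ≤ γ * (a*(1-a)) *
      ((1 * (1 * Bxx + (-1) * Bxy) + (-1) * (1 * Byx + (-1) * Byy)) - lam * ‖x - y‖^2) :=
    mul_nonneg (mul_nonneg hγ.le (mul_nonneg ha hb)) (by linarith)
  rw [hQc]
  nlinarith [hE, hprod, hsymB]

theorem exists_min (H : AbstractRKHS 𝒳 k) (n : ℕ) (X : Fin n → 𝒳) (T : Fin n → ℝ)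
    (I : Fin n → Bool) (hn : 1 ≤ n) (A : Finset (Fin n)) (γ lam : ℝ) (hγ : 0 < γ)
    (hlam : 0 < lam)
    (hlamb : ∀ v : EuclideanSpace ℝ ↥A,
      lam * ‖v‖^2 ≤ H.inn (fB k n X A v) (fB k n X A v)) :
    ∃ βhat : EuclideanSpace ℝ ↥A, ∀ β : EuclideanSpace ℝ ↥A,
      empLn n X T I (fB k n X A βhat)
          + γ * H.inn (fB k n X A βhat) (fB k n X A βhat)
        ≤ empLn n X T I (fB k n X A β)
          + γ * H.inn (fB k n X A β) (fB k n X A β) := by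
  set f : EuclideanSpace ℝ ↥A → ℝ := fun β =>
    empLn n X T I (fB k n X A β) + γ * H.inn (fB k n X A β) (fB k n X A β) with hf
  have hcont : Continuous f := by
    rw [hf]
    exact (empLn_fB_continuous H n X T I hn A).add
      (continuous_const.mul (Q_continuous H n X A))
  have hlbf : ∀ β, -Real.log n + γ * (lam * ‖β‖^2) ≤ f β := by
    intro β
    have h1 := empLn_ge X T I hn (fB k n X A β)
    have h2 := mul_le_mul_of_nonneg_left (hlamb β) hγ.le
    rw [hf]
    simp only []
    linarith
  have hγlam : 0 < γ * lam := mul_pos hγ hlam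
  set Rarg : ℝ := (f 0 + Real.log n + 1) / (γ * lam) with hRarg
  have hf0 : -Real.log n ≤ f 0 := by
    have := hlbf 0
    rw [norm_zero] at this
    simp at this
    linarith [this]
  have hargpos : 0 ≤ Rarg := by
    rw [hRarg]
    apply div_nonneg _ hγlam.le
    linarith
  set R : ℝ := Real.sqrt Rarg with hR
  have hR0 : 0 ≤ R := Real.sqrt_nonneg _
  have hRsq : γ * lam * R^2 = f 0 + Real.log n + 1 := by
    rw [hR, Real.sq_sqrt hargpos, hRarg]
    field_simp
  have hKcomp : IsCompact (Metric.closedBall (0 : EuclideanSpace ℝ ↥A) R) :=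
    isCompact_closedBall _ _
  have hKne : (Metric.closedBall (0 : EuclideanSpace ℝ ↥A) R).Nonempty :=
    ⟨0, Metric.mem_closedBall_self hR0⟩
  obtain ⟨βhat, hβK, hmin⟩ := hKcomp.exists_isMinOn hKne hcont.continuousOn
  refine ⟨βhat, fun β => ?_⟩
  have hgoal : f βhat ≤ f β := by
    by_cases hβ : β ∈ Metric.closedBall (0 : EuclideanSpace ℝ ↥A) R
    · exact isMinOn_iff.mp hmin β hβ
    · have hβR : R < ‖β‖ := by
        rw [Metric.mem_closedBall, dist_zero_right] at hβ
        linarith [not_le.mp hβ]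
      have hpow : R^2 < ‖β‖^2 := by
        apply pow_lt_pow_left₀ hβR hR0
        norm_num
      have hchain : f 0 + 1 ≤ f β := by
        have h1 := hlbf β
        have h2 : γ * lam * R^2 ≤ γ * (lam * ‖β‖^2) := by
          rw [← mul_assoc]
          exact mul_le_mul_of_nonneg_left hpow.le hγlam.le
        linarith [hRsq]
      have h0min : f βhat ≤ f 0 := isMinOn_iff.mp hmin 0 (Metric.mem_closedBall_self hR0)
      linarith

  exact hgoal
noncomputable def eo (k : 𝒳 → 𝒳 → ℝ) (n : ℕ) (X : Fin n → 𝒳) (A : Finset (Fin n)) :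
    Option ↥A → 𝒳 → ℝ :=
  fun o => Option.elim o (fun _ => (1:ℝ))
    (fun i => fun x => k x (X i.1) - 1/(n:ℝ) * ∑ j : Fin n, k (X j) (X i.1))

noncomputable def ev (k : 𝒳 → 𝒳 → ℝ) (n : ℕ) (X : Fin n → 𝒳) (A : Finset (Fin n))
    (v : Option ↥A → ℝ) : 𝒳 → ℝ :=
  fun x => ∑ o : Option ↥A, v o * eo k n X A o x

theorem eo_mem (H : AbstractRKHS 𝒳 k) (hone : (fun _ => (1:ℝ)) ∈ H.carrier)
    (n : ℕ) (X : Fin n → 𝒳) (A : Finset (Fin n)) (o : Option ↥A) :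
    eo k n X A o ∈ H.carrier := by
  match o with
  | none => exact hone
  | some i =>
    have h := sec_mem H hone (X i.1) (1/(n:ℝ) * ∑ j : Fin n, k (X j) (X i.1)) 1
    exact mem_of_eq H (by funext x; simp [eo]) h

theorem ev_mem (H : AbstractRKHS 𝒳 k) (hone : (fun _ => (1:ℝ)) ∈ H.carrier)
    (n : ℕ) (X : Fin n → 𝒳) (A : Finset (Fin n)) (v : Option ↥A → ℝ) :
    ev k n X A v ∈ H.carrier := by
  exact sum_mem H Finset.univ (fun o => fun x => v o * eo k n X A o x)
    (fun o _ => H.smul_mem _ _ (eo_mem H hone n X A o))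

theorem inn_ev_left (H : AbstractRKHS 𝒳 k) (n : ℕ) (X : Fin n → 𝒳) (A : Finset (Fin n))
    (v : Option ↥A → ℝ) (w : 𝒳 → ℝ) :
    H.inn (ev k n X A v) w = ∑ o : Option ↥A, v o * H.inn (eo k n X A o) w := by
  rw [show ev k n X A v = fun x => ∑ o : Option ↥A, v o * eo k n X A o x from rfl,
    inn_sum_left H Finset.univ (fun o => fun x => v o * eo k n X A o x) w]
  exact Finset.sum_congr rfl fun o _ => H.inn_smul_left (v o) (eo k n X A o) w

theorem ev_eq (k : 𝒳 → 𝒳 → ℝ) (n : ℕ) (X : Fin n → 𝒳) (A : Finset (Fin n))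
    (v : Option ↥A → ℝ) (x : 𝒳) :
    ev k n X A v x = v none + fB k n X A (fun i => v (some i)) x := by
  unfold ev fB
  rw [Fintype.sum_option]
  simp only [eo, Option.elim]
  rw [mul_one]
  congr 1
  exact Finset.sum_congr rfl fun i _ => by ring

theorem proj_decomp (H : AbstractRKHS 𝒳 k) (hone : (fun _ => (1:ℝ)) ∈ H.carrier)
    (hsymm : ∀ x y, k x y = k y x) (n : ℕ) (X : Fin n → 𝒳) (A : Finset (Fin n))
    (hAindep : LinearIndependent ℝ (kernelRows k
      (H.inn (fun _ => (1 : ℝ)) (fun _ => (1 : ℝ))) n X A))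
    (hAmax : ∀ B : Finset (Fin n), A ⊆ B →
      LinearIndependent ℝ (kernelRows k
        (H.inn (fun _ => (1 : ℝ)) (fun _ => (1 : ℝ))) n X B) →
      B = A)
    (g : 𝒳 → ℝ) (hg : g ∈ H.carrier) :
    ∃ (c : ℝ) (β : EuclideanSpace ℝ ↥A) (w : 𝒳 → ℝ), w ∈ H.carrier ∧
      (∀ x, g x = c + fB k n X A β x + w x) ∧
      (∀ l : Fin n, w (X l) = 0) ∧
      H.inn w (fun _ => (1:ℝ)) = 0 ∧
      (∀ i : ↥A, H.inn w (fun x => k x (X i.1)) = 0) := by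
  classical
  set G : Matrix (Option ↥A) (Option ↥A) ℝ :=
    Matrix.of fun r s => H.inn (eo k n X A r) (eo k n X A s) with hG
  have hGapp : ∀ r s, G r s = H.inn (eo k n X A r) (eo k n X A s) := fun r s => rfl
  -- quadratic form identity
  have hquad : ∀ v : Option ↥A → ℝ,
      v ⬝ᵥ (G *ᵥ v) = H.inn (ev k n X A v) (ev k n X A v) := by
    intro v
    have h2 : ∀ r, H.inn (eo k n X A r) (ev k n X A v)
        = ∑ s : Option ↥A, v s * H.inn (eo k n X A r) (eo k n X A s) := by
      intro r
      rw [H.inn_symm, inn_ev_left H n X A]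
      exact Finset.sum_congr rfl fun s _ => by rw [H.inn_symm]
    rw [inn_ev_left H n X A]
    simp only [dotProduct, Matrix.mulVec, hGapp]
    refine Finset.sum_congr rfl fun r _ => ?_
    rw [h2 r]
    congr 1
    exact Finset.sum_congr rfl fun s _ => by ring
  -- positive definiteness
  have hPD : G.PosDef := by
    refine Matrix.posDef_iff_dotProduct_mulVec.mpr ⟨?_, ?_⟩
    · ext r s
      simp only [Matrix.conjTranspose_apply, hGapp, star_trivial]
      exact H.inn_symm _ _
    · intro v hv
      have hstar : star v = v := funext fun o => star_trivial _
      rw [hstar, hquad v]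
      have h0 : 0 ≤ H.inn (ev k n X A v) (ev k n X A v) :=
        H.inn_nonneg _ (ev_mem H hone n X A v)
      rcases h0.eq_or_lt with heq | hlt
      · exfalso
        have hz : ev k n X A v = fun _ => 0 :=
          H.inn_definite _ (ev_mem H hone n X A v) heq.symm
        have hind := indep0 H hone hsymm n X A hAindep (fun i => v (some i)) (v none)
          (fun x => by rw [← ev_eq]; exact congrFun hz x)
        apply hv
        funext o
        match o with
        | none => exact hind.1
        | some i => exact hind.2 i
      · exact hlt
  have hdet : IsUnit G.det := hPD.det_pos.ne'.isUnit
  -- the projection coefficients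
  set y : Option ↥A → ℝ := fun r => H.inn g (eo k n X A r) with hy
  set α : Option ↥A → ℝ := G⁻¹ *ᵥ y with hα
  have hGα : G *ᵥ α = y := by
    rw [hα, Matrix.mulVec_mulVec, Matrix.mul_nonsing_inv G hdet, Matrix.one_mulVec]
  -- orthogonality of the residual
  have horth : ∀ r : Option ↥A,
      H.inn (fun x => g x - ev k n X A α x) (eo k n X A r) = 0 := by
    intro r
    rw [inn_sub_left H g (ev k n X A α) (eo k n X A r), inn_ev_left H n X A]
    have h3 : ∑ o : Option ↥A, α o * H.inn (eo k n X A o) (eo k n X A r)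
        = (G *ᵥ α) r := by
      simp only [Matrix.mulVec, dotProduct, hGapp]
      refine Finset.sum_congr rfl fun s _ => ?_
      rw [H.inn_symm (eo k n X A s) (eo k n X A r)]
      ring
    rw [h3, hGα, hy]
    simp
  refine ⟨α none, WithLp.toLp 2 (fun i => α (some i)), fun x => g x - ev k n X A α x,
    sub_mem H hg (ev_mem H hone n X A α), fun x => by simp only [WithLp.ofLp_toLp]; rw [← ev_eq]; ring, ?_, ?_, ?_⟩
  · -- vanishing at the data points
    intro l
    have hrep := H.reproducing _ (sub_mem H hg (ev_mem H hone n X A α)) (X l)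
    show g (X l) - ev k n X A α (X l) = 0
    rw [← hrep]
    obtain ⟨a, b, hab⟩ := kernel_span H hone hsymm n X A hAindep hAmax l
    have hsec : (fun x_1 => k x_1 (X l))
        = fun x_1 => a + ∑ i : ↥A, b i * k x_1 (X i.1) := funext fun x_1 => hab x_1
    rw [hsec, inn_add_right H (fun _ => a) (fun x_1 => ∑ i : ↥A, b i * k x_1 (X i.1)) _]
    have hone0 : H.inn (fun x => g x - ev k n X A α x) (fun _ => (1:ℝ)) = 0 := horth none
    have hconst : H.inn (fun x => g x - ev k n X A α x) (fun _ => a) = 0 := by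
      rw [H.inn_symm, inn_const_left H a _, H.inn_symm]
      rw [hone0, mul_zero]
    have hsum : H.inn (fun x => g x - ev k n X A α x)
        (fun x_1 => ∑ i : ↥A, b i * k x_1 (X i.1)) = 0 := by
      rw [inn_sum_right H Finset.univ (fun i => fun x_1 => b i * k x_1 (X i.1)) _]
      refine Finset.sum_eq_zero fun i _ => ?_
      rw [inn_smul_right H (b i) (fun x_1 => k x_1 (X i.1)) _]
      have hsec0 : H.inn (fun x => g x - ev k n X A α x) (fun x_1 => k x_1 (X i.1)) = 0 := by
        have h4' : H.inn (fun x => g x - ev k n X A α x)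
            (fun x => k x (X i.1) - 1/(n:ℝ) * ∑ j : Fin n, k (X j) (X i.1)) = 0 :=
          horth (some i)
        have h5 := inn_sub_right H (fun x_1 => k x_1 (X i.1))
          (fun _ => 1/(n:ℝ) * ∑ j : Fin n, k (X j) (X i.1))
          (fun x => g x - ev k n X A α x)
        rw [h4'] at h5
        have hc : H.inn (fun x => g x - ev k n X A α x)
            (fun _ => 1/(n:ℝ) * ∑ j : Fin n, k (X j) (X i.1)) = 0 := by
          rw [H.inn_symm, inn_const_left H _ _, H.inn_symm]
          rw [hone0, mul_zero]
        rw [hc] at h5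
        linarith [h5.symm]
      rw [hsec0, mul_zero]
    rw [hconst, hsum]
    ring
  · exact horth none
  · intro i
    have h4' : H.inn (fun x => g x - ev k n X A α x)
        (fun x => k x (X i.1) - 1/(n:ℝ) * ∑ j : Fin n, k (X j) (X i.1)) = 0 :=
      horth (some i)
    have h5 := inn_sub_right H (fun x_1 => k x_1 (X i.1))
      (fun _ => 1/(n:ℝ) * ∑ j : Fin n, k (X j) (X i.1))
      (fun x => g x - ev k n X A α x)
    rw [h4'] at h5
    have hone0 : H.inn (fun x => g x - ev k n X A α x) (fun _ => (1:ℝ)) = 0 := horth none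
    have hc : H.inn (fun x => g x - ev k n X A α x)
        (fun _ => 1/(n:ℝ) * ∑ j : Fin n, k (X j) (X i.1)) = 0 := by
      rw [H.inn_symm, inn_const_left H _ _, H.inn_symm]
      rw [hone0, mul_zero]
    rw [hc] at h5
    linarith [h5.symm]

theorem decomp_value (H : AbstractRKHS 𝒳 k) (n : ℕ) (X : Fin n → 𝒳) (T : Fin n → ℝ)
    (I : Fin n → Bool) (hn : 1 ≤ n) (A : Finset (Fin n)) (γ : ℝ)
    (g : 𝒳 → ℝ) (c : ℝ) (β : ↥A → ℝ) (w : 𝒳 → ℝ)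
    (hgx : ∀ x, g x = c + fB k n X A β x + w x)
    (hwval : ∀ l : Fin n, w (X l) = 0)
    (hwone : H.inn w (fun _ => (1:ℝ)) = 0)
    (hwsec : ∀ i : ↥A, H.inn w (fun x => k x (X i.1)) = 0) :
    empLnGamma H n X T I γ g
      = empLn n X T I (fB k n X A β) + γ * H.inn (fB k n X A β) (fB k n X A β)
        + γ * H.inn w w + γ * c^2 := by
  have hn' : ((n:ℝ)) ≠ 0 := by
    exact_mod_cast Nat.pos_of_ne_zero (by omega) |>.ne'
  have hgX : ∀ l : Fin n, g (X l) = fB k n X A β (X l) + c := fun l => by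
    rw [hgx (X l), hwval l]; ring
  have hPg : empPn n X g = c := by
    have hPfB := empPn_fB (k := k) n hn X A β
    unfold empPn at hPfB ⊢
    rw [Finset.sum_congr rfl fun l (_ : l ∈ Finset.univ) => hgX l, Finset.sum_add_distrib,
      Finset.sum_const, Finset.card_univ, Fintype.card_fin, nsmul_eq_mul, mul_add, hPfB]
    field_simp
    ring
  have hLn : empLn n X T I g = empLn n X T I (fB k n X A β) := by
    have h1 : empLn n X T I g = empLn n X T I (fun x => fB k n X A β x + c) :=
      empLn_congr n X T I (fun l => by rw [hgX l])
    rw [h1, empLn_add_const n X T I hn (fB k n X A β) c]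
  have hfw : H.inn (fB k n X A β) w = 0 := by
    rw [inn_fB_left H n X A β w]
    refine Finset.sum_eq_zero fun i _ => ?_
    have h1 : H.inn (fun x => k x (X i.1)) w = 0 := by
      rw [H.inn_symm]; exact hwsec i
    have h2 : H.inn (fun _ => (1:ℝ)) w = 0 := by
      rw [H.inn_symm]; exact hwone
    rw [h1, h2]
    ring
  have hwfB : H.inn w (fB k n X A β) = 0 := by rw [H.inn_symm]; exact hfw
  have he : (fun x => g x - c) = (fun x => fB k n X A β x + w x) :=
    funext fun x => by rw [hgx x]; ring
  unfold empLnGamma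
  rw [hPg, hLn, he,
    H.inn_add_left (fB k n X A β) w (fun x => fB k n X A β x + w x),
    inn_add_right H (fB k n X A β) w (fB k n X A β),
    inn_add_right H (fB k n X A β) w w, hfw, hwfB]
  ring

theorem min_unique {dd : Type*} [Fintype dd] (m : ℝ) (hm : 0 < m)
    (f : EuclideanSpace ℝ dd → ℝ) (hsc : StrongConvexOn Set.univ m f)
    (x y : EuclideanSpace ℝ dd) (hx : ∀ z, f x ≤ f z) (hy : ∀ z, f y ≤ f z) : x = y := by
  have h := hsc.2 (Set.mem_univ x) (Set.mem_univ y)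
    (by norm_num : (0:ℝ) ≤ 1/2) (by norm_num : (0:ℝ) ≤ 1/2) (by norm_num)
  simp only [smul_eq_mul] at h
  have h1 : f x ≤ f ((1/2 : ℝ) • x + (1/2 : ℝ) • y) := hx _
  have h2 : f y ≤ f x := hy x
  have h3 : f x ≤ f y := hx y
  have hN : 0 ≤ ‖x - y‖^2 := sq_nonneg _
  have hkey : m / 2 * ‖x - y‖^2 ≤ 0 := by nlinarith
  have hprod : 0 ≤ m / 2 * ‖x - y‖^2 := by positivity
  have hzero : ‖x - y‖^2 = 0 := by
    have : m / 2 * ‖x - y‖^2 = 0 := le_antisymm hkey hprod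
    have hm2 : m / 2 ≠ 0 := by positivity
    exact (mul_eq_zero.mp this).resolve_left hm2
  have : ‖x - y‖ = 0 := by
    have := pow_eq_zero_iff (n := 2) (by norm_num) |>.mp hzero
    exact this
  have hsub : x - y = 0 := norm_eq_zero.mp this
  exact sub_eq_zero.mp hsub

end FB

end RepAux

/-- representer theorem for the penalised partial-likelihood estimator:
`β ↦ ℓ_{n,γ}(f_β)` is strongly convex on `ℝ^{𝒜_n}`; its unique minimiser `β̂` yields
`f̂_{n,γ} = f_{β̂}`, the unique minimiser of `ℓ_{n,γ}` over `𝓗`.  Here `𝒜_n` is any maximal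
subset of `[n]` such that the vectors `(‖1_𝒳‖²_𝓗, 1, …, 1)`, `(1, k(X_i,X_1), …, k(X_i,X_n))`
for `i ∈ 𝒜_n` are linearly independent in `ℝ^{n+1}`, `k̃(x,y) = k(x,y) − n^{-1}Σ_j k(X_j,y)`
and `f_β(x) = Σ_{i∈𝒜_n} k̃(x,X_i) β_i`. -/
theorem representer_theorem
    (𝒳 : Type*) [MetricSpace 𝒳] [MeasurableSpace 𝒳] [BorelSpace 𝒳]
    [LocallyCompactSpace 𝒳]
    (hσc : ∀ U : Set 𝒳, IsOpen U → IsSigmaCompact U)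
    (k : 𝒳 → 𝒳 → ℝ) (hker : IsKernel k) (hkcont : Continuous fun p : 𝒳 × 𝒳 => k p.1 p.2)
    (H : AbstractRKHS 𝒳 k) (hone : (fun _ => (1 : ℝ)) ∈ H.carrier)
    (n : ℕ) (hn : 1 ≤ n) (X : Fin n → 𝒳) (T : Fin n → ℝ) (I : Fin n → Bool)
    (hT : ∀ i, 0 < T i) (γ : ℝ) (hγ : 0 < γ)
    -- the family of vectors in `ℝ^{n+1}` indexed by `Option ↥A`
    (A : Finset (Fin n))
    (hAindep : LinearIndependent ℝ (kernelRows k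
      (H.inn (fun _ => (1 : ℝ)) (fun _ => (1 : ℝ))) n X A))
    (hAmax : ∀ B : Finset (Fin n), A ⊆ B →
      LinearIndependent ℝ (kernelRows k
        (H.inn (fun _ => (1 : ℝ)) (fun _ => (1 : ℝ))) n X B) →
      B = A) :
    -- `f_β(x) = Σ_{i ∈ 𝒜_n} k̃(x, X_i) β_i`
    letI fβ : (EuclideanSpace ℝ ↥A) → 𝒳 → ℝ := fun β x =>
      ∑ i : ↥A, (k x (X i.1) - (1 / (n : ℝ)) * ∑ j : Fin n, k (X j) (X i.1)) * β i
    letI L : EuclideanSpace ℝ ↥A → ℝ := fun β => empLnGamma H n X T I γ (fβ β)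
    (∃ m : ℝ, 0 < m ∧ StrongConvexOn Set.univ m L) ∧
    ∃ βhat : EuclideanSpace ℝ ↥A,
      (∀ β, L βhat ≤ L β) ∧
      (∀ β, (∀ β', L β ≤ L β') → β = βhat) ∧
      fβ βhat ∈ H.carrier ∧
      (∀ g ∈ H.carrier, empLnGamma H n X T I γ (fβ βhat) ≤ empLnGamma H n X T I γ g) ∧
      (∀ g ∈ H.carrier, (∀ g' ∈ H.carrier, empLnGamma H n X T I γ g ≤ empLnGamma H n X T I γ g') →
        g = fβ βhat) := by
  classical
  have hsymm := hker.1
  obtain ⟨lam, hlam, hlamb⟩ := RepAux.lam_bound H hone hsymm n X A hAindep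
  have hSC := RepAux.L_strong_convex H n X T I hn A γ lam hγ hlamb
  have hLform : ∀ β : EuclideanSpace ℝ ↥A,
      empLnGamma H n X T I γ (RepAux.fB k n X A β)
        = empLn n X T I (RepAux.fB k n X A β)
          + γ * H.inn (RepAux.fB k n X A β) (RepAux.fB k n X A β) := by
    intro β
    unfold empLnGamma
    rw [RepAux.empPn_fB (k := k) n hn X A β]
    have he : (fun x => RepAux.fB k n X A β x - 0) = RepAux.fB k n X A β :=
      funext fun x => sub_zero _
    rw [he]
    norm_num
  have hfunL : (fun β : EuclideanSpace ℝ ↥A =>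
        empLnGamma H n X T I γ (RepAux.fB k n X A β))
      = (fun β : EuclideanSpace ℝ ↥A => empLn n X T I (RepAux.fB k n X A β)
          + γ * H.inn (RepAux.fB k n X A β) (RepAux.fB k n X A β)) := funext hLform
  obtain ⟨βhat, hβhat⟩ := RepAux.exists_min H n X T I hn A γ lam hγ hlam hlamb
  have hm : 0 < 2*γ*lam := by positivity
  have hSC' : StrongConvexOn Set.univ (2*γ*lam)
      (fun β : EuclideanSpace ℝ ↥A => empLnGamma H n X T I γ (RepAux.fB k n X A β)) := by
    rw [hfunL]; exact hSC
  have hmin : ∀ β : EuclideanSpace ℝ ↥A,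
      empLnGamma H n X T I γ (RepAux.fB k n X A βhat)
        ≤ empLnGamma H n X T I γ (RepAux.fB k n X A β) := by
    intro β; rw [hLform, hLform]; exact hβhat β
  constructor
  · exact ⟨2*γ*lam, hm, hSC'⟩
  refine ⟨βhat, hmin, ?_, RepAux.fB_mem H hone n X A βhat, ?_, ?_⟩
  · intro β hβ
    exact RepAux.min_unique (2*γ*lam) hm _ hSC' β βhat hβ hmin
  · intro g hgmem
    obtain ⟨c, β₀, w, hw, hgx, hwval, hwone, hwsec⟩ :=
      RepAux.proj_decomp H hone hsymm n X A hAindep hAmax g hgmem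
    have hval' := RepAux.decomp_value H n X T I hn A γ g c β₀ w hgx hwval hwone hwsec
    rw [← hLform β₀] at hval'
    have hww : 0 ≤ H.inn w w := H.inn_nonneg w hw
    have hc2 : 0 ≤ c^2 := sq_nonneg c
    show empLnGamma H n X T I γ (RepAux.fB k n X A βhat) ≤ empLnGamma H n X T I γ g
    rw [hval']
    have h1 := hmin β₀
    nlinarith [mul_nonneg hγ.le hww, mul_nonneg hγ.le hc2]
  · intro g hgmem hgmin
    obtain ⟨c, β₀, w, hw, hgx, hwval, hwone, hwsec⟩ :=
      RepAux.proj_decomp H hone hsymm n X A hAindep hAmax g hgmem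
    have hval' := RepAux.decomp_value H n X T I hn A γ g c β₀ w hgx hwval hwone hwsec
    rw [← hLform β₀] at hval'
    have hww : 0 ≤ H.inn w w := H.inn_nonneg w hw
    have hc2 : 0 ≤ c^2 := sq_nonneg c
    have hup : empLnGamma H n X T I γ g
        ≤ empLnGamma H n X T I γ (RepAux.fB k n X A βhat) :=
      hgmin _ (RepAux.fB_mem H hone n X A βhat)
    have hlow := hmin β₀
    rw [hval'] at hup
    -- conclude that the residual vanishes
    have hzero : γ * H.inn w w + γ * c^2 = 0 := by
      have hge : 0 ≤ γ * H.inn w w + γ * c^2 := by positivity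
      nlinarith
    have hww0 : H.inn w w = 0 := by nlinarith [sq_nonneg c]
    have hc0 : c = 0 := by
      have : c^2 = 0 := by nlinarith
      exact pow_eq_zero_iff (n := 2) (by norm_num) |>.mp this
    have hwzero : w = fun _ => 0 := H.inn_definite w hw hww0
    have hgfB : g = RepAux.fB k n X A β₀ := by
      funext x
      rw [hgx x, hc0, congrFun hwzero x]
      ring
    -- β₀ is also a global minimiser
    have hEg : empLnGamma H n X T I γ g
        = empLnGamma H n X T I γ (RepAux.fB k n X A β₀) := by
      rw [hval', hww0, hc0]
      ring
    have hβ₀min : ∀ β : EuclideanSpace ℝ ↥A,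
        empLnGamma H n X T I γ (RepAux.fB k n X A β₀)
          ≤ empLnGamma H n X T I γ (RepAux.fB k n X A β) := by
      intro β
      rw [← hEg, hval']
      have h3 : γ * H.inn w w = 0 := by rw [hww0]; ring
      have h4 : γ * c^2 = 0 := by rw [hc0]; ring
      linarith [hup, hmin β]
    have hβeq : (β₀ : EuclideanSpace ℝ ↥A) = βhat :=
      RepAux.min_unique (2*γ*lam) hm _ hSC' β₀ βhat hβ₀min hmin
    show g = RepAux.fB k n X A βhat
    rw [hgfB, ← hβeq]
end

section
/- Bound on H_γ for the shifted first-order Sobolev kernel: let P_X be Lebesgue measure on 𝒳 = [0,1] and let k(x,y) = a + min(x,y) for a ≥ 0. Then for all a ≥ 0 and all γ > 0, H_γ ≤ 2 + 1/√γ. -/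
open MeasureTheory intervalIntegral

lemma ftc_exp (b p q c d lo hi : ℝ) (hb : b ≠ 0) :
    ∫ s in lo..hi, (p + q*s) * (c*Real.exp (b*s) + d*Real.exp (-(b*s))) =
      (((p+q*hi)*(c*Real.exp (b*hi) - d*Real.exp (-(b*hi))) - q*(c*Real.exp (b*hi) + d*Real.exp (-(b*hi)))/b)/b)
      - (((p+q*lo)*(c*Real.exp (b*lo) - d*Real.exp (-(b*lo))) - q*(c*Real.exp (b*lo) + d*Real.exp (-(b*lo)))/b)/b) := by
  have H : ∀ s : ℝ, HasDerivAt (fun s : ℝ =>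
      ((p+q*s)*(c*Real.exp (b*s) - d*Real.exp (-(b*s))) - q*(c*Real.exp (b*s) + d*Real.exp (-(b*s)))/b)/b)
      ((p + q*s) * (c*Real.exp (b*s) + d*Real.exp (-(b*s)))) s := by
    intro s
    have he : HasDerivAt (fun s : ℝ => Real.exp (b*s)) (Real.exp (b*s) * b) s := by
      simpa using ((hasDerivAt_id s).const_mul b).exp
    have hen : HasDerivAt (fun s : ℝ => Real.exp (-(b*s))) (Real.exp (-(b*s)) * (-b)) s := by
      simpa using (((hasDerivAt_id s).const_mul b).neg).exp
    have hlin : HasDerivAt (fun s : ℝ => p + q*s) q s := by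
      simpa using ((hasDerivAt_id s).const_mul q).const_add p
    have h1 : HasDerivAt (fun s : ℝ => c*Real.exp (b*s) - d*Real.exp (-(b*s)))
        (c*(Real.exp (b*s) * b) - d*(Real.exp (-(b*s)) * (-b))) s :=
      (he.const_mul c).sub (hen.const_mul d)
    have h2 : HasDerivAt (fun s : ℝ => c*Real.exp (b*s) + d*Real.exp (-(b*s)))
        (c*(Real.exp (b*s) * b) + d*(Real.exp (-(b*s)) * (-b))) s :=
      (he.const_mul c).add (hen.const_mul d)
    have h3 := ((hlin.mul h1).sub ((h2.const_mul q).div_const b)).div_const b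
    refine h3.congr_deriv ?_
    field_simp
    ring
  rw [intervalIntegral.integral_eq_sub_of_hasDerivAt (fun s _ => H s)]
  · exact (Continuous.intervalIntegrable (by continuity) lo hi)

noncomputable def uu (a b x t : ℝ) : ℝ :=
  if t ≤ x then
    b * (Real.exp (b*(1-x)) + Real.exp (-(b*(1-x)))) *
      ((a*b+1) * Real.exp (b*t) + (a*b-1) * Real.exp (-(b*t))) /
      (2 * ((a*b+1) * Real.exp b - (a*b-1) * Real.exp (-b)))
  else
    b * ((a*b+1) * Real.exp (b*x) + (a*b-1) * Real.exp (-(b*x))) *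
      (Real.exp (b*(1-t)) + Real.exp (-(b*(1-t)))) /
      (2 * ((a*b+1) * Real.exp b - (a*b-1) * Real.exp (-b)))

lemma D2_pos (a b : ℝ) (ha : 0 ≤ a) (hb : 0 < b) :
    0 < (a*b+1) * Real.exp b - (a*b-1) * Real.exp (-b) := by
  have h1 : Real.exp (-b) < Real.exp b := Real.exp_lt_exp.2 (by linarith)
  have h2 : 0 < Real.exp (-b) := Real.exp_pos _
  nlinarith [mul_nonneg ha hb.le]

lemma uu_cont (a b x : ℝ) : Continuous (uu a b x) := by
  unfold uu
  apply Continuous.if_le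
  · fun_prop
  · fun_prop
  · exact continuous_id
  · exact continuous_const
  · intro t ht; rw [ht]; ring

lemma uu_left (a b x s : ℝ) (h : s ≤ x) :
    uu a b x s =
      (b * (Real.exp (b*(1-x)) + Real.exp (-(b*(1-x)))) * (a*b+1) /
        (2 * ((a*b+1) * Real.exp b - (a*b-1) * Real.exp (-b)))) * Real.exp (b*s) +
      (b * (Real.exp (b*(1-x)) + Real.exp (-(b*(1-x)))) * (a*b-1) /
        (2 * ((a*b+1) * Real.exp b - (a*b-1) * Real.exp (-b)))) * Real.exp (-(b*s)) := by
  rw [uu, if_pos h]; ring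

lemma uu_right (a b x s : ℝ) (h : x ≤ s) :
    uu a b x s =
      (b * ((a*b+1) * Real.exp (b*x) + (a*b-1) * Real.exp (-(b*x))) * Real.exp (-b) /
        (2 * ((a*b+1) * Real.exp b - (a*b-1) * Real.exp (-b)))) * Real.exp (b*s) +
      (b * ((a*b+1) * Real.exp (b*x) + (a*b-1) * Real.exp (-(b*x))) * Real.exp b /
        (2 * ((a*b+1) * Real.exp b - (a*b-1) * Real.exp (-b)))) * Real.exp (-(b*s)) := by
  have key : ∀ w : ℝ, b * ((a*b+1) * Real.exp (b*x) + (a*b-1) * Real.exp (-(b*x))) *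
      (Real.exp (b*(1-w)) + Real.exp (-(b*(1-w)))) /
      (2 * ((a*b+1) * Real.exp b - (a*b-1) * Real.exp (-b))) =
      (b * ((a*b+1) * Real.exp (b*x) + (a*b-1) * Real.exp (-(b*x))) * Real.exp (-b) /
        (2 * ((a*b+1) * Real.exp b - (a*b-1) * Real.exp (-b)))) * Real.exp (b*w) +
      (b * ((a*b+1) * Real.exp (b*x) + (a*b-1) * Real.exp (-(b*x))) * Real.exp b /
        (2 * ((a*b+1) * Real.exp b - (a*b-1) * Real.exp (-b)))) * Real.exp (-(b*w)) := by
    intro w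
    rw [show b*(1-w) = b + -(b*w) by ring, show -(b + -(b*w)) = -b + b*w by ring,
      Real.exp_add, Real.exp_add]
    ring
  rw [uu]
  split_ifs with h'
  · have hsx : s = x := le_antisymm h' h
    subst hsx
    rw [← key s]
    rw [show b*(1-s) = b + -(b*s) by ring, show -(b + -(b*s)) = -b + b*s by ring,
      Real.exp_add, Real.exp_add]
    ring
  · exact key s

set_option maxHeartbeats 2000000 in
lemma uu_inteq (a b x : ℝ) (ha : 0 ≤ a) (hb : 0 < b) (hx0 : 0 ≤ x) (hx1 : x ≤ 1)
    (t : ℝ) (ht0 : 0 ≤ t) (ht1 : t ≤ 1) :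
    (1/b^2) * uu a b x t + (∫ s in (0:ℝ)..1, (a + min s t) * uu a b x s) = a + min x t := by
  have hbne : b ≠ 0 := ne_of_gt hb
  have hD2 : ((a*b+1) * Real.exp b - (a*b-1) * Real.exp (-b)) ≠ 0 := ne_of_gt (D2_pos a b ha hb)
  have hcont : Continuous fun s : ℝ => (a + min s t) * uu a b x s :=
    (continuous_const.add (continuous_id.min continuous_const)).mul (uu_cont a b x)
  have hii : ∀ lo hi : ℝ, IntervalIntegrable (fun s => (a + min s t) * uu a b x s) volume lo hi :=
    fun lo hi => hcont.intervalIntegrable lo hi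
  have hEb := Real.exp_ne_zero b
  have hEt := Real.exp_ne_zero (b*t)
  have hEx := Real.exp_ne_zero (b*x)
  have hD2' : ((a*b+1) * Real.exp b - (a*b-1) * (Real.exp b)⁻¹) ≠ 0 := by
    rw [← Real.exp_neg]; exact hD2
  rcases le_total t x with htx | hxt
  · -- t ≤ x
    have split1 : (∫ s in (0:ℝ)..t, (a + min s t) * uu a b x s)
        + (∫ s in t..x, (a + min s t) * uu a b x s)
        = ∫ s in (0:ℝ)..x, (a + min s t) * uu a b x s :=
      integral_add_adjacent_intervals (hii 0 t) (hii t x)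
    have split2 : (∫ s in (0:ℝ)..x, (a + min s t) * uu a b x s)
        + (∫ s in x..(1:ℝ), (a + min s t) * uu a b x s)
        = ∫ s in (0:ℝ)..(1:ℝ), (a + min s t) * uu a b x s :=
      integral_add_adjacent_intervals (hii 0 x) (hii x 1)
    rw [← split2, ← split1]
    have I1 : (∫ s in (0:ℝ)..t, (a + min s t) * uu a b x s)
        = ∫ s in (0:ℝ)..t, (a + 1*s) *
          ((b * (Real.exp (b*(1-x)) + Real.exp (-(b*(1-x)))) * (a*b+1) /
            (2 * ((a*b+1) * Real.exp b - (a*b-1) * Real.exp (-b)))) * Real.exp (b*s) +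
          (b * (Real.exp (b*(1-x)) + Real.exp (-(b*(1-x)))) * (a*b-1) /
            (2 * ((a*b+1) * Real.exp b - (a*b-1) * Real.exp (-b)))) * Real.exp (-(b*s))) := by
      apply intervalIntegral.integral_congr
      intro s hs
      dsimp only
      rw [Set.uIcc_of_le ht0] at hs
      rw [min_eq_left hs.2, uu_left a b x s (hs.2.trans htx)]
      ring
    have I2 : (∫ s in t..x, (a + min s t) * uu a b x s)
        = ∫ s in t..x, ((a+t) + 0*s) *
          ((b * (Real.exp (b*(1-x)) + Real.exp (-(b*(1-x)))) * (a*b+1) /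
            (2 * ((a*b+1) * Real.exp b - (a*b-1) * Real.exp (-b)))) * Real.exp (b*s) +
          (b * (Real.exp (b*(1-x)) + Real.exp (-(b*(1-x)))) * (a*b-1) /
            (2 * ((a*b+1) * Real.exp b - (a*b-1) * Real.exp (-b)))) * Real.exp (-(b*s))) := by
      apply intervalIntegral.integral_congr
      intro s hs
      dsimp only
      rw [Set.uIcc_of_le htx] at hs
      rw [min_eq_right hs.1, uu_left a b x s hs.2]
      ring
    have I3 : (∫ s in x..(1:ℝ), (a + min s t) * uu a b x s)
        = ∫ s in x..(1:ℝ), ((a+t) + 0*s) *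
          ((b * ((a*b+1) * Real.exp (b*x) + (a*b-1) * Real.exp (-(b*x))) * Real.exp (-b) /
            (2 * ((a*b+1) * Real.exp b - (a*b-1) * Real.exp (-b)))) * Real.exp (b*s) +
          (b * ((a*b+1) * Real.exp (b*x) + (a*b-1) * Real.exp (-(b*x))) * Real.exp b /
            (2 * ((a*b+1) * Real.exp b - (a*b-1) * Real.exp (-b)))) * Real.exp (-(b*s))) := by
      apply intervalIntegral.integral_congr
      intro s hs
      dsimp only
      rw [Set.uIcc_of_le hx1] at hs
      rw [min_eq_right (htx.trans hs.1), uu_right a b x s hs.1]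
      ring
    rw [I1, I2, I3, ftc_exp _ _ _ _ _ _ _ hbne, ftc_exp _ _ _ _ _ _ _ hbne,
      ftc_exp _ _ _ _ _ _ _ hbne, min_eq_right htx, uu_left a b x t htx]
    rw [show b*(1-x) = b + -(b*x) by ring, show -(b + -(b*x)) = -b + b*x by ring,
      Real.exp_add, Real.exp_add]
    simp only [mul_zero, mul_one, neg_zero, Real.exp_zero]
    simp only [Real.exp_neg]
    have hD3 : 1 - b * a + b * a * Real.exp b ^ 2 + Real.exp b ^ 2 ≠ 0 := by
      intro h; apply hD2'; field_simp; linear_combination h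
    have hD4 : 1 + b * Real.exp b ^ 2 * a - b * a + Real.exp b ^ 2 ≠ 0 := by
      intro h; apply hD2'; field_simp; linear_combination h
    field_simp
    ring_nf
    field_simp
    ring
  · -- x ≤ t
    have split1 : (∫ s in (0:ℝ)..x, (a + min s t) * uu a b x s)
        + (∫ s in x..t, (a + min s t) * uu a b x s)
        = ∫ s in (0:ℝ)..t, (a + min s t) * uu a b x s :=
      integral_add_adjacent_intervals (hii 0 x) (hii x t)
    have split2 : (∫ s in (0:ℝ)..t, (a + min s t) * uu a b x s)
        + (∫ s in t..(1:ℝ), (a + min s t) * uu a b x s)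
        = ∫ s in (0:ℝ)..(1:ℝ), (a + min s t) * uu a b x s :=
      integral_add_adjacent_intervals (hii 0 t) (hii t 1)
    rw [← split2, ← split1]
    have I1 : (∫ s in (0:ℝ)..x, (a + min s t) * uu a b x s)
        = ∫ s in (0:ℝ)..x, (a + 1*s) *
          ((b * (Real.exp (b*(1-x)) + Real.exp (-(b*(1-x)))) * (a*b+1) /
            (2 * ((a*b+1) * Real.exp b - (a*b-1) * Real.exp (-b)))) * Real.exp (b*s) +
          (b * (Real.exp (b*(1-x)) + Real.exp (-(b*(1-x)))) * (a*b-1) /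
            (2 * ((a*b+1) * Real.exp b - (a*b-1) * Real.exp (-b)))) * Real.exp (-(b*s))) := by
      apply intervalIntegral.integral_congr
      intro s hs
      dsimp only
      rw [Set.uIcc_of_le hx0] at hs
      rw [min_eq_left (hs.2.trans hxt), uu_left a b x s hs.2]
      ring
    have I2 : (∫ s in x..t, (a + min s t) * uu a b x s)
        = ∫ s in x..t, (a + 1*s) *
          ((b * ((a*b+1) * Real.exp (b*x) + (a*b-1) * Real.exp (-(b*x))) * Real.exp (-b) /
            (2 * ((a*b+1) * Real.exp b - (a*b-1) * Real.exp (-b)))) * Real.exp (b*s) +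
          (b * ((a*b+1) * Real.exp (b*x) + (a*b-1) * Real.exp (-(b*x))) * Real.exp b /
            (2 * ((a*b+1) * Real.exp b - (a*b-1) * Real.exp (-b)))) * Real.exp (-(b*s))) := by
      apply intervalIntegral.integral_congr
      intro s hs
      dsimp only
      rw [Set.uIcc_of_le hxt] at hs
      rw [min_eq_left hs.2, uu_right a b x s hs.1]
      ring
    have I3 : (∫ s in t..(1:ℝ), (a + min s t) * uu a b x s)
        = ∫ s in t..(1:ℝ), ((a+t) + 0*s) *
          ((b * ((a*b+1) * Real.exp (b*x) + (a*b-1) * Real.exp (-(b*x))) * Real.exp (-b) /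
            (2 * ((a*b+1) * Real.exp b - (a*b-1) * Real.exp (-b)))) * Real.exp (b*s) +
          (b * ((a*b+1) * Real.exp (b*x) + (a*b-1) * Real.exp (-(b*x))) * Real.exp b /
            (2 * ((a*b+1) * Real.exp b - (a*b-1) * Real.exp (-b)))) * Real.exp (-(b*s))) := by
      apply intervalIntegral.integral_congr
      intro s hs
      dsimp only
      rw [Set.uIcc_of_le ht1] at hs
      rw [min_eq_right hs.1, uu_right a b x s (hxt.trans hs.1)]
      ring
    rw [I1, I2, I3, ftc_exp _ _ _ _ _ _ _ hbne, ftc_exp _ _ _ _ _ _ _ hbne,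
      ftc_exp _ _ _ _ _ _ _ hbne, min_eq_left hxt, uu_right a b x t hxt]
    rw [show b*(1-x) = b + -(b*x) by ring, show -(b + -(b*x)) = -b + b*x by ring,
      Real.exp_add, Real.exp_add]
    simp only [mul_zero, mul_one, neg_zero, Real.exp_zero]
    simp only [Real.exp_neg]
    have hD3 : 1 - b * a + b * a * Real.exp b ^ 2 + Real.exp b ^ 2 ≠ 0 := by
      intro h; apply hD2'; field_simp; linear_combination h
    have hD4 : 1 + b * Real.exp b ^ 2 * a - b * a + Real.exp b ^ 2 ≠ 0 := by
      intro h; apply hD2'; field_simp; linear_combination h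
    have hD5 : 1 + Real.exp b ^ 2 + Real.exp b ^ 2 * a * b - a * b ≠ 0 := by
      intro h; apply hD2'; field_simp; linear_combination h
    field_simp
    ring_nf
    field_simp
    linear_combination (x + a) * mul_inv_cancel₀ hD5

lemma uu_self_le (a b x : ℝ) (ha : 0 ≤ a) (hb : 0 < b) (hx0 : 0 ≤ x) (hx1 : x ≤ 1) :
    uu a b x x ≤ 1 + b := by
  have hX1 : (1:ℝ) ≤ Real.exp (b*x) := Real.one_le_exp (by positivity)
  have hY1 : (1:ℝ) ≤ Real.exp (b*(1-x)) := Real.one_le_exp (mul_nonneg hb.le (by linarith))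
  have hXY : Real.exp (b*x) * Real.exp (b*(1-x)) = Real.exp b := by
    rw [← Real.exp_add]; ring_nf
  set X := Real.exp (b*x) with hXdef
  set Y := Real.exp (b*(1-x)) with hYdef
  have hXpos : 0 < X := Real.exp_pos _
  have hYpos : 0 < Y := Real.exp_pos _
  have hab : 0 ≤ a*b := mul_nonneg ha hb.le
  have hW : 1 + 2*b ≤ X^2*Y^2 := by
    have h := Real.add_one_le_exp (2*b)
    have h2 : X^2*Y^2 = Real.exp (2*b) := by
      rw [hXdef, hYdef, sq, sq, ← Real.exp_add, ← Real.exp_add, ← Real.exp_add]; ring_nf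
    rw [h2]; linarith
  have hDpos : 0 < (a*b+1) * (X^2*Y^2) - (a*b-1) := by nlinarith
  have h1 : uu a b x x = b*((Y^2+1)*((a*b+1)*X^2+(a*b-1))) /
      (2*((a*b+1)*(X^2*Y^2)-(a*b-1))) := by
    rw [uu, if_pos le_rfl]
    simp only [Real.exp_neg, ← hXdef, ← hYdef]
    rw [← hXY]
    have hden : ((a*b+1)*(X*Y) - (a*b-1)*(X*Y)⁻¹) = ((a*b+1)*(X^2*Y^2) - (a*b-1))/(X*Y) := by
      field_simp
    have hden2 : (0:ℝ) < (a*b+1)*(X*Y) - (a*b-1)*(X*Y)⁻¹ := by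
      rw [hden]; exact div_pos hDpos (by positivity)
    rw [div_eq_div_iff (by linarith : (0:ℝ) < 2*((a*b+1)*(X*Y) - (a*b-1)*(X*Y)⁻¹)).ne' (by positivity : (0:ℝ) < 2*((a*b+1)*(X^2*Y^2)-(a*b-1))).ne']
    field_simp
  rw [h1, div_le_iff₀ (by positivity)]
  have hP : (0:ℝ) ≤ a*b+1 := by linarith
  have hWp : (0:ℝ) ≤ X^2*Y^2 - 1 - 2*b := by linarith
  have hX2 : (0:ℝ) ≤ X^2 - 1 := by nlinarith
  have hY2' : (0:ℝ) ≤ Y^2 - 1 := by nlinarith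
  have hcs : (0:ℝ) ≤ (Y^2-1)*(X^2*Y^2-Y^2) := by
    nlinarith [mul_nonneg hY2' (mul_nonneg (sq_nonneg Y) hX2)]
  have t1 : (0:ℝ) ≤ (a*b+1) * (Y^2 * (X^2*Y^2-1-2*b)) :=
    mul_nonneg hP (mul_nonneg (sq_nonneg Y) hWp)
  have t2 : (0:ℝ) ≤ (a*b+1) * (b * ((Y^2-1)*(X^2*Y^2-Y^2))) :=
    mul_nonneg hP (mul_nonneg hb.le hcs)
  have t3 : (0:ℝ) ≤ 2*Y^2*(2+3*b+b*Y^2) := by positivity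
  have hTS : 0 ≤ ((1+b) * (2*((a*b+1)*(X^2*Y^2)-(a*b-1))) -
      b*((Y^2+1)*((a*b+1)*X^2+(a*b-1)))) * Y^2 := by nlinarith [t1, t2, t3]
  have hY2 : (0:ℝ) < Y^2 := by positivity
  nlinarith [hTS, hY2]

/-- bound on `H_γ` for the shifted first-order Sobolev kernel.  Let `P_X` be
Lebesgue measure on `𝒳 = [0,1]` and `k(x,y) = a + min(x,y)` for `a ≥ 0`.  Then for every
`γ > 0`, `H_γ = sup_x Σ_r a_r e_r(x)² ≤ 2 + 1/√γ`, where `(ν_r, e_r)` is any Mercer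
eigendecomposition of `k` in `L₂(P_X)` and `a_r = 1/(1+γ/ν_r)`. -/
theorem sobolev_kernel_Hgamma_bound
    (P : Measure ↥(Set.Icc (0 : ℝ) 1))
    (hP : ∀ s : Set ↥(Set.Icc (0 : ℝ) 1), MeasurableSet s →
      P s = MeasureTheory.volume (Subtype.val '' s))
    (a : ℝ) (ha : 0 ≤ a)
    (R : Type*) [Countable R] (ν : R → ℝ) (e : R → ↥(Set.Icc (0 : ℝ) 1) → ℝ)
    (hν : ∀ r, 0 < ν r) (hνsum : Summable ν)
    (hecont : ∀ r, Continuous (e r))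
    (horth_one : ∀ r, ∫ x, e r x * e r x ∂P = 1)
    (horth : ∀ r r', r ≠ r' → ∫ x, e r x * e r' x ∂P = 0)
    (heig : ∀ r (y : ↥(Set.Icc (0 : ℝ) 1)),
      ∫ x, (a + min (x : ℝ) (y : ℝ)) * e r x ∂P = ν r * e r y)
    (hmercer : ∀ x y : ↥(Set.Icc (0 : ℝ) 1),
      a + min (x : ℝ) (y : ℝ) = ∑' r : R, ν r * e r x * e r y)
    (γ : ℝ) (hγ : 0 < γ) :
    ∀ x : ↥(Set.Icc (0 : ℝ) 1),
      ∑' r : R, ENNReal.ofReal ((1 / (1 + γ / ν r)) * (e r x) ^ 2)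
        ≤ ENNReal.ofReal (2 + 1 / Real.sqrt γ) := by
  intro x
  -- basic setup
  have hprob : IsProbabilityMeasure P := by
    constructor
    rw [hP _ MeasurableSet.univ, Set.image_univ, Subtype.range_coe, Real.volume_Icc]
    norm_num
  have hmapP : P.map Subtype.val = volume.restrict (Set.Icc (0:ℝ) 1) := by
    ext s hs
    rw [Measure.map_apply measurable_subtype_coe hs, hP _ (measurable_subtype_coe hs),
      Measure.restrict_apply hs, Subtype.image_preimage_coe, Set.inter_comm]
  have htransfer : ∀ F : ℝ → ℝ, Continuous F →
      ∫ z, F ↑z ∂P = ∫ s in (0:ℝ)..1, F s := by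
    intro F hF
    rw [intervalIntegral.integral_of_le zero_le_one, ← integral_Icc_eq_integral_Ioc,
      ← hmapP, integral_map measurable_subtype_coe.aemeasurable hF.aestronglyMeasurable]
  have hintg : ∀ g : ↥(Set.Icc (0:ℝ) 1) → ℝ, Continuous g → Integrable g P := by
    intro g hg
    exact hg.integrable_of_hasCompactSupport (HasCompactSupport.of_compactSpace g)
  have hx0 : (0:ℝ) ≤ ↑x := x.2.1
  have hx1 : (↑x:ℝ) ≤ 1 := x.2.2
  by_cases hpos : 0 < a + ↑x
  swap
  · -- degenerate case : a = 0 and x = 0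
    have ha0 : a = 0 := by linarith [le_of_not_gt hpos, hx0]
    have hxx : (↑x:ℝ) = 0 := by linarith [le_of_not_gt hpos, hx0]
    have hzero : ∀ r, e r x = 0 := by
      intro r
      have h0 : ∀ s : ↥(Set.Icc (0:ℝ) 1), (a + min (↑s:ℝ) (↑x:ℝ)) * e r s = 0 := by
        intro s
        rw [ha0, hxx, min_eq_right s.2.1]
        ring
      have h1 : ν r * e r x = 0 := by
        rw [← heig r x]
        simp only [h0]
        exact integral_zero _ _
      rcases mul_eq_zero.1 h1 with h | h
      · exact absurd h (hν r).ne'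
      · exact h
    simp only [hzero]
    simp
  -- main case
  set b : ℝ := (Real.sqrt γ)⁻¹ with hbdef
  have hsγ : 0 < Real.sqrt γ := Real.sqrt_pos.2 hγ
  have hb : 0 < b := inv_pos.2 hsγ
  have hγb : γ = 1/b^2 := by
    rw [hbdef]
    rw [one_div, inv_pow, inv_inv, Real.sq_sqrt hγ.le]
  have hγb' : (1:ℝ)/b^2 = γ := hγb.symm
  have hUc : Continuous fun t : ↥(Set.Icc (0:ℝ) 1) => uu a b ↑x ↑t :=
    (uu_cont a b ↑x).comp continuous_subtype_val
  -- the integral equation on P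
  have hIE : ∀ t : ↥(Set.Icc (0:ℝ) 1),
      γ * uu a b ↑x ↑t + (∫ s, (a + min (↑s:ℝ) (↑t:ℝ)) * uu a b ↑x ↑s ∂P)
        = a + min ↑x ↑t := by
    intro t
    have hc : Continuous fun s : ℝ => (a + min s ↑t) * uu a b ↑x s :=
      (continuous_const.add (continuous_id.min continuous_const)).mul (uu_cont a b ↑x)
    have := htransfer (fun s => (a + min s ↑t) * uu a b ↑x s) hc
    rw [this, ← hγb']
    exact uu_inteq a b ↑x ha hb hx0 hx1 ↑t t.2.1 t.2.2
  have hinner : ∀ t : ↥(Set.Icc (0:ℝ) 1),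
      (∫ s, (a + min (↑s:ℝ) (↑t:ℝ)) * uu a b ↑x ↑s ∂P)
        = a + min ↑x ↑t - γ * uu a b ↑x ↑t := by
    intro t; linarith [hIE t]
  -- inner products with eigenfunctions
  have hip : ∀ r, (∫ s, e r s * uu a b ↑x ↑s ∂P) = ν r * e r x / (ν r + γ) := by
    intro r
    have hνγ : 0 < ν r + γ := by linarith [hν r]
    -- Fubini
    have hcprod : Continuous fun p : ↥(Set.Icc (0:ℝ) 1) × ↥(Set.Icc (0:ℝ) 1) =>
        e r p.1 * ((a + min (↑p.2:ℝ) (↑p.1:ℝ)) * uu a b ↑x ↑p.2) := by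
      apply Continuous.mul ((hecont r).comp continuous_fst)
      apply Continuous.mul
      · exact continuous_const.add ((continuous_subtype_val.comp continuous_snd).min
          (continuous_subtype_val.comp continuous_fst))
      · exact (uu_cont a b ↑x).comp (continuous_subtype_val.comp continuous_snd)
    have hFint : Integrable
        (Function.uncurry fun t s : ↥(Set.Icc (0:ℝ) 1) =>
          e r t * ((a + min (↑s:ℝ) (↑t:ℝ)) * uu a b ↑x ↑s)) (P.prod P) :=
      hcprod.integrable_of_hasCompactSupport (HasCompactSupport.of_compactSpace _)
    have hswap := integral_integral_swap hFint
    -- evaluate the right side of Fubini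
    have hR : (∫ s, (∫ t, e r t * ((a + min (↑s:ℝ) (↑t:ℝ)) * uu a b ↑x ↑s) ∂P) ∂P)
        = ν r * ∫ s, e r s * uu a b ↑x ↑s ∂P := by
      have h1 : ∀ s : ↥(Set.Icc (0:ℝ) 1),
          (∫ t, e r t * ((a + min (↑s:ℝ) (↑t:ℝ)) * uu a b ↑x ↑s) ∂P)
            = uu a b ↑x ↑s * (ν r * e r s) := by
        intro s
        have : (fun t : ↥(Set.Icc (0:ℝ) 1) => e r t * ((a + min (↑s:ℝ) (↑t:ℝ)) * uu a b ↑x ↑s))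
            = fun t : ↥(Set.Icc (0:ℝ) 1) => uu a b ↑x ↑s * ((a + min (↑t:ℝ) (↑s:ℝ)) * e r t) := by
          funext t; rw [min_comm]; ring
        rw [this, MeasureTheory.integral_const_mul, heig r s]
      calc (∫ s, (∫ t, e r t * ((a + min (↑s:ℝ) (↑t:ℝ)) * uu a b ↑x ↑s) ∂P) ∂P)
          = ∫ s, ν r * (e r s * uu a b ↑x ↑s) ∂P := by
            apply MeasureTheory.integral_congr_ae
            filter_upwards with s
            rw [h1 s]; ring
        _ = ν r * ∫ s, e r s * uu a b ↑x ↑s ∂P := MeasureTheory.integral_const_mul _ _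
    -- evaluate the left side of Fubini
    have hL : (∫ t, (∫ s, e r t * ((a + min (↑s:ℝ) (↑t:ℝ)) * uu a b ↑x ↑s) ∂P) ∂P)
        = ν r * e r x - γ * ∫ s, e r s * uu a b ↑x ↑s ∂P := by
      have h1 : ∀ t : ↥(Set.Icc (0:ℝ) 1),
          (∫ s, e r t * ((a + min (↑s:ℝ) (↑t:ℝ)) * uu a b ↑x ↑s) ∂P)
            = e r t * (a + min ↑x ↑t) - γ * (e r t * uu a b ↑x ↑t) := by
        intro t
        rw [MeasureTheory.integral_const_mul, hinner t]
        ring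
      rw [MeasureTheory.integral_congr_ae (Filter.Eventually.of_forall h1)]
      have hint1 : Integrable (fun t : ↥(Set.Icc (0:ℝ) 1) => e r t * (a + min ↑x ↑t)) P := by
        apply hintg
        exact (hecont r).mul (continuous_const.add (continuous_const.min continuous_subtype_val))
      have hint2 : Integrable (fun t : ↥(Set.Icc (0:ℝ) 1) => γ * (e r t * uu a b ↑x ↑t)) P := by
        apply hintg
        exact continuous_const.mul ((hecont r).mul hUc)
      rw [integral_sub hint1 hint2, MeasureTheory.integral_const_mul]
      congr 1
      have h2 : (fun t : ↥(Set.Icc (0:ℝ) 1) => e r t * (a + min (↑x:ℝ) (↑t:ℝ)))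
          = fun t : ↥(Set.Icc (0:ℝ) 1) => (a + min (↑t:ℝ) (↑x:ℝ)) * e r t := by
        funext t; rw [min_comm]; ring
      rw [h2, heig r x]
    rw [hR, hL] at hswap
    have : (ν r + γ) * (∫ s, e r s * uu a b ↑x ↑s ∂P) = ν r * e r x := by linarith
    rw [eq_div_iff hνγ.ne']
    linarith
  -- Mercer at (x,x) and summability
  have key0 : (∑' r, ν r * e r x * e r x) = a + ↑x := by
    have := hmercer x x
    rw [min_self] at this
    exact this.symm
  have htermnn : ∀ r, 0 ≤ ν r * e r x * e r x := by
    intro r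
    rw [mul_assoc]
    exact mul_nonneg (hν r).le (mul_self_nonneg _)
  have hsummx : Summable fun r => ν r * e r x * e r x := by
    by_contra hns
    rw [tsum_eq_zero_of_not_summable hns] at key0
    linarith
  -- bound on uu
  obtain ⟨M, hM⟩ := isCompact_univ.exists_bound_of_continuousOn
    (hUc.continuousOn : ContinuousOn (fun t : ↥(Set.Icc (0:ℝ) 1) => uu a b ↑x ↑t) Set.univ)
  have hM' : ∀ t : ↥(Set.Icc (0:ℝ) 1), |uu a b ↑x ↑t| ≤ M := by
    intro t
    simpa using hM t (Set.mem_univ t)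
  have hMnn : 0 ≤ M := le_trans (abs_nonneg _) (hM' x)
  -- ∫ |e r| ≤ 1
  have habs : ∀ r, (∫ s, |e r s| ∂P) ≤ 1 := by
    intro r
    have hpt : ∀ s : ↥(Set.Icc (0:ℝ) 1), |e r s| ≤ (1 + e r s * e r s)/2 := by
      intro s
      nlinarith [sq_nonneg (|e r s| - 1), sq_abs (e r s), abs_nonneg (e r s)]
    have hi1 : Integrable (fun s : ↥(Set.Icc (0:ℝ) 1) => |e r s|) P :=
      (hintg _ (hecont r)).abs
    have hi2 : Integrable (fun s : ↥(Set.Icc (0:ℝ) 1) => (1 + e r s * e r s)/2) P := by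
      apply hintg
      exact (continuous_const.add ((hecont r).mul (hecont r))).div_const 2
    calc (∫ s, |e r s| ∂P) ≤ ∫ s, (1 + e r s * e r s)/2 ∂P := integral_mono hi1 hi2 hpt
      _ = (∫ s, (1 + e r s * e r s) ∂P)/2 := integral_div 2 _
      _ = ((∫ _, (1:ℝ) ∂P) + ∫ s, e r s * e r s ∂P)/2 := by
          rw [integral_add (integrable_const 1) (hintg (fun s => e r s * e r s) ((hecont r).mul (hecont r)))]
      _ ≤ 1 := by
          rw [horth_one r, MeasureTheory.integral_const, probReal_univ]
          norm_num
  -- the tsum/integral swap via Mercer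
  have hsummabs : Summable fun r => ν r * |e r x| * M := by
    apply Summable.of_nonneg_of_le
      (fun r => mul_nonneg (mul_nonneg (hν r).le (abs_nonneg _)) hMnn)
      (fun r => ?_) (((hνsum.add hsummx).div_const 2).mul_right M)
    have h2 : ν r * |e r x| ≤ (ν r + ν r * e r x * e r x)/2 := by
      nlinarith [sq_nonneg (|e r x| - 1), sq_abs (e r x), (hν r).le, abs_nonneg (e r x),
        mul_nonneg (hν r).le (sq_nonneg (|e r x| - 1))]
    exact mul_le_mul_of_nonneg_right h2 hMnn
  have hJ : (∫ s, (a + min (↑s:ℝ) (↑x:ℝ)) * uu a b ↑x ↑s ∂P)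
      = ∑' r, (ν r * e r x) * (ν r * e r x / (ν r + γ)) := by
    have hpt : ∀ s : ↥(Set.Icc (0:ℝ) 1),
        (a + min (↑s:ℝ) (↑x:ℝ)) * uu a b ↑x ↑s
          = ∑' r, (ν r * e r x) * (e r s * uu a b ↑x ↑s) := by
      intro s
      rw [hmercer s x, ← tsum_mul_right]
      congr 1
      funext r
      ring
    rw [MeasureTheory.integral_congr_ae (Filter.Eventually.of_forall hpt)]
    rw [← integral_tsum_of_summable_integral_norm]
    · congr 1
      funext r
      rw [MeasureTheory.integral_const_mul, hip r]
    · intro r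
      apply hintg
      exact continuous_const.mul ((hecont r).mul hUc)
    · -- summability of integrals of norms
      apply Summable.of_nonneg_of_le (fun r => integral_nonneg fun s => norm_nonneg _)
        (fun r => ?_) hsummabs
      have hb1 : ∀ s : ↥(Set.Icc (0:ℝ) 1),
          ‖(ν r * e r x) * (e r s * uu a b ↑x ↑s)‖ ≤ (ν r * |e r x| * M) * |e r s| := by
        intro s
        rw [Real.norm_eq_abs, abs_mul, abs_mul, abs_mul, abs_of_pos (hν r)]
        have h1 : |e r s| * |uu a b ↑x ↑s| ≤ |e r s| * M :=
          mul_le_mul_of_nonneg_left (hM' s) (abs_nonneg _)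
        nlinarith [abs_nonneg (e r x), abs_nonneg (e r s), (hν r).le,
          mul_nonneg (mul_nonneg (hν r).le (abs_nonneg (e r x))) (abs_nonneg (e r s)),
          mul_le_mul_of_nonneg_left h1 (mul_nonneg (hν r).le (abs_nonneg (e r x)))]
      calc (∫ s, ‖(ν r * e r x) * (e r s * uu a b ↑x ↑s)‖ ∂P)
          ≤ ∫ s, (ν r * |e r x| * M) * |e r s| ∂P := by
            apply integral_mono _ _ hb1
            · exact ((hintg _ (continuous_const.mul ((hecont r).mul hUc)))).norm
            · exact ((hintg _ (hecont r)).abs).const_mul _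
        _ = (ν r * |e r x| * M) * ∫ s, |e r s| ∂P := MeasureTheory.integral_const_mul _ _
        _ ≤ (ν r * |e r x| * M) * 1 := by
            apply mul_le_mul_of_nonneg_left (habs r)
            exact mul_nonneg (mul_nonneg (hν r).le (abs_nonneg _)) hMnn
        _ = ν r * |e r x| * M := mul_one _
  -- conclude : the sum equals uu a b x x
  have hsq : Summable fun r => (ν r * e r x) * (ν r * e r x / (ν r + γ)) := by
    have h3 : ∀ r, (ν r * e r x) * (ν r * e r x / (ν r + γ))
        = (ν r * e r x * e r x) * (ν r / (ν r + γ)) := by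
      intro r; ring
    apply Summable.of_nonneg_of_le (fun r => ?_) (fun r => ?_) hsummx
    · have hνγ : 0 < ν r + γ := by linarith [hν r]
      rw [h3 r]
      exact mul_nonneg (htermnn r) (div_nonneg (hν r).le hνγ.le)
    · have hνγ : 0 < ν r + γ := by linarith [hν r]
      rw [h3 r]
      have hq : ν r / (ν r + γ) ≤ 1 := (div_le_one hνγ).2 (by linarith)
      simpa using mul_le_mul_of_nonneg_left hq (htermnn r)
  have hfinal : (∑' r, ν r / (ν r + γ) * (e r x)^2) = uu a b ↑x ↑x := by
    have hIEx := hinner x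
    rw [min_self] at hIEx
    rw [hJ] at hIEx
    have hclaim : ∀ r, ν r / (ν r + γ) * (e r x)^2
        = (1/γ) * (ν r * e r x * e r x - (ν r * e r x) * (ν r * e r x / (ν r + γ))) := by
      intro r
      have hνγ : 0 < ν r + γ := by linarith [hν r]
      field_simp
      ring
    rw [tsum_congr hclaim, tsum_mul_left, Summable.tsum_sub hsummx hsq, key0]
    rw [hIEx]
    field_simp
    ring
  -- final ENNReal manipulation
  have hterm_eq : ∀ r, (1 / (1 + γ / ν r)) * (e r x) ^ 2 = ν r / (ν r + γ) * (e r x)^2 := by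
    intro r
    congr 1
    have h1 : 1 + γ / ν r = (ν r + γ)/ν r := by
      field_simp [(hν r).ne']
    rw [h1, one_div_div]
  have hcnn : ∀ r, 0 ≤ ν r / (ν r + γ) * (e r x)^2 := by
    intro r
    have hνγ : 0 < ν r + γ := by linarith [hν r]
    exact mul_nonneg (div_nonneg (hν r).le hνγ.le) (sq_nonneg _)
  have hsumc : Summable fun r => ν r / (ν r + γ) * (e r x)^2 := by
    apply Summable.of_nonneg_of_le hcnn (fun r => ?_) (hsummx.mul_left (1/γ))
    have hνγ : 0 < ν r + γ := by linarith [hν r]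
    have hq : ν r / (ν r + γ) ≤ ν r / γ := by
      rw [div_le_div_iff₀ (by linarith [hν r]) hγ]
      nlinarith [sq_nonneg (ν r), (hν r).le, hγ.le]
    calc ν r / (ν r + γ) * (e r x)^2 ≤ ν r / γ * (e r x)^2 :=
          mul_le_mul_of_nonneg_right hq (sq_nonneg _)
      _ = 1/γ * (ν r * e r x * e r x) := by
          field_simp
  calc (∑' r, ENNReal.ofReal ((1 / (1 + γ / ν r)) * (e r x) ^ 2))
      = ∑' r, ENNReal.ofReal (ν r / (ν r + γ) * (e r x)^2) := by
        apply tsum_congr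
        intro r
        rw [hterm_eq r]
    _ = ENNReal.ofReal (∑' r, ν r / (ν r + γ) * (e r x)^2) :=
        (ENNReal.ofReal_tsum_of_nonneg hcnn hsumc).symm
    _ ≤ ENNReal.ofReal (2 + 1 / Real.sqrt γ) := by
        apply ENNReal.ofReal_le_ofReal
        rw [hfinal]
        have := uu_self_le a b ↑x ha hb hx0 hx1
        have hbeq : 1 / Real.sqrt γ = b := by rw [hbdef, one_div]
        linarith
end

section
/- Characterisation of the RKHS norm of the constant function: membership 1_𝒳 ∈ 𝓗 holds if and only if κ_k := inf_{n∈ℕ} inf_{x_1,…,x_n∈𝒳} κ(K(x_1,…,x_n)) > 0, in which case ‖1_𝒳‖_𝓗² = 1/κ_k, where K(x_1,…,x_n) ∈ ℝ^{n×n} is the matrix with (i,j) entry k(x_i,x_j). -/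
open MeasureTheory

/-- An abstract axiomatisation of the (unique) reproducing kernel Hilbert space of a
kernel `k`: a complete inner-product space of real-valued functions on `X` containing the
kernel sections and satisfying the reproducing property. -/
structure RKHS' (X : Type*) (k : X → X → ℝ) where
  carrier : Set (X → ℝ)
  inn : (X → ℝ) → (X → ℝ) → ℝ
  zero_mem : (fun _ => (0 : ℝ)) ∈ carrier
  add_mem : ∀ f ∈ carrier, ∀ g ∈ carrier, (fun x => f x + g x) ∈ carrier
  smul_mem : ∀ (c : ℝ), ∀ f ∈ carrier, (fun x => c * f x) ∈ carrier
  inn_symm : ∀ f g, inn f g = inn g f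
  inn_add_left : ∀ f g h, inn (fun x => f x + g x) h = inn f h + inn g h
  inn_smul_left : ∀ (c : ℝ) (f g), inn (fun x => c * f x) g = c * inn f g
  inn_nonneg : ∀ f ∈ carrier, 0 ≤ inn f f
  inn_definite : ∀ f ∈ carrier, inn f f = 0 → f = fun _ => 0
  kernel_mem : ∀ x, (fun y => k y x) ∈ carrier
  reproducing : ∀ f ∈ carrier, ∀ x, inn f (fun y => k y x) = f x
  complete : ∀ f : ℕ → X → ℝ, (∀ m, f m ∈ carrier) →
    (∀ ε : ℝ, 0 < ε → ∃ N : ℕ, ∀ m ≥ N, ∀ l ≥ N,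
      inn (fun x => f m x - f l x) (fun x => f m x - f l x) < ε) →
    ∃ g ∈ carrier, ∀ ε : ℝ, 0 < ε → ∃ N : ℕ, ∀ m ≥ N,
      inn (fun x => f m x - g x) (fun x => f m x - g x) < ε

/-- `κ(A) = lim_{δ↘0} 1/(1ₙᵀ (A + δIₙ)⁻¹ 1ₙ)` for a square matrix `A`. -/
noncomputable def kappa {n : ℕ} (A : Matrix (Fin n) (Fin n) ℝ) : ℝ :=
  Filter.limUnder (nhdsWithin (0 : ℝ) (Set.Ioi 0))
    (fun δ => (∑ i : Fin n, ∑ j : Fin n,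
      (A + δ • (1 : Matrix (Fin n) (Fin n) ℝ))⁻¹ i j)⁻¹)


open Matrix Set Filter

namespace KappaAux

variable {m : ℕ}

def ov (m : ℕ) : Fin m → ℝ := fun _ => 1

lemma smul_one_posDef {δ : ℝ} (hδ : 0 < δ) : (δ • (1 : Matrix (Fin m) (Fin m) ℝ)).PosDef := by
  rw [Matrix.posDef_iff_dotProduct_mulVec]
  constructor
  · simp [Matrix.IsHermitian]
  · intro x hx
    have h1 : star x ⬝ᵥ (δ • (1 : Matrix (Fin m) (Fin m) ℝ)) *ᵥ x = δ * (x ⬝ᵥ x) := by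
      simp [Matrix.smul_mulVec, star_trivial]
    have hnn : (0:ℝ) ≤ x ⬝ᵥ x := by simpa using dotProduct_self_star_nonneg x
    have hne : x ⬝ᵥ x ≠ 0 := fun h => hx (dotProduct_self_eq_zero.mp h)
    rw [h1]
    exact mul_pos hδ (lt_of_le_of_ne hnn (Ne.symm hne))

lemma reg_posDef {A : Matrix (Fin m) (Fin m) ℝ} (hA : A.PosSemidef) {δ : ℝ} (hδ : 0 < δ) :
    (A + δ • (1 : Matrix (Fin m) (Fin m) ℝ)).PosDef :=
  Matrix.PosDef.posSemidef_add hA (smul_one_posDef hδ)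

lemma transpose_eq {B : Matrix (Fin m) (Fin m) ℝ} (hB : B.IsHermitian) : Bᵀ = B := by
  rw [← Matrix.conjTranspose_eq_transpose_of_trivial]; exact hB.eq

lemma symm_dot {B : Matrix (Fin m) (Fin m) ℝ} (hB : B.IsHermitian) (c v : Fin m → ℝ) :
    c ⬝ᵥ (B *ᵥ v) = (B *ᵥ c) ⬝ᵥ v := by
  rw [Matrix.dotProduct_mulVec, ← Matrix.mulVec_transpose, transpose_eq hB]

lemma quad_nonneg {B : Matrix (Fin m) (Fin m) ℝ} (hB : B.PosSemidef) (v : Fin m → ℝ) :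
    0 ≤ v ⬝ᵥ (B *ᵥ v) := by
  simpa [star_trivial] using hB.dotProduct_mulVec_nonneg v

/-- the regularized inverse applied to ones -/
noncomputable def creg (A : Matrix (Fin m) (Fin m) ℝ) (δ : ℝ) : Fin m → ℝ :=
  (A + δ • (1 : Matrix (Fin m) (Fin m) ℝ))⁻¹ *ᵥ ov m

noncomputable def phi (A : Matrix (Fin m) (Fin m) ℝ) (δ : ℝ) : ℝ :=
  ov m ⬝ᵥ creg A δ

lemma B_mul_creg {A : Matrix (Fin m) (Fin m) ℝ} (hA : A.PosSemidef) {δ : ℝ} (hδ : 0 < δ) :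
    (A + δ • (1 : Matrix (Fin m) (Fin m) ℝ)) *ᵥ creg A δ = ov m := by
  rw [creg, Matrix.mulVec_mulVec, Matrix.mul_nonsing_inv _ (isUnit_iff_ne_zero.mpr (reg_posDef hA hδ).det_pos.ne'),
    Matrix.one_mulVec]

lemma quad_le {A : Matrix (Fin m) (Fin m) ℝ} (hA : A.PosSemidef) {δ : ℝ} (hδ : 0 < δ)
    (v : Fin m → ℝ) :
    2 * (ov m ⬝ᵥ v) - v ⬝ᵥ ((A + δ • (1 : Matrix (Fin m) (Fin m) ℝ)) *ᵥ v) ≤ phi A δ := by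
  set B := A + δ • (1 : Matrix (Fin m) (Fin m) ℝ) with hBdef
  have hBpd := reg_posDef hA hδ
  have hc := B_mul_creg hA hδ
  set c := creg A δ with hcdef
  have h0 : 0 ≤ (v - c) ⬝ᵥ (B *ᵥ (v - c)) := quad_nonneg hBpd.posSemidef _
  have hexp : (v - c) ⬝ᵥ (B *ᵥ (v - c))
      = v ⬝ᵥ (B *ᵥ v) - (ov m ⬝ᵥ v) - (ov m ⬝ᵥ v) + (ov m ⬝ᵥ c) := by
    have h1 : c ⬝ᵥ (B *ᵥ v) = ov m ⬝ᵥ v := by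
      rw [symm_dot hBpd.isHermitian, hc]
    have h2 : v ⬝ᵥ (B *ᵥ c) = ov m ⬝ᵥ v := by
      rw [hc, dotProduct_comm]
    have h3 : c ⬝ᵥ (B *ᵥ c) = ov m ⬝ᵥ c := by
      rw [hc, dotProduct_comm]
    rw [Matrix.mulVec_sub, sub_dotProduct, dotProduct_sub,
      dotProduct_sub, h1, h2, h3]
    ring
  rw [hexp] at h0
  have : phi A δ = ov m ⬝ᵥ c := rfl
  linarith

lemma quad_eq {A : Matrix (Fin m) (Fin m) ℝ} (hA : A.PosSemidef) {δ : ℝ} (hδ : 0 < δ) :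
    2 * (ov m ⬝ᵥ creg A δ)
      - creg A δ ⬝ᵥ ((A + δ • (1 : Matrix (Fin m) (Fin m) ℝ)) *ᵥ creg A δ) = phi A δ := by
  rw [B_mul_creg hA hδ, dotProduct_comm (creg A δ) (ov m), phi]
  ring

lemma quad_expand (A : Matrix (Fin m) (Fin m) ℝ) (δ : ℝ) (v : Fin m → ℝ) :
    v ⬝ᵥ ((A + δ • (1 : Matrix (Fin m) (Fin m) ℝ)) *ᵥ v) = v ⬝ᵥ (A *ᵥ v) + δ * (v ⬝ᵥ v) := by
  rw [Matrix.add_mulVec, dotProduct_add, Matrix.smul_mulVec, Matrix.one_mulVec,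
    dotProduct_smul]
  simp [smul_eq_mul]

lemma vself_nonneg (v : Fin m → ℝ) : (0:ℝ) ≤ v ⬝ᵥ v := by
  simpa using dotProduct_self_star_nonneg v

lemma phi_pos {A : Matrix (Fin m) (Fin m) ℝ} (hA : A.PosSemidef) {δ : ℝ} (hδ : 0 < δ)
    (hm : m ≠ 0) : 0 < phi A δ := by
  have hBpd := reg_posDef hA hδ
  have hinv : ((A + δ • (1 : Matrix (Fin m) (Fin m) ℝ))⁻¹).PosDef := hBpd.inv
  have hov : ov m ≠ 0 := by
    intro h
    have : (1:ℝ) = 0 := congrFun h ⟨0, Nat.pos_of_ne_zero hm⟩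
    norm_num at this
  simpa [phi, creg, star_trivial] using hinv.dotProduct_mulVec_pos hov

lemma phi_anti {A : Matrix (Fin m) (Fin m) ℝ} (hA : A.PosSemidef) {δ δ' : ℝ}
    (hδ : 0 < δ) (hle : δ ≤ δ') : phi A δ' ≤ phi A δ := by
  have hδ' : 0 < δ' := lt_of_lt_of_le hδ hle
  set c' := creg A δ' with hc'
  have h1 := quad_eq hA hδ'
  have h2 := quad_le hA hδ c'
  have e1 := quad_expand A δ' c'
  have e2 := quad_expand A δ c'
  have hvn := vself_nonneg c'
  nlinarith

noncomputable def psi (A : Matrix (Fin m) (Fin m) ℝ) (δ : ℝ) : ℝ := (phi A δ)⁻¹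


lemma sum_entries_eq (M : Matrix (Fin m) (Fin m) ℝ) :
    (∑ i, ∑ j, M i j) = ov m ⬝ᵥ (M *ᵥ ov m) := by
  simp [ov, dotProduct, Matrix.mulVec]

lemma kappa_fun_eq (A : Matrix (Fin m) (Fin m) ℝ) :
    (fun δ => (∑ i : Fin m, ∑ j : Fin m,
      (A + δ • (1 : Matrix (Fin m) (Fin m) ℝ))⁻¹ i j)⁻¹) = psi A := by
  funext δ
  rw [psi, phi, creg, sum_entries_eq]

lemma psi_pos {A : Matrix (Fin m) (Fin m) ℝ} (hA : A.PosSemidef) {δ : ℝ} (hδ : 0 < δ)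
    (hm : m ≠ 0) : 0 < psi A δ := inv_pos.mpr (phi_pos hA hδ hm)

lemma psi_mono {A : Matrix (Fin m) (Fin m) ℝ} (hA : A.PosSemidef) (hm : m ≠ 0) :
    MonotoneOn (psi A) (Set.Ioi 0) := by
  intro δ hδ δ' hδ' hle
  have h1 : phi A δ' ≤ phi A δ := phi_anti hA hδ hle
  have h2 : 0 < phi A δ' := phi_pos hA hδ' hm
  exact inv_anti₀ h2 h1

lemma psi_bddBelow (A : Matrix (Fin m) (Fin m) ℝ) (hA : A.PosSemidef) (hm : m ≠ 0) :
    BddBelow (psi A '' Set.Ioi 0) := by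
  refine ⟨0, ?_⟩
  rintro y ⟨δ, hδ, rfl⟩
  exact (psi_pos hA hδ hm).le

lemma kappa_eq_sInf {A : Matrix (Fin m) (Fin m) ℝ} (hA : A.PosSemidef) (hm : m ≠ 0) :
    kappa A = sInf (psi A '' Set.Ioi 0) := by
  rw [kappa, kappa_fun_eq]
  exact Filter.Tendsto.limUnder_eq
    ((psi_mono hA hm).tendsto_nhdsGT (psi_bddBelow A hA hm))

lemma kappa_le_psi {A : Matrix (Fin m) (Fin m) ℝ} (hA : A.PosSemidef) (hm : m ≠ 0)
    {δ : ℝ} (hδ : 0 < δ) : kappa A ≤ psi A δ := by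
  rw [kappa_eq_sInf hA hm]
  exact csInf_le (psi_bddBelow A hA hm) ⟨δ, hδ, rfl⟩

lemma le_kappa {A : Matrix (Fin m) (Fin m) ℝ} (hA : A.PosSemidef) (hm : m ≠ 0)
    {a : ℝ} (ha : ∀ δ : ℝ, 0 < δ → a ≤ psi A δ) : a ≤ kappa A := by
  rw [kappa_eq_sInf hA hm]
  refine le_csInf ⟨psi A 1, 1, by norm_num, rfl⟩ ?_
  rintro y ⟨δ, hδ, rfl⟩
  exact ha δ hδ

lemma exists_psi_lt {A : Matrix (Fin m) (Fin m) ℝ} (hA : A.PosSemidef) (hm : m ≠ 0)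
    {b : ℝ} (hb : kappa A < b) : ∃ δ : ℝ, 0 < δ ∧ psi A δ < b := by
  rw [kappa_eq_sInf hA hm] at hb
  obtain ⟨y, ⟨δ, hδ, rfl⟩, hy⟩ :=
    (csInf_lt_iff (psi_bddBelow A hA hm) ⟨psi A 1, 1, by norm_num, rfl⟩).mp hb
  exact ⟨δ, hδ, hy⟩

end KappaAux


namespace RKHSAux

variable {𝒳 : Type*} {k : 𝒳 → 𝒳 → ℝ} (H : RKHS' 𝒳 k)

lemma inn_zero_left (g : 𝒳 → ℝ) : H.inn (fun _ => 0) g = 0 := by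
  have h := H.inn_smul_left 0 (fun _ => (0:ℝ)) g
  simpa using h

lemma inn_zero_right (f : 𝒳 → ℝ) : H.inn f (fun _ => 0) = 0 := by
  rw [H.inn_symm]; exact inn_zero_left H f

lemma sum_mem {ι : Type*} (f : ι → 𝒳 → ℝ) (s : Finset ι)
    (hf : ∀ i ∈ s, f i ∈ H.carrier) : (fun y => ∑ i ∈ s, f i y) ∈ H.carrier := by
  classical
  induction s using Finset.induction_on with
  | empty => simpa using H.zero_mem
  | @insert a s ha ih =>
      simp only [Finset.sum_insert ha]
      exact H.add_mem _ (hf a (Finset.mem_insert_self a s)) _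
        (ih fun i hi => hf i (Finset.mem_insert_of_mem hi))

lemma inn_sum_left {ι : Type*} (f : ι → 𝒳 → ℝ) (s : Finset ι) (g : 𝒳 → ℝ) :
    H.inn (fun y => ∑ i ∈ s, f i y) g = ∑ i ∈ s, H.inn (f i) g := by
  classical
  induction s using Finset.induction_on with
  | empty => simpa using inn_zero_left H g
  | @insert a s ha ih =>
      simp only [Finset.sum_insert ha]
      rw [← ih, ← H.inn_add_left]

/-- finite kernel combination -/
def gf (k : 𝒳 → 𝒳 → ℝ) {n : ℕ} (x : Fin n → 𝒳) (c : Fin n → ℝ) : 𝒳 → ℝ :=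
  fun y => ∑ i, c i * k y (x i)

lemma gf_mem {n : ℕ} (x : Fin n → 𝒳) (c : Fin n → ℝ) : gf k x c ∈ H.carrier :=
  sum_mem H _ _ fun i _ => H.smul_mem (c i) _ (H.kernel_mem (x i))

lemma inn_gf {n : ℕ} (x : Fin n → 𝒳) (c : Fin n → ℝ) (f : 𝒳 → ℝ) (hf : f ∈ H.carrier) :
    H.inn (gf k x c) f = ∑ i, c i * f (x i) := by
  show H.inn (fun y => ∑ i, c i * k y (x i)) f = _
  rw [inn_sum_left]
  refine Finset.sum_congr rfl fun i _ => ?_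
  rw [H.inn_smul_left, H.inn_symm, H.reproducing f hf]

lemma inn_gf_gf {n : ℕ} (x : Fin n → 𝒳) (c : Fin n → ℝ) :
    H.inn (gf k x c) (gf k x c)
      = c ⬝ᵥ ((Matrix.of fun i j => k (x i) (x j)) *ᵥ c) := by
  rw [inn_gf H x c _ (gf_mem H x c)]
  simp only [dotProduct, Matrix.mulVec, Matrix.of_apply, gf]
  refine Finset.sum_congr rfl fun i _ => ?_
  rw [Finset.mul_sum, Finset.mul_sum]
  exact Finset.sum_congr rfl fun j _ => by ring

lemma sub_mem (f g : 𝒳 → ℝ) (hf : f ∈ H.carrier) (hg : g ∈ H.carrier) :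
    (fun x => f x - g x) ∈ H.carrier := by
  have h := H.add_mem f hf _ (H.smul_mem (-1) g hg)
  have e : (fun x => f x + (-1) * g x) = (fun x => f x - g x) := by funext x; ring
  rwa [e] at h

lemma inn_sub_left (f g h : 𝒳 → ℝ) :
    H.inn (fun x => f x - g x) h = H.inn f h - H.inn g h := by
  have e : (fun x => f x - g x) = (fun x => f x + (-1) * g x) := by funext x; ring
  rw [e, H.inn_add_left, H.inn_smul_left]; ring

lemma inn_sub_right (f g h : 𝒳 → ℝ) :
    H.inn f (fun x => g x - h x) = H.inn f g - H.inn f h := by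
  rw [H.inn_symm, inn_sub_left, H.inn_symm g f, H.inn_symm h f]

lemma inn_add_right (f g h : 𝒳 → ℝ) :
    H.inn f (fun x => g x + h x) = H.inn f g + H.inn f h := by
  rw [H.inn_symm, H.inn_add_left, H.inn_symm g f, H.inn_symm h f]

lemma inn_smul_right (c : ℝ) (f g : 𝒳 → ℝ) :
    H.inn f (fun x => c * g x) = c * H.inn f g := by
  rw [H.inn_symm, H.inn_smul_left, H.inn_symm g f]

lemma inn_sub_sub (f g : 𝒳 → ℝ) :
    H.inn (fun x => f x - g x) (fun x => f x - g x)
      = H.inn f f - 2 * H.inn f g + H.inn g g := by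
  rw [inn_sub_left, inn_sub_right, inn_sub_right, H.inn_symm g f]; ring

lemma cs_sq (f g : 𝒳 → ℝ) (hf : f ∈ H.carrier) (hg : g ∈ H.carrier) :
    (H.inn f g)^2 ≤ H.inn f f * H.inn g g := by
  rcases eq_or_ne (H.inn g g) 0 with h0 | hne
  · have hg0 : g = fun _ => 0 := H.inn_definite g hg h0
    have h1 : H.inn f g = 0 := by rw [hg0]; exact inn_zero_right H f
    rw [h1, h0]; simp
  · have hgg : 0 < H.inn g g := lt_of_le_of_ne (H.inn_nonneg g hg) (Ne.symm hne)
    set t := H.inn f g / H.inn g g with ht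
    have hmem : (fun x => f x - t * g x) ∈ H.carrier :=
      sub_mem H f _ hf (H.smul_mem t g hg)
    have h0' : 0 ≤ H.inn (fun x => f x - t * g x) (fun x => f x - t * g x) :=
      H.inn_nonneg _ hmem
    have hexp : H.inn (fun x => f x - t * g x) (fun x => f x - t * g x)
        = H.inn f f - 2 * t * H.inn f g + t^2 * H.inn g g := by
      rw [inn_sub_sub, inn_smul_right, H.inn_smul_left, inn_smul_right]; ring
    rw [hexp] at h0'
    have hmul : t * H.inn g g = H.inn f g := div_mul_cancel₀ _ hne
    nlinarith [h0', hmul, hgg]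

lemma add_sq_le (f g : 𝒳 → ℝ) (hf : f ∈ H.carrier) (hg : g ∈ H.carrier) :
    H.inn (fun x => f x + g x) (fun x => f x + g x)
      ≤ 2 * H.inn f f + 2 * H.inn g g := by
  have h0 : 0 ≤ H.inn (fun x => f x - g x) (fun x => f x - g x) :=
    H.inn_nonneg _ (sub_mem H f g hf hg)
  rw [inn_sub_sub] at h0
  have hexp : H.inn (fun x => f x + g x) (fun x => f x + g x)
      = H.inn f f + 2 * H.inn f g + H.inn g g := by
    rw [H.inn_add_left, inn_add_right, inn_add_right, H.inn_symm g f]; ring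
  linarith

end RKHSAux

namespace RKHSAux

open KappaAux

lemma kmat_psd {𝒳 : Type*} {k : 𝒳 → 𝒳 → ℝ} (hker : IsKernel k) {n : ℕ} (x : Fin n → 𝒳) :
    (Matrix.of fun i j => k (x i) (x j)).PosSemidef := by
  rw [Matrix.posSemidef_iff_dotProduct_mulVec]
  constructor
  · ext i j
    simp [Matrix.conjTranspose_apply, hker.1 (x i) (x j)]
  · intro v
    have h := hker.2 n x v
    have e : star v ⬝ᵥ ((Matrix.of fun i j => k (x i) (x j)) *ᵥ v)
        = ∑ i, ∑ j, v i * v j * k (x i) (x j) := by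
      simp only [star_trivial, dotProduct, Matrix.mulVec, Matrix.of_apply]
      refine Finset.sum_congr rfl fun i _ => ?_
      rw [Finset.mul_sum]
      exact Finset.sum_congr rfl fun j _ => by ring
    rw [e]; exact h

/-- the objective `2·1ᵀc − cᵀKc` -/
noncomputable def Qv {𝒳 : Type*} (k : 𝒳 → 𝒳 → ℝ) {n : ℕ} (x : Fin n → 𝒳) (c : Fin n → ℝ) : ℝ :=
  2 * (∑ i, c i) - c ⬝ᵥ ((Matrix.of fun i j => k (x i) (x j)) *ᵥ c)

lemma ov_dot {n : ℕ} (c : Fin n → ℝ) : ov n ⬝ᵥ c = ∑ i, c i := by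
  simp [ov, dotProduct]

section Main

variable {𝒳 : Type*} {k : 𝒳 → 𝒳 → ℝ} {κk : ℝ}

/-- abbreviation for the GLB hypothesis -/
def GLBh (k : 𝒳 → 𝒳 → ℝ) (κk : ℝ) : Prop :=
  IsGLB {y : ℝ | ∃ (n : ℕ) (x : Fin (n + 1) → 𝒳),
    y = kappa (Matrix.of fun i j => k (x i) (x j))} κk

lemma upper (hker : IsKernel k) (hκk : GLBh k κk) (hpos : 0 < κk)
    {n : ℕ} (x : Fin (n+1) → 𝒳) (c : Fin (n+1) → ℝ) : Qv k x c ≤ 1/κk := by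
  set K := Matrix.of fun i j => k (x i) (x j) with hK
  have hpsd : K.PosSemidef := kmat_psd hker x
  have hm : n + 1 ≠ 0 := Nat.succ_ne_zero n
  have hlow : κk ≤ kappa K := hκk.1 ⟨n, x, rfl⟩
  have key : ∀ δ : ℝ, 0 < δ → Qv k x c ≤ 1/κk + δ * (c ⬝ᵥ c) := by
    intro δ hδ
    have h1 : κk ≤ psi K δ := le_trans hlow (kappa_le_psi hpsd hm hδ)
    have hphi : 0 < phi K δ := phi_pos hpsd hδ hm
    have hphile : phi K δ ≤ 1/κk := by
      rw [le_div_iff₀ hpos]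
      have h2 : phi K δ * κk ≤ phi K δ * psi K δ :=
        mul_le_mul_of_nonneg_left h1 hphi.le
      have h3 : phi K δ * psi K δ = 1 := by
        rw [psi, mul_inv_cancel₀ hphi.ne']
      linarith
    have h4 := quad_le hpsd hδ c
    rw [quad_expand, ov_dot] at h4
    have : Qv k x c - δ * (c ⬝ᵥ c) ≤ phi K δ := by rw [Qv]; linarith
    linarith
  refine le_of_forall_pos_le_add fun ε hε => ?_
  have hcc : (0:ℝ) ≤ c ⬝ᵥ c := vself_nonneg c
  have hδ : 0 < ε / (c ⬝ᵥ c + 1) := by positivity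
  have h5 := key _ hδ
  have h6 : ε / (c ⬝ᵥ c + 1) * (c ⬝ᵥ c) ≤ ε := by
    rw [div_mul_eq_mul_div, div_le_iff₀ (by linarith)]
    nlinarith
  linarith

lemma approx (hker : IsKernel k) (hκk : GLBh k κk) (hpos : 0 < κk)
    {ε : ℝ} (hε : 0 < ε) :
    ∃ (n : ℕ) (x : Fin (n+1) → 𝒳) (c : Fin (n+1) → ℝ), 1/κk - ε < Qv k x c := by
  set ε' := κk^2 * ε / 2 with hε'def
  have hε' : 0 < ε' := by positivity
  have hex : ∃ y ∈ {y : ℝ | ∃ (n : ℕ) (x : Fin (n + 1) → 𝒳),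
      y = kappa (Matrix.of fun i j => k (x i) (x j))}, y < κk + ε' := by
    by_contra hcon
    push_neg at hcon
    have : κk + ε' ≤ κk := hκk.2 fun y hy => hcon y hy
    linarith
  obtain ⟨y, ⟨n, x, rfl⟩, hlt⟩ := hex
  set K := Matrix.of fun i j => k (x i) (x j) with hK
  have hpsd : K.PosSemidef := kmat_psd hker x
  have hm : n + 1 ≠ 0 := Nat.succ_ne_zero n
  obtain ⟨δ, hδ, hψ⟩ := exists_psi_lt hpsd hm hlt
  have hphi : 0 < phi K δ := phi_pos hpsd hδ hm
  have hκε : 0 < κk + ε' := by linarith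
  have h1 : 1/(κk + ε') < phi K δ := by
    have hψpos : 0 < psi K δ := psi_pos hpsd hδ hm
    have h := one_div_lt_one_div_of_lt hψpos hψ
    rw [psi] at h
    rwa [one_div ((phi K δ)⁻¹), inv_inv] at h
  refine ⟨n, x, creg K δ, ?_⟩
  have h2 := quad_eq hpsd hδ
  rw [quad_expand, ov_dot] at h2
  have hcc : (0:ℝ) ≤ creg K δ ⬝ᵥ creg K δ := vself_nonneg _
  have h3 : phi K δ ≤ Qv k x (creg K δ) := by rw [Qv]; nlinarith
  have h4 : 1/κk - ε < 1/(κk + ε') := by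
    have e1 : 1/κk - 1/(κk + ε') = ε' / (κk * (κk + ε')) := by
      field_simp
      ring
    have e2 : ε' / (κk * (κk + ε')) < ε := by
      rw [div_lt_iff₀ (by positivity)]
      rw [hε'def]
      nlinarith [mul_pos hpos hε', sq_nonneg κk, mul_pos hpos hpos]
    linarith
  linarith

end Main

end RKHSAux

namespace RKHSAux

open KappaAux

section Main2

variable {𝒳 : Type*} {k : 𝒳 → 𝒳 → ℝ} {κk : ℝ} (H : RKHS' 𝒳 k)

lemma midpoint (hker : IsKernel k) (hκk : GLBh k κk) (hpos : 0 < κk)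
    {a b : ℕ} (xa : Fin (a+1) → 𝒳) (ca : Fin (a+1) → ℝ)
    (xb : Fin (b+1) → 𝒳) (cb : Fin (b+1) → ℝ) :
    H.inn (fun y => gf k xa ca y - gf k xb cb y) (fun y => gf k xa ca y - gf k xb cb y)
      ≤ 4 * (1/κk) - 2 * Qv k xa ca - 2 * Qv k xb cb := by
  set u := gf k xa ca with hu
  set v := gf k xb cb with hv
  set x' : Fin ((a+1) + (b+1)) → 𝒳 := Fin.append xa xb with hx'
  set c' : Fin ((a+1) + (b+1)) → ℝ :=
    Fin.append (fun i => ca i / 2) (fun i => cb i / 2) with hc'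
  have hsum : (∑ i, c' i) = ((∑ i, ca i) + (∑ i, cb i)) / 2 := by
    rw [hc', Fin.sum_univ_add]
    simp only [Fin.append_left, Fin.append_right]
    rw [← Finset.sum_div, ← Finset.sum_div]
    ring
  have hw : gf k x' c' = fun y => (1/2) * (u y + v y) := by
    funext y
    show (∑ i : Fin ((a+1)+(b+1)), c' i * k y (x' i)) = _
    rw [Fin.sum_univ_add]
    simp only [hc', hx', Fin.append_left, Fin.append_right]
    show _ = 1/2 * ((∑ i, ca i * k y (xa i)) + (∑ i, cb i * k y (xb i)))
    rw [mul_add, Finset.mul_sum, Finset.mul_sum]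
    congr 1 <;> exact Finset.sum_congr rfl fun i _ => by ring
  have henergy : H.inn (gf k x' c') (gf k x' c')
      = (1/4) * (H.inn u u + 2 * H.inn u v + H.inn v v) := by
    rw [hw]
    rw [H.inn_smul_left, inn_smul_right, H.inn_add_left, inn_add_right, inn_add_right,
      H.inn_symm v u]
    ring
  have hup : Qv k x' c' ≤ 1/κk := upper hker hκk hpos x' c'
  have hQ' : Qv k x' c' = (∑ i, ca i) + (∑ i, cb i)
      - (1/4) * (H.inn u u + 2 * H.inn u v + H.inn v v) := by
    rw [Qv, ← inn_gf_gf H x' c', henergy, hsum]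
    ring
  have hQa : Qv k xa ca = 2 * (∑ i, ca i) - H.inn u u := by
    rw [Qv, ← inn_gf_gf H xa ca]
  have hQb : Qv k xb cb = 2 * (∑ i, cb i) - H.inn v v := by
    rw [Qv, ← inn_gf_gf H xb cb]
  have hexp : H.inn (fun y => u y - v y) (fun y => u y - v y)
      = H.inn u u - 2 * H.inn u v + H.inn v v := inn_sub_sub H u v
  rw [hexp]
  linarith [hup, hQ'.symm.le]

lemma mem_implies_pos [Nonempty 𝒳] (hker : IsKernel k) (hκk : GLBh k κk)
    (hmem : (fun _ => (1:ℝ)) ∈ H.carrier) : 0 < κk := by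
  set N := H.inn (fun _ => 1) (fun _ => 1) with hN
  have hNpos : 0 < N := by
    rcases lt_or_eq_of_le (H.inn_nonneg _ hmem) with h | h
    · exact h
    · exfalso
      have h1 := H.inn_definite _ hmem h.symm
      have := congrFun h1 (Classical.arbitrary 𝒳)
      norm_num at this
  have hlb : ∀ y ∈ {y : ℝ | ∃ (n : ℕ) (x : Fin (n + 1) → 𝒳),
      y = kappa (Matrix.of fun i j => k (x i) (x j))}, 1/N ≤ y := by
    rintro y ⟨n, x, rfl⟩
    set K := Matrix.of fun i j => k (x i) (x j) with hK
    have hpsd : K.PosSemidef := kmat_psd hker x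
    have hm : n + 1 ≠ 0 := Nat.succ_ne_zero n
    refine le_kappa hpsd hm fun δ hδ => ?_
    have hphi : 0 < phi K δ := phi_pos hpsd hδ hm
    have hphiN : phi K δ ≤ N := by
      set c := creg K δ with hc
      set f := gf k x c with hf
      have hfm : f ∈ H.carrier := gf_mem H x c
      have h0 : 0 ≤ H.inn (fun y => (fun _ => (1:ℝ)) y - f y)
          (fun y => (fun _ => (1:ℝ)) y - f y) :=
        H.inn_nonneg _ (sub_mem H _ f hmem hfm)
      rw [inn_sub_sub] at h0
      have h1 : H.inn (fun _ => (1:ℝ)) f = ∑ i, c i := by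
        rw [H.inn_symm, hf, inn_gf H x c _ hmem]
        simp
      have h2 : H.inn f f = c ⬝ᵥ (K *ᵥ c) := inn_gf_gf H x c
      have h3 := quad_eq hpsd hδ
      rw [quad_expand, ov_dot] at h3
      have hcc : (0:ℝ) ≤ c ⬝ᵥ c := vself_nonneg c
      linarith [h0, h1, h2, h3, mul_nonneg hδ.le hcc]
    have : 1/N ≤ 1/(phi K δ) := one_div_le_one_div_of_le hphi hphiN
    rwa [psi, ← one_div]
  have h := hκk.2 hlb
  have : 0 < 1/N := by positivity
  linarith

end Main2

end RKHSAux

namespace RKHSAux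

open KappaAux

variable {𝒳 : Type*} {k : 𝒳 → 𝒳 → ℝ} {κk : ℝ} (H : RKHS' 𝒳 k)

lemma construct (hker : IsKernel k) (hκk : GLBh k κk) (hpos : 0 < κk) :
    (fun _ => (1:ℝ)) ∈ H.carrier ∧
      H.inn (fun _ => (1:ℝ)) (fun _ => (1:ℝ)) = 1 / κk := by
  classical
  -- the approximating sequence
  have hseq : ∀ m : ℕ, ∃ (n : ℕ) (x : Fin (n+1) → 𝒳) (c : Fin (n+1) → ℝ),
      1/κk - 1/((m:ℝ)+1) < Qv k x c := fun m =>
    approx hker hκk hpos (by positivity)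
  choose nn xx cc hQlo using hseq
  have hQup : ∀ m, Qv k (xx m) (cc m) ≤ 1/κk := fun m => upper hker hκk hpos _ _
  -- Cauchy
  have hcauchy : ∀ ε : ℝ, 0 < ε → ∃ N : ℕ, ∀ m ≥ N, ∀ l ≥ N,
      H.inn (fun x => gf k (xx m) (cc m) x - gf k (xx l) (cc l) x)
        (fun x => gf k (xx m) (cc m) x - gf k (xx l) (cc l) x) < ε := by
    intro ε hε
    obtain ⟨N, hN⟩ := exists_nat_gt (4/ε)
    refine ⟨N, fun m hm l hl => ?_⟩
    have h1 := midpoint H hker hκk hpos (xx m) (cc m) (xx l) (cc l)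
    have h2 := hQlo m
    have h3 := hQlo l
    have hNR : (4:ℝ)/ε < N := hN
    have hinv : ∀ j : ℕ, j ≥ N → 1/((j:ℝ)+1) < ε/4 := by
      intro j hj
      have hj1 : (4:ℝ)/ε < (j:ℝ)+1 := by
        have : (N:ℝ) ≤ (j:ℝ) := by exact_mod_cast hj
        linarith
      have h4ε : (0:ℝ) < 4/ε := by positivity
      have := one_div_lt_one_div_of_lt h4ε hj1
      rwa [one_div_div] at this
    have hm1 := hinv m hm
    have hl1 := hinv l hl
    linarith
  obtain ⟨g, hgmem, hconv⟩ := H.complete (fun m => gf k (xx m) (cc m))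
    (fun m => gf_mem H _ _) hcauchy
  have hkdiag : ∀ z, 0 ≤ k z z := by
    intro z
    have h := hker.2 1 (fun _ => z) (fun _ => 1)
    simpa using h
  -- pointwise identification of the limit
  have hgz : ∀ z, g z = 1 := by
    intro z
    have key : ∀ η : ℝ, 0 < η → ∃ h ∈ H.carrier,
        H.inn (fun x => g x - h x) (fun x => g x - h x) ≤ η ∧ (h z - 1)^2 ≤ η := by
      intro η hη
      obtain ⟨N1, hN1⟩ := hconv (η/16) (by positivity)
      obtain ⟨N2, hN2⟩ := exists_nat_gt (16/η)
      set m := max N1 N2 with hmdef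
      have hconvm : H.inn (fun x => gf k (xx m) (cc m) x - g x)
          (fun x => gf k (xx m) (cc m) x - g x) < η/16 := hN1 m (le_max_left _ _)
      have hQm : 1/κk - η/16 < Qv k (xx m) (cc m) := by
        have h2 := hQlo m
        have hj1 : (16:ℝ)/η < (m:ℝ)+1 := by
          have hN2' : (16:ℝ)/η < N2 := hN2
          have : (N2:ℝ) ≤ (m:ℝ) := by exact_mod_cast le_max_right N1 N2
          linarith
        have h4η : (0:ℝ) < 16/η := by positivity
        have h5 := one_div_lt_one_div_of_lt h4η hj1
        rw [one_div_div] at h5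
        linarith
      -- the extended tuple
      set x' : Fin ((nn m + 1) + 1) → 𝒳 := Fin.snoc (xx m) z with hx'
      set K' := Matrix.of (fun i j => k (x' i) (x' j)) with hK'
      have hpsd' : K'.PosSemidef := kmat_psd hker x'
      have hm' : (nn m + 1) + 1 ≠ 0 := Nat.succ_ne_zero _
      have hccm : (0:ℝ) ≤ cc m ⬝ᵥ cc m := vself_nonneg _
      set δ := min (η/16 / (cc m ⬝ᵥ cc m + 1)) (η * κk / 2) with hδdef
      have hδpos : 0 < δ := lt_min (by positivity) (by positivity)
      set c' := creg K' δ with hc'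
      set h := gf k x' c' with hh
      have hhm : h ∈ H.carrier := gf_mem H _ _
      -- energy identity for the extended tuple
      have hQ'_eq : Qv k x' c' = phi K' δ + δ * (c' ⬝ᵥ c') := by
        have h2 := quad_eq hpsd' hδpos
        rw [quad_expand, ov_dot] at h2
        have : Qv k x' c' = 2 * (∑ i, c' i) - c' ⬝ᵥ (K' *ᵥ c') := by rw [Qv, hK']
        linarith
      have hQ'up : Qv k x' c' ≤ 1/κk := upper hker hκk hpos x' c'
      have hphi' : 0 < phi K' δ := phi_pos hpsd' hδpos hm'
      -- lower bound for phi via the old coefficients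
      have hvsum : (∑ i, Fin.snoc (cc m) (0:ℝ) i) = ∑ i, cc m i := by
        rw [Fin.sum_univ_castSucc]
        simp
      have hvv : Fin.snoc (cc m) (0:ℝ) ⬝ᵥ Fin.snoc (cc m) (0:ℝ) = cc m ⬝ᵥ cc m := by
        simp [dotProduct, Fin.sum_univ_castSucc]
      have hgfv : gf k x' (Fin.snoc (cc m) (0:ℝ)) = gf k (xx m) (cc m) := by
        funext y
        unfold gf
        rw [Fin.sum_univ_castSucc]
        simp [hx']
      have hvKv : Fin.snoc (cc m) (0:ℝ) ⬝ᵥ (K' *ᵥ Fin.snoc (cc m) (0:ℝ))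
          = cc m ⬝ᵥ ((Matrix.of fun i j => k (xx m i) (xx m j)) *ᵥ cc m) := by
        rw [hK', ← inn_gf_gf H x' (Fin.snoc (cc m) (0:ℝ)), hgfv,
          inn_gf_gf H (xx m) (cc m)]
      have hql := quad_le hpsd' hδpos (Fin.snoc (cc m) (0:ℝ))
      rw [quad_expand, ov_dot, hvsum, hvv, hvKv] at hql
      have hQm_def : Qv k (xx m) (cc m)
          = 2 * (∑ i, cc m i) - cc m ⬝ᵥ ((Matrix.of fun i j => k (xx m i) (xx m j)) *ᵥ cc m) :=
        rfl
      have hd1 : δ ≤ η/16/(cc m ⬝ᵥ cc m + 1) := min_le_left _ _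
      have hδ1 : δ * (cc m ⬝ᵥ cc m) ≤ η/16 := by
        have h6 := mul_le_mul_of_nonneg_right hd1 hccm
        have h7 : η/16/(cc m ⬝ᵥ cc m + 1) * (cc m ⬝ᵥ cc m) ≤ η/16 := by
          rw [div_mul_eq_mul_div, div_le_iff₀ (by linarith)]
          nlinarith
        linarith
      have hphi_lb : Qv k (xx m) (cc m) - η/16 ≤ phi K' δ := by
        rw [hQm_def]
        linarith
      -- first goal : distance
      refine ⟨h, hhm, ?_, ?_⟩
      · have hmid2 := midpoint H hker hκk hpos (xx m) (cc m) x' c'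
        have hQ'_lb : 1/κk - 2*(η/16) ≤ Qv k x' c' := by
          have : (0:ℝ) ≤ δ * (c' ⬝ᵥ c') := mul_nonneg hδpos.le (vself_nonneg _)
          linarith
        have hQm_lb : 1/κk - η/16 < Qv k (xx m) (cc m) := hQm
        have hmid3 : H.inn (fun y => gf k (xx m) (cc m) y - h y)
            (fun y => gf k (xx m) (cc m) y - h y) ≤ 6*(η/16) := by
          have := hQup m
          rw [hh]
          linarith
        have htri := add_sq_le H (fun x => g x - gf k (xx m) (cc m) x)
          (fun x => gf k (xx m) (cc m) x - h x)
          (sub_mem H _ _ hgmem (gf_mem H _ _))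
          (sub_mem H _ _ (gf_mem H _ _) hhm)
        have he : (fun x => (g x - gf k (xx m) (cc m) x) + (gf k (xx m) (cc m) x - h x))
            = fun x => g x - h x := by funext x; ring
        rw [he] at htri
        have hsym : H.inn (fun x => g x - gf k (xx m) (cc m) x)
            (fun x => g x - gf k (xx m) (cc m) x)
            = H.inn (fun x => gf k (xx m) (cc m) x - g x)
              (fun x => gf k (xx m) (cc m) x - g x) := by
          rw [inn_sub_sub, inn_sub_sub, H.inn_symm g (gf k (xx m) (cc m))]
          ring
        rw [hsym] at htri
        linarith
      · -- value at z
        have hx'last : x' (Fin.last _) = z := by rw [hx']; simp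
        have hkz : ∀ i, k z (x' i) = K' (Fin.last _) i := by
          intro i
          rw [hK']
          simp only [Matrix.of_apply, hx'last]
        have hBc := B_mul_creg hpsd' hδpos
        rw [Matrix.add_mulVec, Matrix.smul_mulVec, Matrix.one_mulVec] at hBc
        have hlast : (K' *ᵥ c') (Fin.last _) + δ * c' (Fin.last _) = 1 := by
          have h8 := congrFun hBc (Fin.last _)
          simpa [ov] using h8
        have hzval : h z = (K' *ᵥ c') (Fin.last _) := by
          rw [hh]
          show (∑ i, c' i * k z (x' i)) = _
          simp only [Matrix.mulVec, dotProduct]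
          refine Finset.sum_congr rfl fun i _ => ?_
          rw [hkz i]; ring
        have hzfinal : h z = 1 - δ * c' (Fin.last _) := by rw [hzval]; linarith
        have hsingle : c' (Fin.last _) * c' (Fin.last _) ≤ c' ⬝ᵥ c' := by
          have h9 := Finset.single_le_sum (f := fun i => c' i * c' i)
            (fun i _ => mul_self_nonneg _) (Finset.mem_univ (Fin.last (nn m + 1)))
          simpa [dotProduct] using h9
        have hδcc : δ * (c' ⬝ᵥ c') ≤ 1/κk := by linarith
        have hd2 : δ ≤ η * κk / 2 := min_le_right _ _
        have u1 : δ*(δ*(c' (Fin.last _) * c' (Fin.last _))) ≤ δ*(δ*(c' ⬝ᵥ c')) :=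
          mul_le_mul_of_nonneg_left
            (mul_le_mul_of_nonneg_left hsingle hδpos.le) hδpos.le
        have u2 : δ*(δ*(c' ⬝ᵥ c')) ≤ δ*(1/κk) := mul_le_mul_of_nonneg_left hδcc hδpos.le
        have u3 : δ*(1/κk) ≤ (η*κk/2)*(1/κk) :=
          mul_le_mul_of_nonneg_right hd2 (by positivity)
        have u4 : (η*κk/2)*(1/κk) = η/2 := by
          field_simp
        have u0 : (h z - 1)^2 = δ*(δ*(c' (Fin.last _) * c' (Fin.last _))) := by
          rw [hzfinal]; ring
        rw [u0]
        linarith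
    -- conclude g z = 1
    have hsq : ∀ ε : ℝ, 0 < ε → (g z - 1)^2 ≤ ε := by
      intro ε hε
      have hkz1 : (0:ℝ) < k z z + 1 := by linarith [hkdiag z]
      obtain ⟨h, hhm, h1, h2⟩ := key (ε/(2*(k z z + 1))) (by positivity)
      have hsub : (fun x => g x - h x) ∈ H.carrier := sub_mem H _ _ hgmem hhm
      have hrep : H.inn (fun x => g x - h x) (fun y => k y z) = g z - h z :=
        H.reproducing _ hsub z
      have hcs := cs_sq H (fun x => g x - h x) (fun y => k y z) hsub (H.kernel_mem z)
      have hkk : H.inn (fun y => k y z) (fun y => k y z) = k z z :=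
        H.reproducing _ (H.kernel_mem z) z
      rw [hrep, hkk] at hcs
      have hgh : (g z - h z)^2 ≤ (ε/(2*(k z z + 1))) * (k z z) := by
        have := mul_le_mul_of_nonneg_right h1 (hkdiag z)
        nlinarith [H.inn_nonneg _ hsub]
      have hcanc : 2*(ε/(2*(k z z + 1)))*(k z z + 1) = ε := by
        field_simp
      nlinarith [sq_nonneg ((g z - h z) - (h z - 1)), hgh, h2, hcanc]
    have hz0 : (g z - 1)^2 ≤ 0 := by
      by_contra hc
      push_neg at hc
      linarith [hsq ((g z - 1)^2/2) (by linarith)]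
    have : g z - 1 = 0 := by
      have := le_antisymm hz0 (sq_nonneg _)
      exact pow_eq_zero_iff (by norm_num) |>.mp this
    linarith
  -- the limit is the constant one function
  have hg1 : g = fun _ => (1:ℝ) := funext hgz
  have hid : ∀ m, H.inn g g = Qv k (xx m) (cc m)
      + H.inn (fun x => gf k (xx m) (cc m) x - g x)
        (fun x => gf k (xx m) (cc m) x - g x) := by
    intro m
    have hsub := inn_sub_sub H (gf k (xx m) (cc m)) g
    have hfg : H.inn (gf k (xx m) (cc m)) g = ∑ i, cc m i := by
      rw [inn_gf H _ _ g hgmem]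
      refine Finset.sum_congr rfl fun i _ => ?_
      rw [hgz (xx m i), mul_one]
    have hff : H.inn (gf k (xx m) (cc m)) (gf k (xx m) (cc m))
        = cc m ⬝ᵥ ((Matrix.of fun i j => k (xx m i) (xx m j)) *ᵥ cc m) := inn_gf_gf H _ _
    have hQQ : Qv k (xx m) (cc m) = 2*(∑ i, cc m i)
        - cc m ⬝ᵥ ((Matrix.of fun i j => k (xx m i) (xx m j)) *ᵥ cc m) := rfl
    rw [hsub, hfg, hff, hQQ]
    ring
  have habs : ∀ ε : ℝ, 0 < ε → |H.inn g g - 1/κk| ≤ ε := by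
    intro ε hε
    obtain ⟨N1, hN1⟩ := hconv (ε/2) (by positivity)
    obtain ⟨N2, hN2⟩ := exists_nat_gt (2/ε)
    set m := max N1 N2 with hm2
    have h1 : H.inn (fun x => gf k (xx m) (cc m) x - g x)
        (fun x => gf k (xx m) (cc m) x - g x) < ε/2 := hN1 m (le_max_left _ _)
    have h1nn : 0 ≤ H.inn (fun x => gf k (xx m) (cc m) x - g x)
        (fun x => gf k (xx m) (cc m) x - g x) :=
      H.inn_nonneg _ (sub_mem H _ _ (gf_mem H _ _) hgmem)
    have h2 := hQlo m
    have h3 := hQup m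
    have h4 := hid m
    have hj1 : (2:ℝ)/ε < (m:ℝ)+1 := by
      have hN2' : (2:ℝ)/ε < N2 := hN2
      have : (N2:ℝ) ≤ (m:ℝ) := by exact_mod_cast le_max_right N1 N2
      linarith
    have h5 : 1/((m:ℝ)+1) < ε/2 := by
      have h2ε : (0:ℝ) < 2/ε := by positivity
      have := one_div_lt_one_div_of_lt h2ε hj1
      rwa [one_div_div] at this
    rw [abs_le]
    constructor <;> linarith
  have hval : H.inn g g = 1/κk := by
    by_contra hne
    have hp : 0 < |H.inn g g - 1/κk| := abs_pos.mpr (sub_ne_zero.mpr hne)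
    linarith [habs (|H.inn g g - 1/κk|/2) (by linarith)]
  constructor
  · rw [← hg1]; exact hgmem
  · rw [← hg1]; exact hval

end RKHSAux

/-- the constant function `1` belongs to the RKHS `𝓗` of a kernel `k` if and
only if `κ_k := inf_{n} inf_{x_1,…,x_n} κ(K(x_1,…,x_n)) > 0`, in which case
`‖1‖_𝓗² = 1/κ_k`; here `K(x_1,…,x_n)` is the kernel matrix with entries `k(x_i,x_j)`. -/
theorem constant_in_rkhs_iff_kappa_pos
    (𝒳 : Type*) [Nonempty 𝒳] (k : 𝒳 → 𝒳 → ℝ) (hker : IsKernel k)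
    (H : RKHS' 𝒳 k) (κk : ℝ)
    (hκk : IsGLB {y : ℝ | ∃ (n : ℕ) (x : Fin (n + 1) → 𝒳),
      y = kappa (Matrix.of fun i j => k (x i) (x j))} κk) :
    ((fun _ => (1 : ℝ)) ∈ H.carrier ↔ 0 < κk) ∧
      (0 < κk → H.inn (fun _ => (1 : ℝ)) (fun _ => (1 : ℝ)) = 1 / κk) := by
  have hglb : RKHSAux.GLBh k κk := hκk
  constructor
  · constructor
    · intro hmem
      exact RKHSAux.mem_implies_pos H hker hglb hmem
    · intro hpos
      exact (RKHSAux.construct H hker hglb hpos).1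
  · intro hpos
    exact (RKHSAux.construct H hker hglb hpos).2
end

section
/- Constant function in the RKHS of the shifted Gaussian kernel: let 𝒳 ⊆ ℝ^d be unbounded, Σ ∈ ℝ^{d×d} positive definite, a ≥ 0, and let 𝓗 be the RKHS of the kernel k(x,y) = a + exp(−(x−y)ᵀΣ^{-1}(x−y)) on 𝒳. Then the constant function 1_𝒳 belongs to 𝓗 if and only if a > 0, and in that case ‖1_𝒳‖_𝓗² = 1/a. -/
open MeasureTheory

section Aux

variable {X : Type*} {k : X → X → ℝ} (H : AbstractRKHS X k)

lemma rkhs_inn_zero_left (g : X → ℝ) : H.inn (fun _ => 0) g = 0 := by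
  have h := H.inn_smul_left 0 g g
  have e : (fun x => (0:ℝ) * g x) = (fun _ : X => (0:ℝ)) := by funext x; ring
  rw [e] at h
  simpa using h

lemma rkhs_sub_mem {p q : X → ℝ} (hp : p ∈ H.carrier) (hq : q ∈ H.carrier) :
    (fun x => p x - q x) ∈ H.carrier := by
  have h := H.add_mem p hp _ (H.smul_mem (-1) q hq)
  have e : (fun x => p x + (-1) * q x) = (fun x => p x - q x) := by funext x; ring
  rwa [e] at h

lemma rkhs_inn_sub_left (p q g : X → ℝ) :
    H.inn (fun x => p x - q x) g = H.inn p g - H.inn q g := by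
  have e : (fun x => p x - q x) = (fun x => p x + (-1) * q x) := by funext x; ring
  rw [e, H.inn_add_left, H.inn_smul_left]; ring

lemma rkhs_inn_add_right (p q g : X → ℝ) :
    H.inn g (fun x => p x + q x) = H.inn g p + H.inn g q := by
  rw [H.inn_symm, H.inn_add_left, H.inn_symm p, H.inn_symm q]

lemma rkhs_inn_smul_right (c : ℝ) (p g : X → ℝ) :
    H.inn g (fun x => c * p x) = c * H.inn g p := by
  rw [H.inn_symm, H.inn_smul_left, H.inn_symm]

lemma rkhs_inn_sub_right (p q g : X → ℝ) :
    H.inn g (fun x => p x - q x) = H.inn g p - H.inn g q := by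
  rw [H.inn_symm, rkhs_inn_sub_left, H.inn_symm p, H.inn_symm q]

lemma rkhs_sum_mem (f : ℕ → X → ℝ) (hf : ∀ i, f i ∈ H.carrier) (n : ℕ) :
    (fun y => ∑ i ∈ Finset.range n, f i y) ∈ H.carrier := by
  induction n with
  | zero => simpa using H.zero_mem
  | succ n ih =>
      have e : (fun y => ∑ i ∈ Finset.range (n+1), f i y)
          = (fun y => (∑ i ∈ Finset.range n, f i y) + f n y) := by
        funext y; rw [Finset.sum_range_succ]
      rw [e]
      exact H.add_mem _ ih _ (hf n)

lemma rkhs_inn_sum_left (f : ℕ → X → ℝ) (g : X → ℝ) (n : ℕ) :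
    H.inn (fun y => ∑ i ∈ Finset.range n, f i y) g
      = ∑ i ∈ Finset.range n, H.inn (f i) g := by
  induction n with
  | zero => simpa using rkhs_inn_zero_left H g
  | succ n ih =>
      have e : (fun y => ∑ i ∈ Finset.range (n+1), f i y)
          = (fun y => (∑ i ∈ Finset.range n, f i y) + f n y) := by
        funext y; rw [Finset.sum_range_succ]
      rw [e, H.inn_add_left, ih, Finset.sum_range_succ]

lemma rkhs_inn_sum_right (f : ℕ → X → ℝ) (g : X → ℝ) (n : ℕ) :
    H.inn g (fun y => ∑ i ∈ Finset.range n, f i y)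
      = ∑ i ∈ Finset.range n, H.inn g (f i) := by
  rw [H.inn_symm, rkhs_inn_sum_left]
  exact Finset.sum_congr rfl fun i _ => H.inn_symm _ _

lemma rkhs_cauchy_schwarz {p q : X → ℝ} (hp : p ∈ H.carrier) (hq : q ∈ H.carrier) :
    (H.inn p q)^2 ≤ H.inn p p * H.inn q q := by
  have key : ∀ s t : ℝ, 0 ≤ s^2 * H.inn p p + 2 * s * t * H.inn p q + t^2 * H.inn q q := by
    intro s t
    have h0 : 0 ≤ H.inn (fun x => s * p x + t * q x) (fun x => s * p x + t * q x) :=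
      H.inn_nonneg _ (H.add_mem _ (H.smul_mem s p hp) _ (H.smul_mem t q hq))
    have e : H.inn (fun x => s * p x + t * q x) (fun x => s * p x + t * q x)
        = s^2 * H.inn p p + 2 * s * t * H.inn p q + t^2 * H.inn q q := by
      simp only [H.inn_add_left, rkhs_inn_add_right, H.inn_smul_left, rkhs_inn_smul_right]
      rw [H.inn_symm q p]
      ring
    linarith [e ▸ h0]
  rcases (H.inn_nonneg q hq).eq_or_lt with hqq | hqq
  · have hq0 : q = fun _ => 0 := H.inn_definite q hq (hqq.symm)
    have : H.inn p q = 0 := by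
      rw [H.inn_symm, hq0, rkhs_inn_zero_left]
    rw [this, ← hqq]
    simp
  · have h := key (H.inn q q) (-(H.inn p q))
    nlinarith [h, hqq]

end Aux

lemma posdef_coercive {d : ℕ} {M : Matrix (Fin d) (Fin d) ℝ} (hM : M.PosDef) :
    ∃ c > 0, ∀ v : Fin d → ℝ, c * ‖v‖^2 ≤ dotProduct v (M.mulVec v) := by
  have hQc : Continuous (fun v : Fin d → ℝ => dotProduct v (M.mulVec v)) := by
    have e : (fun v : Fin d → ℝ => dotProduct v (M.mulVec v))
        = fun v => ∑ i, v i * ∑ j, M i j * v j := by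
      funext v
      simp [dotProduct, Matrix.mulVec]
    rw [e]
    fun_prop
  have hpos : ∀ v : Fin d → ℝ, v ≠ 0 → 0 < dotProduct v (M.mulVec v) := by
    intro v hv
    simpa using hM.dotProduct_mulVec_pos hv
  have hhomog : ∀ (t : ℝ) (v : Fin d → ℝ),
      dotProduct (t • v) (M.mulVec (t • v)) = t^2 * dotProduct v (M.mulVec v) := by
    intro t v
    rw [Matrix.mulVec_smul, dotProduct_smul, smul_dotProduct]
    simp [smul_eq_mul]; ring
  by_cases hex : ∃ v : Fin d → ℝ, ‖v‖ = 1
  · obtain ⟨v₁, hv₁⟩ := hex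
    have hcpt : IsCompact (Metric.sphere (0 : Fin d → ℝ) 1) := isCompact_sphere 0 1
    have hne : (Metric.sphere (0 : Fin d → ℝ) 1).Nonempty := ⟨v₁, by simpa using hv₁⟩
    obtain ⟨v₀, hv₀mem, hv₀min'⟩ := hcpt.exists_isMinOn hne hQc.continuousOn
    have hv₀min : ∀ u ∈ Metric.sphere (0 : Fin d → ℝ) 1,
        dotProduct v₀ (M.mulVec v₀) ≤ dotProduct u (M.mulVec u) :=
      fun u hu => hv₀min' hu
    have hv₀ : ‖v₀‖ = 1 := by simpa using hv₀mem
    have hv₀ne : v₀ ≠ 0 := by intro h; rw [h] at hv₀; simp at hv₀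
    refine ⟨dotProduct v₀ (M.mulVec v₀), hpos v₀ hv₀ne, fun v => ?_⟩
    by_cases hv : v = 0
    · simp [hv, Matrix.mulVec_zero]
    · have hnv : (0:ℝ) < ‖v‖ := norm_pos_iff.2 hv
      set u : Fin d → ℝ := ‖v‖⁻¹ • v with hu
      have hun : ‖u‖ = 1 := by
        rw [hu, norm_smul]
        simp [abs_of_pos (inv_pos.2 hnv), inv_mul_cancel₀ hnv.ne']
      have humem : u ∈ Metric.sphere (0 : Fin d → ℝ) 1 := by simpa using hun
      have h1 := hv₀min u humem
      have h2 : dotProduct v (M.mulVec v)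
          = ‖v‖^2 * dotProduct u (M.mulVec u) := by
        have : v = ‖v‖ • u := by rw [hu, smul_smul, mul_inv_cancel₀ hnv.ne', one_smul]
        conv_lhs => rw [this]
        rw [hhomog]
      rw [h2]
      calc dotProduct v₀ (M.mulVec v₀) * ‖v‖^2
          ≤ dotProduct u (M.mulVec u) * ‖v‖^2 := by
            apply mul_le_mul_of_nonneg_right h1 (by positivity)
        _ = ‖v‖^2 * dotProduct u (M.mulVec u) := by ring
  · refine ⟨1, one_pos, fun v => ?_⟩
    have hv : v = 0 := by
      by_contra hv
      have hnv : (0:ℝ) < ‖v‖ := norm_pos_iff.2 hv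
      exact hex ⟨‖v‖⁻¹ • v, by
        rw [norm_smul]; simp [abs_of_pos (inv_pos.2 hnv), inv_mul_cancel₀ hnv.ne']⟩
    simp [hv, Matrix.mulVec_zero]

lemma exp_neg_two_nat (j : ℕ) :
    Real.exp (-(2 * (j:ℝ))) ≤ ((1:ℝ)/2)^j * ((1:ℝ)/2)^j := by
  have h1 : Real.exp (-(2 * (j:ℝ))) = (Real.exp (-2))^j := by
    rw [← Real.exp_nat_mul]; ring_nf
  have h2 : Real.exp (-2) ≤ (1:ℝ)/4 := by
    have he1 : (2:ℝ) ≤ Real.exp 1 := by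
      have := Real.add_one_le_exp (1:ℝ); linarith
    have he2 : (4:ℝ) ≤ Real.exp 2 := by
      have : Real.exp 2 = Real.exp 1 * Real.exp 1 := by
        rw [← Real.exp_add]; norm_num
      nlinarith [Real.exp_pos 1]
    rw [Real.exp_neg]
    rw [inv_le_comm₀ (Real.exp_pos 2) (by norm_num)] at *
    · linarith
  have h3 : ((1:ℝ)/2)^j * ((1:ℝ)/2)^j = ((1:ℝ)/4)^j := by
    rw [← mul_pow]; norm_num
  rw [h1, h3]
  exact pow_le_pow_left₀ (Real.exp_nonneg _) h2 j

set_option maxHeartbeats 1000000 in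
/-- the constant function `1` belongs to the RKHS of the shifted Gaussian
kernel `k(x,y) = a + exp(-(x-y)ᵀ Σ⁻¹ (x-y))` on an unbounded set `𝒳 ⊆ ℝ^d` if and only if
`a > 0`, in which case its squared RKHS norm equals `1/a`. -/
theorem constant_in_shifted_gaussian_rkhs
    (d : ℕ) (𝒳 : Set (Fin d → ℝ)) (h_unbdd : ¬ Bornology.IsBounded 𝒳)
    (S : Matrix (Fin d) (Fin d) ℝ) (hS : S.PosDef) (a : ℝ) (ha : 0 ≤ a)
    (k : ↥𝒳 → ↥𝒳 → ℝ)
    (hk : ∀ x y : ↥𝒳, k x y =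
      a + Real.exp (-(dotProduct ((x : Fin d → ℝ) - (y : Fin d → ℝ))
        (S⁻¹.mulVec ((x : Fin d → ℝ) - (y : Fin d → ℝ))))))
    (hker : IsKernel k) (H : AbstractRKHS ↥𝒳 k) :
    ((fun _ => (1 : ℝ)) ∈ H.carrier ↔ 0 < a) ∧
      (0 < a → H.inn (fun _ => (1 : ℝ)) (fun _ => (1 : ℝ)) = 1 / a) := by
  classical
  obtain ⟨c, hc, hcoer⟩ := posdef_coercive (hS.inv)
  set Q : (Fin d → ℝ) → ℝ := fun v => dotProduct v (S⁻¹.mulVec v) with hQdef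
  have hQcoer : ∀ v, c * ‖v‖^2 ≤ Q v := hcoer
  have hQnonneg : ∀ v, 0 ≤ Q v := fun v => le_trans (by positivity) (hQcoer v)
  have hQneg : ∀ v, Q (-v) = Q v := by
    intro v
    simp only [hQdef, Matrix.mulVec_neg, dotProduct_neg, neg_dotProduct, neg_neg]
  set G : ↥𝒳 → ↥𝒳 → ℝ :=
    fun u v => Real.exp (-(Q ((u : Fin d → ℝ) - (v : Fin d → ℝ)))) with hGdef
  have hkG : ∀ u v, k u v = a + G u v := fun u v => hk u v
  have hGpos : ∀ u v, 0 < G u v := fun u v => Real.exp_pos _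
  have hGle1 : ∀ u v, G u v ≤ 1 := by
    intro u v
    rw [hGdef, ← Real.exp_zero]
    exact Real.exp_le_exp.2 (neg_nonpos.2 (hQnonneg _))
  have hGdiag : ∀ u, G u u = 1 := by
    intro u
    rw [hGdef]
    simp [hQdef, zero_dotProduct]
  have hGsymm : ∀ u v, G u v = G v u := by
    intro u v
    rw [hGdef]
    simp only
    rw [← hQneg ((u : Fin d → ℝ) - (v : Fin d → ℝ)), neg_sub]
  -- unboundedness
  have hub : ∀ R : ℝ, ∃ p ∈ 𝒳, R < ‖p‖ := by
    intro R
    by_contra h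
    push_neg at h
    exact h_unbdd (isBounded_iff_forall_norm_le.2 ⟨R, h⟩)
  -- the sequence of far-away points
  have hstep : ∀ s : Finset ↥𝒳, (∀ u ∈ s, True) → ∃ v : ↥𝒳, True ∧ ∀ u ∈ s,
      (‖(u : Fin d → ℝ)‖ + 1 ≤ ‖(v : Fin d → ℝ)‖ ∧
        2 * ‖(v : Fin d → ℝ)‖ ≤ Q ((v : Fin d → ℝ) - (u : Fin d → ℝ))) := by
    intro s _
    obtain ⟨M0, hM0⟩ := Finset.exists_le (Finset.image (fun u : ↥𝒳 => ‖(u : Fin d → ℝ)‖) s)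
    set M := max M0 0 with hMdef
    have hM : ∀ u ∈ s, ‖(u : Fin d → ℝ)‖ ≤ M :=
      fun u hu => le_trans (hM0 _ (Finset.mem_image_of_mem _ hu)) (le_max_left _ _)
    have hMnn : 0 ≤ M := le_max_right _ _
    obtain ⟨p, hp𝒳, hpn⟩ := hub (max (2*M + 1) (8/c))
    have h1 : 2*M + 1 < ‖p‖ := lt_of_le_of_lt (le_max_left _ _) hpn
    have h2 : 8/c < ‖p‖ := lt_of_le_of_lt (le_max_right _ _) hpn
    have h8 : 8 < c * ‖p‖ := by rw [div_lt_iff₀ hc] at h2; nlinarith [h2]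
    refine ⟨⟨p, hp𝒳⟩, trivial, fun u hu => ?_⟩
    have hu' : ‖(u : Fin d → ℝ)‖ ≤ M := hM u hu
    constructor
    · show ‖(u : Fin d → ℝ)‖ + 1 ≤ ‖p‖
      linarith
    · show 2 * ‖p‖ ≤ Q (p - (u : Fin d → ℝ))
      have hd : ‖p‖ - M ≤ ‖p - (u : Fin d → ℝ)‖ := by
        have := norm_sub_norm_le p (u : Fin d → ℝ)
        linarith
      have hhalf : ‖p‖/2 ≤ ‖p - (u : Fin d → ℝ)‖ := by linarith
      have hq := hQcoer (p - (u : Fin d → ℝ))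
      have hsq : (‖p‖/2)^2 ≤ ‖p - (u : Fin d → ℝ)‖^2 :=
        pow_le_pow_left₀ (by positivity) hhalf 2
      nlinarith [norm_nonneg p, hc.le]
  obtain ⟨x, -, hx⟩ := exists_seq_of_forall_finset_exists (fun _ : ↥𝒳 => True)
    (fun u v => ‖(u : Fin d → ℝ)‖ + 1 ≤ ‖(v : Fin d → ℝ)‖ ∧
      2 * ‖(v : Fin d → ℝ)‖ ≤ Q ((v : Fin d → ℝ) - (u : Fin d → ℝ))) hstep
  have hxnorm : ∀ n : ℕ, (n : ℝ) ≤ ‖(x n : Fin d → ℝ)‖ := by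
    intro n
    induction n with
    | zero => simpa using norm_nonneg _
    | succ n ih =>
        have := (hx n (n+1) (by omega)).1
        push_cast
        linarith
  have hGbound : ∀ i j : ℕ, i ≠ j → G (x i) (x j) ≤ ((1:ℝ)/2)^i * ((1:ℝ)/2)^j := by
    have key : ∀ i j : ℕ, i < j → G (x i) (x j) ≤ ((1:ℝ)/2)^j * ((1:ℝ)/2)^j := by
      intro i j hij
      obtain ⟨-, h2⟩ := hx i j hij
      have e : G (x i) (x j)
          = Real.exp (-(Q ((x j : Fin d → ℝ) - (x i : Fin d → ℝ)))) := by
        rw [hGdef]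
        simp only
        rw [← hQneg ((x i : Fin d → ℝ) - (x j : Fin d → ℝ)), neg_sub]
      rw [e]
      calc Real.exp (-(Q ((x j : Fin d → ℝ) - (x i : Fin d → ℝ))))
          ≤ Real.exp (-(2*(j:ℝ))) := by
            apply Real.exp_le_exp.2
            have := hxnorm j
            simp only [neg_le_neg_iff]
            linarith
        _ ≤ _ := exp_neg_two_nat j
    intro i j hij
    rcases lt_or_gt_of_ne hij with h | h
    · refine le_trans (key i j h) ?_
      apply mul_le_mul_of_nonneg_right _ (by positivity)
      exact pow_le_pow_of_le_one (by norm_num) (by norm_num) h.le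
    · rw [hGsymm]
      refine le_trans (key j i h) ?_
      apply mul_le_mul_of_nonneg_left _ (by positivity)
      exact pow_le_pow_of_le_one (by norm_num) (by norm_num) h.le
  have hsum : ∀ n : ℕ,
      ∑ i ∈ Finset.range n, ∑ j ∈ Finset.range n, G (x i) (x j) ≤ (n:ℝ) + 4 := by
    intro n
    have step1 : ∑ i ∈ Finset.range n, ∑ j ∈ Finset.range n, G (x i) (x j)
        ≤ ∑ i ∈ Finset.range n, ∑ j ∈ Finset.range n,
            ((if i = j then (1:ℝ) else 0) + ((1:ℝ)/2)^i * ((1:ℝ)/2)^j) := by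
      refine Finset.sum_le_sum fun i _ => Finset.sum_le_sum fun j _ => ?_
      by_cases h : i = j
      · subst h
        rw [hGdiag, if_pos rfl]
        have : (0:ℝ) ≤ ((1:ℝ)/2)^i * ((1:ℝ)/2)^i := by positivity
        linarith
      · rw [if_neg h, zero_add]
        exact hGbound i j h
    have step2 : ∑ i ∈ Finset.range n, ∑ j ∈ Finset.range n,
          ((if i = j then (1:ℝ) else 0) + ((1:ℝ)/2)^i * ((1:ℝ)/2)^j)
        = (n:ℝ) + (∑ i ∈ Finset.range n, ((1:ℝ)/2)^i) *
            (∑ j ∈ Finset.range n, ((1:ℝ)/2)^j) := by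
      rw [Finset.sum_mul_sum]
      simp only [Finset.sum_add_distrib]
      congr 1
      have : ∀ i ∈ Finset.range n,
          (∑ j ∈ Finset.range n, if i = j then (1:ℝ) else 0) = 1 := by
        intro i hi
        rw [Finset.sum_ite_eq]
        exact if_pos hi
      rw [Finset.sum_congr rfl this, Finset.sum_const, Finset.card_range, nsmul_eq_mul, mul_one]
    have hge : ∑ i ∈ Finset.range n, ((1:ℝ)/2)^i ≤ 2 := sum_geometric_two_le n
    have hgnn : 0 ≤ ∑ i ∈ Finset.range n, ((1:ℝ)/2)^i :=
      Finset.sum_nonneg fun i _ => by positivity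
    calc ∑ i ∈ Finset.range n, ∑ j ∈ Finset.range n, G (x i) (x j)
        ≤ (n:ℝ) + (∑ i ∈ Finset.range n, ((1:ℝ)/2)^i) *
            (∑ j ∈ Finset.range n, ((1:ℝ)/2)^j) := by rw [← step2]; exact step1
      _ ≤ (n:ℝ) + 4 := by nlinarith
  -- the averaged kernel sections
  set s : ℕ → ↥𝒳 → ℝ := fun n y => (n:ℝ)⁻¹ * ∑ i ∈ Finset.range n, k y (x i) with hsdef
  have hsmem : ∀ n, s n ∈ H.carrier := by
    intro n
    exact H.smul_mem ((n:ℝ)⁻¹) _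
      (rkhs_sum_mem H (fun i => fun y => k y (x i)) (fun i => H.kernel_mem (x i)) n)
  have hinn_right : ∀ (g : ↥𝒳 → ℝ), g ∈ H.carrier → ∀ m,
      H.inn g (s m) = (m:ℝ)⁻¹ * ∑ j ∈ Finset.range m, g (x j) := by
    intro g hg m
    have e1 : H.inn g (s m)
        = (m:ℝ)⁻¹ * H.inn g (fun y => ∑ j ∈ Finset.range m, k y (x j)) :=
      rkhs_inn_smul_right H _ _ _
    rw [e1, rkhs_inn_sum_right]
    congr 1
    refine Finset.sum_congr rfl fun j _ => ?_
    exact H.reproducing g hg (x j)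
  have hsval : ∀ n (y : ↥𝒳), s n y = (n:ℝ)⁻¹ * ∑ i ∈ Finset.range n, k y (x i) :=
    fun n y => rfl
  have hinnQ : ∀ n m, 1 ≤ n → 1 ≤ m → H.inn (s n) (s m)
      = a + (m:ℝ)⁻¹ * ((n:ℝ)⁻¹ *
          ∑ j ∈ Finset.range m, ∑ i ∈ Finset.range n, G (x j) (x i)) := by
    intro n m hn hm
    have hn' : ((n:ℝ)) ≠ 0 := Nat.cast_ne_zero.2 (by omega)
    have hm' : ((m:ℝ)) ≠ 0 := Nat.cast_ne_zero.2 (by omega)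
    rw [hinn_right (s n) (hsmem n) m]
    have e : ∀ j ∈ Finset.range m, s n (x j)
        = a + (n:ℝ)⁻¹ * ∑ i ∈ Finset.range n, G (x j) (x i) := by
      intro j _
      rw [hsval]
      have e2 : ∑ i ∈ Finset.range n, k (x j) (x i)
          = (n:ℝ) * a + ∑ i ∈ Finset.range n, G (x j) (x i) := by
        simp only [hkG]
        rw [Finset.sum_add_distrib, Finset.sum_const, Finset.card_range, nsmul_eq_mul]
      rw [e2, mul_add, ← mul_assoc, inv_mul_cancel₀ hn', one_mul]
    rw [Finset.sum_congr rfl e, Finset.sum_add_distrib, Finset.sum_const,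
      Finset.card_range, nsmul_eq_mul, ← Finset.mul_sum, mul_add, ← mul_assoc,
      inv_mul_cancel₀ hm', one_mul]
  have hT : ∀ n m : ℕ, 0 ≤ ∑ j ∈ Finset.range m, ∑ i ∈ Finset.range n, G (x j) (x i) :=
    fun n m => Finset.sum_nonneg fun j _ => Finset.sum_nonneg fun i _ => (hGpos _ _).le
  have hDbound : ∀ n : ℕ, 1 ≤ n →
      (n:ℝ)⁻¹ * ((n:ℝ)⁻¹ * ∑ j ∈ Finset.range n, ∑ i ∈ Finset.range n, G (x j) (x i))
        ≤ 5 / n := by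
    intro n hn
    have h1 : ∑ j ∈ Finset.range n, ∑ i ∈ Finset.range n, G (x j) (x i) ≤ (n:ℝ) + 4 :=
      hsum n
    have hn' : (0:ℝ) < n := by exact_mod_cast hn
    have h2 : (n:ℝ) + 4 ≤ 5 * n := by
      have : (1:ℝ) ≤ n := by exact_mod_cast hn
      linarith
    calc (n:ℝ)⁻¹ * ((n:ℝ)⁻¹ * ∑ j ∈ Finset.range n, ∑ i ∈ Finset.range n, G (x j) (x i))
        ≤ (n:ℝ)⁻¹ * ((n:ℝ)⁻¹ * (5 * n)) := by
          apply mul_le_mul_of_nonneg_left _ (by positivity)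
          apply mul_le_mul_of_nonneg_left _ (by positivity)
          linarith
      _ = 5 / n := by field_simp
  have hsub_expand : ∀ p q : ↥𝒳 → ℝ,
      H.inn (fun x => p x - q x) (fun x => p x - q x)
        = H.inn p p - 2 * H.inn p q + H.inn q q := by
    intro p q
    rw [rkhs_inn_sub_left, rkhs_inn_sub_right, rkhs_inn_sub_right, H.inn_symm q p]
    ring
  have hcauchy : ∀ ε : ℝ, 0 < ε → ∃ N : ℕ, ∀ m ≥ N, ∀ l ≥ N,
      H.inn (fun x => s m x - s l x) (fun x => s m x - s l x) < ε := by
    intro ε hε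
    refine ⟨⌈(10:ℝ)/ε⌉₊ + 1, fun m hm l hl => ?_⟩
    have hm1 : 1 ≤ m := by omega
    have hl1 : 1 ≤ l := by omega
    have hm0 : (0:ℝ) < m := by exact_mod_cast hm1
    have hl0 : (0:ℝ) < l := by exact_mod_cast hl1
    rw [hsub_expand (s m) (s l), hinnQ m m hm1 hm1, hinnQ m l hm1 hl1, hinnQ l l hl1 hl1]
    have h1 := hDbound m hm1
    have h2 := hDbound l hl1
    have h3 : 0 ≤ (l:ℝ)⁻¹ * ((m:ℝ)⁻¹ *
        ∑ j ∈ Finset.range l, ∑ i ∈ Finset.range m, G (x j) (x i)) :=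
      mul_nonneg (inv_nonneg.2 (Nat.cast_nonneg l))
        (mul_nonneg (inv_nonneg.2 (Nat.cast_nonneg m)) (hT m l))
    have hNm : (10:ℝ)/ε < m := by
      calc (10:ℝ)/ε ≤ ⌈(10:ℝ)/ε⌉₊ := Nat.le_ceil _
        _ < m := by exact_mod_cast hm
    have hNl : (10:ℝ)/ε < l := by
      calc (10:ℝ)/ε ≤ ⌈(10:ℝ)/ε⌉₊ := Nat.le_ceil _
        _ < l := by exact_mod_cast hl
    have h4 : 5/(m:ℝ) < ε/2 := by
      rw [div_lt_div_iff₀ hm0 (by norm_num)]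
      rw [div_lt_iff₀ hε] at hNm
      nlinarith
    have h5 : 5/(l:ℝ) < ε/2 := by
      rw [div_lt_div_iff₀ hl0 (by norm_num)]
      rw [div_lt_iff₀ hε] at hNl
      nlinarith
    linarith
  obtain ⟨g, hgmem, hgconv⟩ := H.complete s hsmem hcauchy
  have hkyy : ∀ y : ↥𝒳, k y y = a + 1 := by
    intro y
    rw [hkG, hGdiag]
  -- pointwise convergence to g
  have hpt : ∀ y : ↥𝒳, Filter.Tendsto (fun n => s n y) Filter.atTop (nhds (g y)) := by
    intro y
    rw [Metric.tendsto_atTop]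
    intro ε hε
    obtain ⟨N, hN⟩ := hgconv (ε^2/(a+1)) (by positivity)
    refine ⟨N, fun n hn => ?_⟩
    have hd := hN n hn
    have hmemd : (fun x => s n x - g x) ∈ H.carrier := rkhs_sub_mem H (hsmem n) hgmem
    have hcs := rkhs_cauchy_schwarz H hmemd (H.kernel_mem y)
    have e2 : H.inn (fun y' => k y' y) (fun y' => k y' y) = k y y :=
      H.reproducing _ (H.kernel_mem y) y
    rw [H.reproducing _ hmemd y, e2, hkyy] at hcs
    have hsq : (s n y - g y)^2 < ε^2 := by
      have h0 : (0:ℝ) < a + 1 := by linarith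
      calc (s n y - g y)^2
          ≤ H.inn (fun x => s n x - g x) (fun x => s n x - g x) * (a+1) := hcs
        _ < (ε^2/(a+1)) * (a+1) := by
            apply mul_lt_mul_of_pos_right hd h0
        _ = ε^2 := by field_simp
    rw [Real.dist_eq]
    rcases abs_cases (s n y - g y) with ⟨h,_⟩ | ⟨h,_⟩ <;> nlinarith
  -- pointwise convergence to the constant a
  have hlim2 : ∀ y : ↥𝒳, Filter.Tendsto (fun n => s n y) Filter.atTop (nhds a) := by
    intro y
    have hQtop : Filter.Tendsto (fun i => Q ((y : Fin d → ℝ) - (x i : Fin d → ℝ)))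
        Filter.atTop Filter.atTop := by
      have t1 : Filter.Tendsto (fun i : ℕ => (i:ℝ) - ‖(y : Fin d → ℝ)‖)
          Filter.atTop Filter.atTop := by
        have := Filter.tendsto_atTop_add_const_right Filter.atTop
          (-‖(y : Fin d → ℝ)‖) (tendsto_natCast_atTop_atTop (R := ℝ))
        simpa [sub_eq_add_neg] using this
      have t2 : Filter.Tendsto (fun t : ℝ => c * t^2) Filter.atTop Filter.atTop :=
        (Filter.tendsto_pow_atTop (two_ne_zero)).const_mul_atTop hc
      apply Filter.tendsto_atTop_mono' _ _ (t2.comp t1)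
      rw [Filter.EventuallyLE, Filter.eventually_atTop]
      refine ⟨⌈‖(y : Fin d → ℝ)‖⌉₊, fun i hi => ?_⟩
      have hyi : ‖(y : Fin d → ℝ)‖ ≤ (i:ℝ) := by
        calc ‖(y : Fin d → ℝ)‖ ≤ ⌈‖(y : Fin d → ℝ)‖⌉₊ := Nat.le_ceil _
          _ ≤ (i:ℝ) := by exact_mod_cast hi
      have hxi : (i:ℝ) ≤ ‖(x i : Fin d → ℝ)‖ := hxnorm i
      have h1 : (i:ℝ) - ‖(y : Fin d → ℝ)‖ ≤ ‖(y : Fin d → ℝ) - (x i : Fin d → ℝ)‖ := by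
        have h2 := norm_sub_norm_le ((x i : Fin d → ℝ)) ((y : Fin d → ℝ))
        rw [norm_sub_rev]
        linarith
      have h0 : (0:ℝ) ≤ (i:ℝ) - ‖(y : Fin d → ℝ)‖ := by linarith
      show c * ((i:ℝ) - ‖(y : Fin d → ℝ)‖)^2 ≤ Q ((y : Fin d → ℝ) - (x i : Fin d → ℝ))
      calc c * ((i:ℝ) - ‖(y : Fin d → ℝ)‖)^2
          ≤ c * ‖(y : Fin d → ℝ) - (x i : Fin d → ℝ)‖^2 :=
            mul_le_mul_of_nonneg_left (pow_le_pow_left₀ h0 h1 2) hc.le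
        _ ≤ Q ((y : Fin d → ℝ) - (x i : Fin d → ℝ)) := hQcoer _
    have hG0 : Filter.Tendsto (fun i => G y (x i)) Filter.atTop (nhds 0) :=
      Real.tendsto_exp_atBot.comp (Filter.tendsto_neg_atTop_atBot.comp hQtop)
    have hw : Filter.Tendsto (fun i => k y (x i)) Filter.atTop (nhds a) := by
      have := Filter.Tendsto.add (tendsto_const_nhds (x := a) (f := Filter.atTop)) hG0
      simp only [add_zero] at this
      have e : (fun i => k y (x i)) = fun i => a + G y (x i) := by
        funext i; exact hkG y (x i)
      rw [e]
      exact this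
    have hces := hw.cesaro
    have e : (fun n => s n y) = fun n : ℕ => (n:ℝ)⁻¹ • ∑ i ∈ Finset.range n, k y (x i) := by
      funext n
      rw [hsval, smul_eq_mul]
    rw [e]
    exact hces
  have hga : g = fun _ => a := by
    funext y
    exact tendsto_nhds_unique (hpt y) (hlim2 y)
  -- forward direction: membership when 0 < a
  have h1mem : 0 < a → (fun _ : ↥𝒳 => (1:ℝ)) ∈ H.carrier := by
    intro hap
    have hsm := H.smul_mem a⁻¹ g hgmem
    have e : (fun y => a⁻¹ * g y) = (fun _ : ↥𝒳 => (1:ℝ)) := by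
      funext y
      rw [hga]
      exact inv_mul_cancel₀ hap.ne'
    rwa [e] at hsm
  -- the squared norm
  have hnorm : 0 < a → H.inn (fun _ => (1:ℝ)) (fun _ => (1:ℝ)) = 1 / a := by
    intro hap
    have hgs : ∀ n : ℕ, 1 ≤ n → H.inn g (s n) = a := by
      intro n hn
      have hn' : ((n:ℝ)) ≠ 0 := Nat.cast_ne_zero.2 (by omega)
      rw [hinn_right g hgmem n]
      have e : ∀ j ∈ Finset.range n, g (x j) = a := fun j _ => by rw [hga]
      rw [Finset.sum_congr rfl e, Finset.sum_const, Finset.card_range, nsmul_eq_mul,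
        ← mul_assoc, inv_mul_cancel₀ hn', one_mul]
    have hgg : H.inn g g = a := by
      have hC : 0 ≤ H.inn g g := H.inn_nonneg g hgmem
      have key : ∀ ε : ℝ, 0 < ε → (H.inn g g - a)^2 ≤ ε * H.inn g g := by
        intro ε hε
        obtain ⟨N, hN⟩ := hgconv ε hε
        have hd := hN (N+1) (by omega)
        have hcs := rkhs_cauchy_schwarz H (rkhs_sub_mem H (hsmem (N+1)) hgmem) hgmem
        have e1 : H.inn (fun x => s (N+1) x - g x) g = a - H.inn g g := by
          rw [rkhs_inn_sub_left, H.inn_symm (s (N+1)) g, hgs (N+1) (by omega)]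
        rw [e1] at hcs
        have e2 : (a - H.inn g g)^2 = (H.inn g g - a)^2 := by ring
        rw [e2] at hcs
        calc (H.inn g g - a)^2
            ≤ H.inn (fun x => s (N+1) x - g x) (fun x => s (N+1) x - g x) * H.inn g g :=
              hcs
          _ ≤ ε * H.inn g g := mul_le_mul_of_nonneg_right hd.le hC
      have h0 : ∀ ε' : ℝ, 0 < ε' → (H.inn g g - a)^2 ≤ ε' := by
        intro ε' hε'
        have h1 := key (ε'/(H.inn g g + 1)) (by positivity)
        calc (H.inn g g - a)^2 ≤ (ε'/(H.inn g g + 1)) * H.inn g g := h1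
          _ ≤ ε' := by
              rw [div_mul_eq_mul_div, div_le_iff₀ (by positivity)]
              nlinarith
      have h2 : (H.inn g g - a)^2 ≤ 0 :=
        le_of_forall_pos_le_add (by intro ε hε; simpa using h0 ε hε)
      have h3 : H.inn g g - a = 0 := by nlinarith [sq_nonneg (H.inn g g - a)]
      linarith
    have e : (fun _ : ↥𝒳 => (1:ℝ)) = (fun y => a⁻¹ * g y) := by
      funext y
      rw [hga]
      exact (inv_mul_cancel₀ hap.ne').symm
    rw [e, H.inn_smul_left, rkhs_inn_smul_right, hgg]
    field_simp
  -- converse direction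
  have hconv_dir : (fun _ : ↥𝒳 => (1:ℝ)) ∈ H.carrier → 0 < a := by
    intro hmem
    rcases ha.lt_or_eq with h | h
    · exact h
    · exfalso
      have ha0 : a = 0 := h.symm
      set n : ℕ := ⌈5 * H.inn (fun _ : ↥𝒳 => (1:ℝ)) (fun _ => (1:ℝ))⌉₊ + 1 with hndef
      have hn1 : 1 ≤ n := by omega
      have hn' : ((n:ℝ)) ≠ 0 := Nat.cast_ne_zero.2 (by omega)
      have hn0 : (0:ℝ) < n := by
        have : (0:ℕ) < n := by omega
        exact_mod_cast this
      have hC : 0 ≤ H.inn (fun _ : ↥𝒳 => (1:ℝ)) (fun _ => (1:ℝ)) := H.inn_nonneg _ hmem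
      have h1s : H.inn (fun _ : ↥𝒳 => (1:ℝ)) (s n) = 1 := by
        rw [hinn_right _ hmem n]
        have e : ∀ j ∈ Finset.range n, (fun _ : ↥𝒳 => (1:ℝ)) (x j) = 1 := fun j _ => rfl
        rw [Finset.sum_congr rfl e, Finset.sum_const, Finset.card_range, nsmul_eq_mul,
          mul_one, inv_mul_cancel₀ hn']
      have hcs := rkhs_cauchy_schwarz H hmem (hsmem n)
      rw [h1s] at hcs
      have hsn : H.inn (s n) (s n) ≤ 5 / n := by
        rw [hinnQ n n hn1 hn1, ha0, zero_add]
        exact hDbound n hn1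
      have h5C : 5 * H.inn (fun _ : ↥𝒳 => (1:ℝ)) (fun _ => (1:ℝ)) < (n:ℝ) := by
        calc 5 * H.inn (fun _ : ↥𝒳 => (1:ℝ)) (fun _ => (1:ℝ))
            ≤ ⌈5 * H.inn (fun _ : ↥𝒳 => (1:ℝ)) (fun _ => (1:ℝ))⌉₊ := Nat.le_ceil _
          _ < (n:ℝ) := by rw [hndef]; push_cast; linarith
      have hstep1 : H.inn (fun _ : ↥𝒳 => (1:ℝ)) (fun _ => (1:ℝ)) * H.inn (s n) (s n)
          ≤ H.inn (fun _ : ↥𝒳 => (1:ℝ)) (fun _ => (1:ℝ)) * (5/n) :=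
        mul_le_mul_of_nonneg_left hsn hC
      have hstep2 : H.inn (fun _ : ↥𝒳 => (1:ℝ)) (fun _ => (1:ℝ)) * (5/n) < 1 := by
        rw [show H.inn (fun _ : ↥𝒳 => (1:ℝ)) (fun _ => (1:ℝ)) * (5/(n:ℝ))
          = 5 * H.inn (fun _ : ↥𝒳 => (1:ℝ)) (fun _ => (1:ℝ)) / n by ring,
          div_lt_one hn0]
        exact h5C
      nlinarith [hcs]
  exact ⟨⟨hconv_dir, h1mem⟩, hnorm⟩
end

section
/- Constant function in the RKHS of the polynomial kernel: let 𝒳 be a Borel subset of ℝ^d with 0 ∈ 𝒳, let p ∈ ℕ and a ≥ 0, and let 𝓗 be the RKHS of the polynomial kernel k(x,y) = (xᵀy + a)^p on 𝒳. Then the constant function 1_𝒳 belongs to 𝓗 if and only if a > 0, and in that case ‖1_𝒳‖_𝓗² = 1/a^p. -/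
open MeasureTheory

/-- An abstract axiomatisation of the (unique) reproducing kernel Hilbert space of a
kernel `k`: a complete inner-product space of real-valued functions on `X` containing the
kernel sections and satisfying the reproducing property. -/
structure RKHSAx (X : Type*) (k : X → X → ℝ) where
  carrier : Set (X → ℝ)
  inn : (X → ℝ) → (X → ℝ) → ℝ
  zero_mem : (fun _ => (0 : ℝ)) ∈ carrier
  add_mem : ∀ f ∈ carrier, ∀ g ∈ carrier, (fun x => f x + g x) ∈ carrier
  smul_mem : ∀ (c : ℝ), ∀ f ∈ carrier, (fun x => c * f x) ∈ carrier
  inn_symm : ∀ f g, inn f g = inn g f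
  inn_add_left : ∀ f g h, inn (fun x => f x + g x) h = inn f h + inn g h
  inn_smul_left : ∀ (c : ℝ) (f g), inn (fun x => c * f x) g = c * inn f g
  inn_nonneg : ∀ f ∈ carrier, 0 ≤ inn f f
  inn_definite : ∀ f ∈ carrier, inn f f = 0 → f = fun _ => 0
  kernel_mem : ∀ x, (fun y => k y x) ∈ carrier
  reproducing : ∀ f ∈ carrier, ∀ x, inn f (fun y => k y x) = f x
  complete : ∀ f : ℕ → X → ℝ, (∀ m, f m ∈ carrier) →
    (∀ ε : ℝ, 0 < ε → ∃ N : ℕ, ∀ m ≥ N, ∀ l ≥ N,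
      inn (fun x => f m x - f l x) (fun x => f m x - f l x) < ε) →
    ∃ g ∈ carrier, ∀ ε : ℝ, 0 < ε → ∃ N : ℕ, ∀ m ≥ N,
      inn (fun x => f m x - g x) (fun x => f m x - g x) < ε

/-- the constant function `1` belongs to the RKHS of the polynomial kernel
`k(x,y) = (xᵀy + a)^p` on a Borel set `𝒳 ⊆ ℝ^d` containing `0` if and only if `a > 0`,
in which case its squared RKHS norm equals `1/a^p`. -/
theorem constant_in_polynomial_rkhs
    (d : ℕ) (𝒳 : Set (Fin d → ℝ)) (hmeas : MeasurableSet 𝒳)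
    (h0 : (fun _ => (0 : ℝ)) ∈ 𝒳)
    (p : ℕ) (hp : 0 < p) (a : ℝ) (ha : 0 ≤ a)
    (k : ↥𝒳 → ↥𝒳 → ℝ)
    (hk : ∀ x y : ↥𝒳, k x y =
      (dotProduct (x : Fin d → ℝ) (y : Fin d → ℝ) + a) ^ p)
    (hker : IsKernel k) (H : RKHSAx ↥𝒳 k) :
    ((fun _ => (1 : ℝ)) ∈ H.carrier ↔ 0 < a) ∧
      (0 < a → H.inn (fun _ => (1 : ℝ)) (fun _ => (1 : ℝ)) = 1 / a ^ p) := by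

  set x0 : ↥𝒳 := ⟨fun _ => (0 : ℝ), h0⟩ with hx0
  have hsec : (fun y : ↥𝒳 => k y x0) = fun _ => a ^ p := by
    funext y
    rw [hk]
    simp [dotProduct, hx0]
  have key : ∀ f, H.inn f (fun _ : ↥𝒳 => a ^ p) = a ^ p * H.inn f (fun _ => (1:ℝ)) := by
    intro f
    rw [H.inn_symm]
    have : (fun _ : ↥𝒳 => a ^ p) = fun x : ↥𝒳 => a ^ p * (fun _ : ↥𝒳 => (1:ℝ)) x := by
      funext x; ring
    rw [this, H.inn_smul_left, H.inn_symm]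
  have hinnzero : ∀ f, H.inn f (fun _ : ↥𝒳 => (0:ℝ)) = 0 := by
    intro f
    rw [H.inn_symm]
    have : (fun _ : ↥𝒳 => (0:ℝ)) = fun x : ↥𝒳 => (0:ℝ) * f x := by funext x; ring
    rw [this, H.inn_smul_left, zero_mul]
  constructor
  · constructor
    · intro hmem
      by_contra hna
      have ha0 : a = 0 := le_antisymm (not_lt.mp hna) ha
      have := H.reproducing _ hmem x0
      rw [hsec, ha0, zero_pow hp.ne'] at this
      rw [hinnzero] at this
      exact one_ne_zero this.symm
    · intro hapos
      have hmem := H.kernel_mem x0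
      have := H.smul_mem ((a ^ p)⁻¹) _ hmem
      have heq : (fun x => (a ^ p)⁻¹ * (fun y : ↥𝒳 => k y x0) x) = fun _ : ↥𝒳 => (1:ℝ) := by
        funext x
        rw [hsec]
        field_simp
      rwa [heq] at this
  · intro hapos
    have hmem : (fun _ : ↥𝒳 => (1:ℝ)) ∈ H.carrier := by
      have hm := H.kernel_mem x0
      have := H.smul_mem ((a ^ p)⁻¹) _ hm
      have heq : (fun x => (a ^ p)⁻¹ * (fun y : ↥𝒳 => k y x0) x) = fun _ : ↥𝒳 => (1:ℝ) := by
        funext x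
        rw [hsec]
        field_simp
      rwa [heq] at this
    have hrep := H.reproducing _ hmem x0
    rw [hsec, key] at hrep
    have hap : a ^ p ≠ 0 := pow_ne_zero _ hapos.ne'
    field_simp
    linarith [hrep]
end

section
/- Constant function in the RKHSs of the shifted Sobolev kernels: let 𝒳 = [0,1] and a ≥ 0, and let 𝓗_1, 𝓗_2 be the RKHSs of k_1(x,y) = a + min(x,y) and k_2(x,y) = a + ∫_0^{min(x,y)} (x−z)(y−z) dz respectively. Then 1_𝒳 ∈ 𝓗_1 if and only if a > 0, in which case ‖1_𝒳‖_{𝓗_1}² = 1/a; likewise 1_𝒳 ∈ 𝓗_2 if and only if a > 0, in which case ‖1_𝒳‖_{𝓗_2}² = 1/a. -/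
open MeasureTheory

/-- An abstract axiomatisation of the (unique) reproducing kernel Hilbert space of a
kernel `k`: a complete inner-product space of real-valued functions on `X` containing the
kernel sections and satisfying the reproducing property. -/
structure RKHSAxioms (X : Type*) (k : X → X → ℝ) where
  carrier : Set (X → ℝ)
  inn : (X → ℝ) → (X → ℝ) → ℝ
  zero_mem : (fun _ => (0 : ℝ)) ∈ carrier
  add_mem : ∀ f ∈ carrier, ∀ g ∈ carrier, (fun x => f x + g x) ∈ carrier
  smul_mem : ∀ (c : ℝ), ∀ f ∈ carrier, (fun x => c * f x) ∈ carrier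
  inn_symm : ∀ f g, inn f g = inn g f
  inn_add_left : ∀ f g h, inn (fun x => f x + g x) h = inn f h + inn g h
  inn_smul_left : ∀ (c : ℝ) (f g), inn (fun x => c * f x) g = c * inn f g
  inn_nonneg : ∀ f ∈ carrier, 0 ≤ inn f f
  inn_definite : ∀ f ∈ carrier, inn f f = 0 → f = fun _ => 0
  kernel_mem : ∀ x, (fun y => k y x) ∈ carrier
  reproducing : ∀ f ∈ carrier, ∀ x, inn f (fun y => k y x) = f x
  complete : ∀ f : ℕ → X → ℝ, (∀ m, f m ∈ carrier) →
    (∀ ε : ℝ, 0 < ε → ∃ N : ℕ, ∀ m ≥ N, ∀ l ≥ N,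
      inn (fun x => f m x - f l x) (fun x => f m x - f l x) < ε) →
    ∃ g ∈ carrier, ∀ ε : ℝ, 0 < ε → ∃ N : ℕ, ∀ m ≥ N,
      inn (fun x => f m x - g x) (fun x => f m x - g x) < ε

lemma rkhs_const_aux {X : Type*} (k : X → X → ℝ) (a : ℝ) (ha : 0 ≤ a)
    (H : RKHSAxioms X k) (x₀ : X) (h : ∀ y, k y x₀ = a) :
    ((fun _ => (1 : ℝ)) ∈ H.carrier ↔ 0 < a) ∧
      (0 < a → H.inn (fun _ => (1 : ℝ)) (fun _ => (1 : ℝ)) = 1 / a) := by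
  have hzero : ∀ f, H.inn (fun _ => (0 : ℝ)) f = 0 := by
    intro f
    have := H.inn_smul_left 0 (fun _ => (0 : ℝ)) f
    simpa using this
  have hsec : (fun y => k y x₀) = fun _ => a := funext h
  have hnorm : 0 < a → H.inn (fun _ => (1 : ℝ)) (fun _ => (1 : ℝ)) = 1 / a := by
    intro hpos
    have hmem : (fun _ => (1 : ℝ)) ∈ H.carrier := by
      have := H.smul_mem (1 / a) _ (H.kernel_mem x₀)
      have heq : (fun y => 1 / a * k y x₀) = fun _ => (1 : ℝ) := by
        funext y; rw [h y]; field_simp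
      rwa [heq] at this
    have hrep := H.reproducing _ hmem x₀
    rw [hsec] at hrep
    have : H.inn (fun _ => (1 : ℝ)) (fun _ => a) = a * H.inn (fun _ => (1:ℝ)) (fun _ => (1:ℝ)) := by
      rw [H.inn_symm]
      have := H.inn_smul_left a (fun _ => (1 : ℝ)) (fun _ => (1 : ℝ))
      simp only [mul_one] at this
      rw [this, H.inn_symm]
    rw [this] at hrep
    field_simp
    linarith
  refine ⟨⟨fun hmem => ?_, fun hpos => ?_⟩, hnorm⟩
  · by_contra hle
    have ha0 : a = 0 := le_antisymm (not_lt.mp hle) ha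
    have hrep := H.reproducing _ hmem x₀
    rw [hsec, ha0] at hrep
    rw [H.inn_symm, hzero] at hrep
    exact one_ne_zero hrep.symm
  · have := H.smul_mem (1 / a) _ (H.kernel_mem x₀)
    have heq : (fun y => 1 / a * k y x₀) = fun _ => (1 : ℝ) := by
      funext y; rw [h y]; field_simp
    rwa [heq] at this

/-- on `𝒳 = [0,1]`, the constant function `1` belongs to the RKHS of the
shifted first-order Sobolev kernel `k₁(x,y) = a + min(x,y)` iff `a > 0`, with squared norm
`1/a`, and likewise for the second-order shifted Sobolev kernel
`k₂(x,y) = a + ∫_0^{min(x,y)} (x-z)(y-z) dz`. -/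
theorem constant_in_shifted_sobolev_rkhs
    (a : ℝ) (ha : 0 ≤ a)
    (k₁ k₂ : ↥(Set.Icc (0 : ℝ) 1) → ↥(Set.Icc (0 : ℝ) 1) → ℝ)
    (hk₁ : ∀ x y, k₁ x y = a + min (x : ℝ) (y : ℝ))
    (hk₂ : ∀ x y, k₂ x y =
      a + ∫ z in (0 : ℝ)..(min (x : ℝ) (y : ℝ)), ((x : ℝ) - z) * ((y : ℝ) - z))
    (hker₁ : IsKernel k₁) (hker₂ : IsKernel k₂)
    (H₁ : RKHSAxioms ↥(Set.Icc (0 : ℝ) 1) k₁) (H₂ : RKHSAxioms ↥(Set.Icc (0 : ℝ) 1) k₂) :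
    (((fun _ => (1 : ℝ)) ∈ H₁.carrier ↔ 0 < a) ∧
      (0 < a → H₁.inn (fun _ => (1 : ℝ)) (fun _ => (1 : ℝ)) = 1 / a)) ∧
    (((fun _ => (1 : ℝ)) ∈ H₂.carrier ↔ 0 < a) ∧
      (0 < a → H₂.inn (fun _ => (1 : ℝ)) (fun _ => (1 : ℝ)) = 1 / a)) := by
  set x₀ : ↥(Set.Icc (0 : ℝ) 1) := ⟨0, Set.left_mem_Icc.mpr zero_le_one⟩
  have hx₀ : (x₀ : ℝ) = 0 := rfl
  constructor
  · exact rkhs_const_aux k₁ a ha H₁ x₀ (fun y => by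
      rw [hk₁, hx₀, min_eq_right y.2.1, add_zero])
  · exact rkhs_const_aux k₂ a ha H₂ x₀ (fun y => by
      rw [hk₂, hx₀, min_eq_right y.2.1, intervalIntegral.integral_same, add_zero])
end
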